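/- arXiv:1608.01932 — 6 statements merged into one kernel-verified Lean document; each statement's English description precedes it below -/
import Mathlib

section
/- For every k, ℓ ∈ ℕ with k, ℓ ≥ 1, there exists a partition V_1, …, V_{2^k}, U of [k + 2^k·ℓ + 2^ℓ] such that |V_i| = ℓ and r_{V_i}(ISA_{k,ℓ}) = 2^(2^ℓ) for all i ∈ [2^k]. -/
open Finset

def subfun {n : ℕ} (f : (Fin n → Bool) → Bool) (V : Finset (Fin n))
    (ρ : {i : Fin n // i ∉ V} → Bool) : ({i : Fin n // i ∈ V} → Bool) → Bool :=
  fun y => f fun i => if h : i ∈ V then y ⟨i, h⟩ else ρ ⟨i, h⟩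

noncomputable def numSubfuns {n : ℕ} (f : (Fin n → Bool) → Bool) (V : Finset (Fin n)) : ℕ :=
  (Set.range (subfun f V)).ncard
def ISA (k ℓ : ℕ) (a : Fin (k + 2^k*ℓ + 2^ℓ) → Bool) : Bool :=
  let a' : ℕ → Bool := fun j => if h : j < k + 2^k*ℓ + 2^ℓ then a ⟨j, h⟩ else false
  let α : ℕ := ∑ i ∈ Finset.range k, if a' i = true then 2^(k-1-i) else 0
  let β : ℕ := ∑ i ∈ Finset.range ℓ, if a' (k + ℓ*α + i) = true then 2^(ℓ-1-i) else 0
  a' (k + ℓ*2^k + β)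


lemma S_lt (b : ℕ → Bool) (n : ℕ) :
    ∑ j ∈ range n, (b j).toNat * 2^j < 2^n := by
  induction n with
  | zero => simp
  | succ n ih =>
    rw [Finset.sum_range_succ, pow_succ]
    have h2 : (b n).toNat * 2^n ≤ 2^n := by cases b n <;> simp
    omega

lemma testBit_S (t : ℕ) : ∀ (b : ℕ → Bool) (n : ℕ), t < n →
    (∑ j ∈ range n, (b j).toNat * 2^j).testBit t = b t := by
  induction t with
  | zero =>
    intro b n hn
    obtain ⟨m, rfl⟩ : ∃ m, n = m + 1 := ⟨n-1, by omega⟩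
    rw [Finset.sum_range_succ']
    have h : ∑ j ∈ range m, (b (j+1)).toNat * 2^(j+1) + (b 0).toNat * 2^0
        = 2 * (∑ j ∈ range m, (b (j+1)).toNat * 2^j) + (b 0).toNat := by
      rw [Finset.mul_sum]
      simp only [pow_zero, mul_one]
      congr 1
      exact Finset.sum_congr rfl fun j _ => by ring
    rw [h, Nat.testBit_zero]
    cases hb : b 0 <;> simp [hb] <;> omega
  | succ t ih =>
    intro b n hn
    obtain ⟨m, rfl⟩ : ∃ m, n = m + 1 := ⟨n-1, by omega⟩
    rw [Finset.sum_range_succ']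
    have h : ∑ j ∈ range m, (b (j+1)).toNat * 2^(j+1) + (b 0).toNat * 2^0
        = 2 * (∑ j ∈ range m, (b (j+1)).toNat * 2^j) + (b 0).toNat := by
      rw [Finset.mul_sum]
      simp only [pow_zero, mul_one]
      congr 1
      exact Finset.sum_congr rfl fun j _ => by ring
    rw [h, Nat.testBit_succ]
    have hd : (2 * (∑ j ∈ range m, (b (j+1)).toNat * 2^j) + (b 0).toNat) / 2
        = ∑ j ∈ range m, (b (j+1)).toNat * 2^j := by
      have : (b 0).toNat ≤ 1 := Bool.toNat_le _
      omega
    rw [hd]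
    exact ih (fun j => b (j+1)) m (by omega)

lemma S_eq (n i : ℕ) (h : i < 2^n) :
    ∑ j ∈ range n, (i.testBit j).toNat * 2^j = i := by
  apply Nat.eq_of_testBit_eq
  intro t
  by_cases ht : t < n
  · rw [testBit_S t _ n ht]
  · rw [Nat.testBit_lt_two_pow, Nat.testBit_lt_two_pow]
    · exact lt_of_lt_of_le h (Nat.pow_le_pow_right (by norm_num) (by omega))
    · exact lt_of_lt_of_le (S_lt _ _) (Nat.pow_le_pow_right (by norm_num) (by omega))

lemma key (k ℓ : ℕ) (hℓ : 1 ≤ ℓ) (i : ℕ) (hi : i < 2^k)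
    (V : Finset (Fin (k + 2^k*ℓ + 2^ℓ)))
    (hV : ∀ x : Fin (k + 2^k*ℓ + 2^ℓ), x ∈ V ↔ k + ℓ*i ≤ x.val ∧ x.val < k + ℓ*i + ℓ) :
    Function.Surjective (subfun (ISA k ℓ) V) := by
  have hcomm : ℓ * 2^k = 2^k * ℓ := Nat.mul_comm _ _
  have hone : 1 ≤ 2^ℓ := Nat.one_le_two_pow
  have hblk : k + ℓ*i + ℓ ≤ k + ℓ*2^k := by
    have : ℓ*(i+1) ≤ ℓ*2^k := Nat.mul_le_mul_left ℓ (by omega)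
    have : ℓ*i + ℓ = ℓ*(i+1) := by ring
    omega
  have hdata : k + ℓ*2^k ≤ k + 2^k*ℓ + 2^ℓ := by omega
  intro g
  refine ⟨fun z => if z.val.val < k then Nat.testBit i (k - 1 - z.val.val)
    else if k + ℓ*2^k ≤ z.val.val then
      g (fun w => Nat.testBit (z.val.val - (k + ℓ*2^k)) (ℓ - 1 - (w.val.val - (k + ℓ*i))))
    else false, ?_⟩
  funext y
  set x : Fin (k + 2^k*ℓ + 2^ℓ) → Bool := fun j => if h : j ∈ V then y ⟨j, h⟩ else
    (if j.val < k then Nat.testBit i (k - 1 - j.val)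
    else if k + ℓ*2^k ≤ j.val then
      g (fun w => Nat.testBit (j.val - (k + ℓ*2^k)) (ℓ - 1 - (w.val.val - (k + ℓ*i))))
    else false) with hx
  show ISA k ℓ x = g y
  set a' : ℕ → Bool := fun j => if h : j < k + 2^k*ℓ + 2^ℓ then x ⟨j, h⟩ else false with ha'
  -- address bits give α = i
  have hα : (∑ t ∈ Finset.range k, if a' t = true then 2^(k-1-t) else 0) = i := by
    have step : ∀ t ∈ Finset.range k,
        (if a' t = true then 2^(k-1-t) else 0) = (i.testBit (k-1-t)).toNat * 2^(k-1-t) := by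
      intro t ht
      rw [Finset.mem_range] at ht
      have htN : t < k + 2^k*ℓ + 2^ℓ := by omega
      have hnotV : (⟨t, htN⟩ : Fin (k + 2^k*ℓ + 2^ℓ)) ∉ V := by
        rw [hV]; push_neg; intro h; simp at h ⊢; omega
      have : a' t = i.testBit (k-1-t) := by
        rw [ha']; simp only [htN, dif_pos]
        rw [hx]; simp only [dif_neg hnotV]
        rw [if_pos ht]
      rw [this]
      cases i.testBit (k-1-t) <;> simp
    rw [Finset.sum_congr rfl step]
    rw [Finset.sum_range_reflect (fun m => (i.testBit m).toNat * 2^m) k]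
    exact S_eq k i hi
  have hblkN : ∀ t, t < ℓ → k + ℓ*i + t < k + 2^k*ℓ + 2^ℓ := by intro t ht; omega
  have hmemV : ∀ t, (ht : t < ℓ) →
      (⟨k + ℓ*i + t, hblkN t ht⟩ : Fin (k + 2^k*ℓ + 2^ℓ)) ∈ V := by
    intro t ht; rw [hV]; simp; omega
  set b : ℕ → Bool := fun t => if h : t < ℓ then
      y ⟨⟨k + ℓ*i + t, hblkN t h⟩, hmemV t h⟩ else false with hb
  set m : ℕ := ∑ t ∈ Finset.range ℓ, (b t).toNat * 2^(ℓ-1-t) with hm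
  have hβ : (∑ t ∈ Finset.range ℓ, if a' (k + ℓ*(∑ t ∈ Finset.range k,
      if a' t = true then 2^(k-1-t) else 0) + t) = true then 2^(ℓ-1-t) else 0) = m := by
    rw [hα, hm]
    refine Finset.sum_congr rfl fun t ht => ?_
    rw [Finset.mem_range] at ht
    have htN : k + ℓ*i + t < k + 2^k*ℓ + 2^ℓ := hblkN t ht
    have : a' (k + ℓ*i + t) = b t := by
      rw [ha']; simp only [htN, dif_pos]
      rw [hx]; simp only [hmemV t ht, dif_pos]
      rw [hb]; simp only [ht, dif_pos]
    rw [this]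
    cases b t <;> simp
  have hm2 : m = ∑ j ∈ Finset.range ℓ, (b (ℓ-1-j)).toNat * 2^j := by
    rw [hm, ← Finset.sum_range_reflect (fun j => (b (ℓ-1-j)).toNat * 2^j) ℓ]
    refine Finset.sum_congr rfl fun t ht => ?_
    rw [Finset.mem_range] at ht
    have : ℓ - 1 - (ℓ - 1 - t) = t := by omega
    rw [this]
  have hmlt : m < 2^ℓ := hm2 ▸ S_lt (fun j => b (ℓ-1-j)) ℓ
  have hmbit : ∀ t, t < ℓ → m.testBit (ℓ-1-t) = b t := by
    intro t ht
    rw [hm2, testBit_S (ℓ-1-t) _ ℓ (by omega)]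
    congr 1; omega
  have hfinN : k + ℓ*2^k + m < k + 2^k*ℓ + 2^ℓ := by omega
  have hfinV : (⟨k + ℓ*2^k + m, hfinN⟩ : Fin (k + 2^k*ℓ + 2^ℓ)) ∉ V := by
    rw [hV]; push_neg; intro h; simp at h ⊢; omega
  have hISA : ISA k ℓ x = a' (k + ℓ*2^k + m) := by
    show a' (k + ℓ*2^k + _) = a' (k + ℓ*2^k + m)
    rw [hβ]
  rw [hISA, ha']
  simp only [hfinN, dif_pos]
  rw [hx]
  simp only [dif_neg hfinV]
  have h1 : ¬ (k + ℓ*2^k + m < k) := by omega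
  have h2 : k + ℓ*2^k ≤ k + ℓ*2^k + m := by omega
  simp only [h1, if_false, h2, if_true]
  congr 1
  funext w
  obtain ⟨hw1, hw2⟩ := (hV w.val).mp w.prop
  have hsub : k + ℓ*2^k + m - (k + ℓ*2^k) = m := by omega
  rw [hsub]
  set t := w.val.val - (k + ℓ*i) with htdef
  have ht : t < ℓ := by omega
  rw [hmbit t ht, hb]
  simp only [ht, dif_pos]
  congr 1
  apply Subtype.ext
  apply Fin.ext
  show k + ℓ*i + t = w.val.val
  omega


theorem stmt3 (k ℓ : ℕ) (hk : 1 ≤ k) (hℓ : 1 ≤ ℓ) :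
    ∃ (V : Fin (2^k) → Finset (Fin (k + 2^k*ℓ + 2^ℓ)))
      (U : Finset (Fin (k + 2^k*ℓ + 2^ℓ))),
      (∀ i, (V i).Nonempty) ∧ U.Nonempty ∧
      (∀ i j, i ≠ j → Disjoint (V i) (V j)) ∧
      (∀ i, Disjoint (V i) U) ∧
      (∀ x, (∃ i, x ∈ V i) ∨ x ∈ U) ∧
      (∀ i, (V i).card = ℓ) ∧
      (∀ i, numSubfuns (ISA k ℓ) (V i) = 2^(2^ℓ)) := by
  have hone : 1 ≤ 2^ℓ := Nat.one_le_two_pow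
  have hcomm : ℓ * 2^k = 2^k * ℓ := Nat.mul_comm _ _
  have hblk : ∀ m : ℕ, m < 2^k → k + ℓ*m + ℓ ≤ k + ℓ*2^k := by
    intro m hm
    have h1 : ℓ*(m+1) ≤ ℓ*2^k := Nat.mul_le_mul_left ℓ (by omega)
    have h2 : ℓ*m + ℓ = ℓ*(m+1) := by ring
    omega
  have hlt : ∀ (i : Fin (2^k)), ∀ m ∈ Finset.Ico (k+ℓ*i.val) (k+ℓ*i.val+ℓ),
      m < k + 2^k*ℓ + 2^ℓ := by
    intro i m hm
    rw [Finset.mem_Ico] at hm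
    have := hblk i.val i.isLt
    omega
  refine ⟨fun i => (Finset.Ico (k+ℓ*i.val) (k+ℓ*i.val+ℓ)).attachFin (hlt i),
    Finset.univ.filter (fun x => x.val < k ∨ k + ℓ*2^k ≤ x.val), ?_, ?_, ?_, ?_, ?_, ?_, ?_⟩
  · -- each V i nonempty
    intro i
    refine ⟨⟨k+ℓ*i.val, by have := hblk i.val i.isLt; omega⟩, ?_⟩
    rw [Finset.mem_attachFin, Finset.mem_Ico]
    simp; omega
  · -- U nonempty
    refine ⟨⟨0, by omega⟩, ?_⟩
    simp only [Finset.mem_filter, Finset.mem_univ, true_and]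
    left; exact hk
  · -- pairwise disjoint
    intro i j hij
    rw [Finset.disjoint_left]
    intro x hxi hxj
    rw [Finset.mem_attachFin, Finset.mem_Ico] at hxi hxj
    apply hij
    apply Fin.ext
    rcases Nat.lt_trichotomy i.val j.val with h | h | h
    · have h1 : ℓ*(i.val+1) ≤ ℓ*j.val := Nat.mul_le_mul_left ℓ (by omega)
      have h2 : ℓ*i.val + ℓ = ℓ*(i.val+1) := by ring
      omega
    · exact h
    · have h1 : ℓ*(j.val+1) ≤ ℓ*i.val := Nat.mul_le_mul_left ℓ (by omega)
      have h2 : ℓ*j.val + ℓ = ℓ*(j.val+1) := by ring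
      omega
  · -- V i disjoint from U
    intro i
    rw [Finset.disjoint_left]
    intro x hxi hxu
    rw [Finset.mem_attachFin, Finset.mem_Ico] at hxi
    rw [Finset.mem_filter] at hxu
    have := hblk i.val i.isLt
    rcases hxu.2 with h | h <;> omega
  · -- coverage
    intro x
    by_cases hx : x.val < k ∨ k + ℓ*2^k ≤ x.val
    · right; rw [Finset.mem_filter]; exact ⟨Finset.mem_univ _, hx⟩
    · left
      push_neg at hx
      obtain ⟨hx1, hx2⟩ := hx
      have hdm := Nat.div_add_mod (x.val - k) ℓ
      have hr : (x.val - k) % ℓ < ℓ := Nat.mod_lt _ (by omega)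
      have hq : (x.val - k) / ℓ < 2^k := by
        apply Nat.lt_of_mul_lt_mul_left (a := ℓ)
        omega
      refine ⟨⟨(x.val - k) / ℓ, hq⟩, ?_⟩
      rw [Finset.mem_attachFin, Finset.mem_Ico]
      simp only []
      omega
  · -- cards
    intro i
    rw [Finset.card_attachFin, Nat.card_Ico]
    omega
  · -- counts
    intro i
    have hVmem : ∀ x : Fin (k + 2^k*ℓ + 2^ℓ),
        x ∈ (Finset.Ico (k+ℓ*i.val) (k+ℓ*i.val+ℓ)).attachFin (hlt i) ↔
        k + ℓ*i.val ≤ x.val ∧ x.val < k + ℓ*i.val + ℓ := by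
      intro x
      rw [Finset.mem_attachFin, Finset.mem_Ico]
    have hsurj := key k ℓ hℓ i.val i.isLt _ hVmem
    rw [numSubfuns, Set.range_eq_univ.mpr hsurj, Set.ncard_univ,
      Nat.card_eq_fintype_card, Fintype.card_fun, Fintype.card_bool,
      Fintype.card_fun, Fintype.card_bool, Fintype.card_coe,
      Finset.card_attachFin, Nat.card_Ico]
    congr 2
    omega
end

section
/- For every n ∈ ℕ with n ≥ 5, there exist p, q ∈ ℕ with p ≥ (1/32)·n/log₂ n and q ≥ n/16 such that there exists a partition V_1, …, V_p, U of [n] with r_{V_i}(ISA_n) = 2^q for all i ∈ [p]. -/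
def hISA (m : ℕ) : ℕ := m + 2^m * (m + Nat.clog 2 m) + 2^(m + Nat.clog 2 m)

def ISAn (n : ℕ) (a : Fin n → Bool) : Bool :=
  if n < 5 then false
  else
    let k := Nat.findGreatest (fun k => 1 ≤ k ∧ hISA k ≤ n) n
    ISA k (k + Nat.clog 2 k) (fun i => if h : (i:ℕ) < n then a ⟨(i:ℕ), h⟩ else false)

lemma sum_pow_lt (L : ℕ) (d : ℕ → Bool) :
    (∑ t ∈ Finset.range L, if d t then 2^t else 0) < 2^L := by
  induction L with
  | zero => simp
  | succ L ih =>
    rw [Finset.sum_range_succ, pow_succ]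
    have : (if d L then 2^L else 0) ≤ 2^L := by split <;> simp
    omega

lemma sum_pow_reflect_lt (L : ℕ) (c : ℕ → Bool) :
    (∑ t ∈ Finset.range L, if c t then 2^(L-1-t) else 0) < 2^L := by
  calc (∑ t ∈ Finset.range L, if c t then 2^(L-1-t) else 0)
      ≤ ∑ t ∈ Finset.range L, 2^(L-1-t) := by
        apply Finset.sum_le_sum; intro t _; split <;> simp
    _ = ∑ t ∈ Finset.range L, 2^t := Finset.sum_range_reflect (fun t => 2^t) L
    _ < 2^L := by
        have := sum_pow_lt L (fun _ => true)
        simpa using this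

lemma sum_testBit_eq (L b : ℕ) :
    (∑ t ∈ Finset.range L, if b.testBit t then 2^t else 0) = b % 2^L := by
  induction L with
  | zero => simp [Nat.mod_one]
  | succ L ih =>
    rw [Finset.sum_range_succ, ih, pow_succ, Nat.mod_mul]
    have h : b.testBit L = decide (b / 2^L % 2 = 1) := Nat.testBit_eq_decide_div_mod_eq
    have h2 : b / 2^L % 2 = 0 ∨ b / 2^L % 2 = 1 := by omega
    rcases h2 with h2 | h2 <;> rw [h2] at h <;> simp at h <;> rw [h] <;> simp <;> omega

lemma testBit_sum (L : ℕ) (d : ℕ → Bool) (s : ℕ) (hs : s < L) :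
    (∑ t ∈ Finset.range L, if d t then 2^t else 0).testBit s = d s := by
  induction L with
  | zero => omega
  | succ L ih =>
    rw [Finset.sum_range_succ]
    have hlt := sum_pow_lt L d
    rcases Nat.lt_or_ge s L with hsL | hsL
    · rcases Bool.eq_false_or_eq_true (d L) with hb | hb
      · rw [hb, if_pos rfl, Nat.add_comm _ (2^L), Nat.testBit_two_pow_add_gt hsL, ih hsL]
      · rw [hb, if_neg (by simp)]; simpa using ih hsL
    · have hsL' : s = L := by omega
      subst hsL'
      rcases Bool.eq_false_or_eq_true (d s) with hb | hb
      · rw [hb, if_pos rfl, Nat.add_comm _ (2^s), Nat.testBit_two_pow_add_eq,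
          Nat.testBit_lt_two_pow hlt]
        rfl
      · rw [hb, if_neg (by simp)]; simpa using Nat.testBit_lt_two_pow hlt

lemma sum_reflect_eq (L : ℕ) (c : ℕ → Bool) :
    (∑ t ∈ Finset.range L, if c t then 2^(L-1-t) else 0)
      = ∑ t ∈ Finset.range L, (if c (L-1-t) then 2^t else 0) := by
  rw [← Finset.sum_range_reflect (fun t => if c (L-1-t) then 2^t else 0) L]
  apply Finset.sum_congr rfl
  intro t ht
  simp only [Finset.mem_range] at ht
  have h : L - 1 - (L - 1 - t) = t := by omega
  rw [h]

lemma testBit_sum' (L : ℕ) (c : ℕ → Bool) (j : ℕ) (hj : j < L) :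
    (∑ t ∈ Finset.range L, if c t then 2^(L-1-t) else 0).testBit (L-1-j) = c j := by
  rw [sum_reflect_eq, testBit_sum L _ (L-1-j) (by omega)]
  have h : L - 1 - (L - 1 - j) = j := by omega
  rw [h]

lemma sum_reflect_testBit (L b : ℕ) (hb : b < 2^L) :
    (∑ t ∈ Finset.range L, if b.testBit (L-1-t) then 2^(L-1-t) else 0) = b := by
  rw [Finset.sum_range_reflect (fun t => if b.testBit t then 2^t else 0) L,
    sum_testBit_eq, Nat.mod_eq_of_lt hb]
lemma ISA_def (k ℓ : ℕ) (a : Fin (k + 2^k*ℓ + 2^ℓ) → Bool) :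
    ISA k ℓ a =
      (fun a' : ℕ → Bool =>
        a' (k + ℓ*2^k + ∑ t ∈ Finset.range ℓ,
          if a' (k + ℓ*(∑ s ∈ Finset.range k, if a' s then 2^(k-1-s) else 0) + t)
          then 2^(ℓ-1-t) else 0))
      (fun j => if h : j < k + 2^k*ℓ + 2^ℓ then a ⟨j, h⟩ else false) := rfl

lemma ISA_eval (k ℓ : ℕ) (a : Fin (k + 2^k*ℓ + 2^ℓ) → Bool) (A : ℕ → Bool)
    (hA : ∀ j (h : j < k + 2^k*ℓ + 2^ℓ), a ⟨j, h⟩ = A j)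
    (α β : ℕ)
    (hα : (∑ s ∈ Finset.range k, if A s then 2^(k-1-s) else 0) = α)
    (hαlt : α < 2^k)
    (hβ : (∑ t ∈ Finset.range ℓ, if A (k + ℓ*α + t) then 2^(ℓ-1-t) else 0) = β)
    (hβlt : β < 2^ℓ) :
    ISA k ℓ a = A (k + ℓ*2^k + β) := by
  rw [ISA_def]
  set F : ℕ → Bool := fun j => if h : j < k + 2^k*ℓ + 2^ℓ then a ⟨j, h⟩ else false with hF
  have hD : ∀ j, j < k + 2^k*ℓ + 2^ℓ → F j = A j := by
    intro j hj
    rw [hF]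
    simp only
    rw [dif_pos hj]
    exact hA j hj
  have hcomm : ℓ * 2^k = 2^k * ℓ := Nat.mul_comm _ _
  have hsum1 : (∑ s ∈ Finset.range k, if F s then 2^(k-1-s) else 0) = α := by
    rw [← hα]
    apply Finset.sum_congr rfl
    intro s hs
    simp only [Finset.mem_range] at hs
    rw [hD s (by omega)]
  have hmul : ℓ * α + ℓ ≤ ℓ * 2^k := by
    have h1 : ℓ * (α + 1) ≤ ℓ * 2^k := Nat.mul_le_mul_left ℓ (by omega)
    rw [Nat.mul_add] at h1
    omega
  have hsum2 : (∑ t ∈ Finset.range ℓ, if F (k + ℓ*α + t) then 2^(ℓ-1-t) else 0) = β := by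
    rw [← hβ]
    apply Finset.sum_congr rfl
    intro t ht
    simp only [Finset.mem_range] at ht
    rw [hD _ (by omega)]
  show F (k + ℓ*2^k + ∑ t ∈ Finset.range ℓ,
      if F (k + ℓ*(∑ s ∈ Finset.range k, if F s then 2^(k-1-s) else 0) + t)
      then 2^(ℓ-1-t) else 0) = A (k + ℓ*2^k + β)
  rw [hsum1, hsum2]
  exact hD _ (by omega)

lemma block_count (n k ℓ : ℕ) (hk1 : 1 ≤ k) (hℓ1 : 1 ≤ ℓ)
    (hmn : k + 2^k*ℓ + 2^ℓ ≤ n)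
    (hkfind : Nat.findGreatest (fun k => 1 ≤ k ∧ hISA k ≤ n) n = k)
    (hℓeq : k + Nat.clog 2 k = ℓ)
    (hn5 : ¬ n < 5)
    (i : Fin (2^k)) :
    numSubfuns (ISAn n)
      (Finset.univ.filter (fun x : Fin n => k + ℓ*↑i ≤ ↑x ∧ ↑x < k + ℓ*↑i + ℓ))
      = 2^(2^ℓ) := by
  classical
  set V : Finset (Fin n) :=
    Finset.univ.filter (fun x : Fin n => k + ℓ*↑i ≤ ↑x ∧ ↑x < k + ℓ*↑i + ℓ) with hV
  have hq1 : 1 ≤ 2^ℓ := Nat.one_le_two_pow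
  have hq2 : 1 ≤ 2^k := Nat.one_le_two_pow
  have hcomm : ℓ * 2^k = 2^k * ℓ := Nat.mul_comm _ _
  have hmemV : ∀ (t : ℕ) (ht : t < n),
      ((⟨t, ht⟩ : Fin n) ∈ V) ↔ (k + ℓ*↑i ≤ t ∧ t < k + ℓ*↑i + ℓ) := by
    intro t ht
    rw [hV]
    simp only [Finset.mem_filter, Finset.mem_univ, true_and]
  have hblock : ℓ*↑i + ℓ ≤ ℓ*2^k := by
    have h1 : ℓ * (↑i + 1) ≤ ℓ * 2^k := Nat.mul_le_mul_left ℓ i.isLt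
    rw [Nat.mul_add] at h1; omega
  have hcard : V.card = ℓ := by
    rw [← Finset.card_range ℓ]
    refine Finset.card_bij' (fun (x : Fin n) (_ : x ∈ V) => (x:ℕ) - (k+ℓ*↑i))
      (fun (j : ℕ) (hj : j ∈ Finset.range ℓ) =>
        (⟨k+ℓ*↑i+j, by simp only [Finset.mem_range] at hj; omega⟩ : Fin n))
      ?_ ?_ ?_ ?_
    · rintro ⟨a, han⟩ ha
      rw [hmemV] at ha
      simp only [Finset.mem_range]
      omega
    · intro a ha
      simp only [Finset.mem_range] at ha
      rw [hmemV]
      omega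
    · rintro ⟨a, han⟩ ha
      rw [hmemV] at ha
      apply Fin.ext
      simp only
      omega
    · intro a ha
      simp only [Finset.mem_range] at ha
      simp only
      omega
  have main : ∀ (A₀ : Fin n → Bool) (b : ℕ → Bool),
      (∀ s (hs : s < n), A₀ ⟨s, hs⟩ = b s) →
      (∀ s, s < k → b s = (↑i:ℕ).testBit (k-1-s)) →
      ISAn n A₀ = b (k + ℓ*2^k +
        (∑ t ∈ Finset.range ℓ, if b (k + ℓ*↑i + t) then 2^(ℓ-1-t) else 0)) := by
    intro A₀ b hb haddr
    have hβlt := sum_pow_reflect_lt ℓ (fun t => b (k + ℓ*↑i + t))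
    have hgen : ∀ (k1 ℓ1 : ℕ) (F : ℕ → Bool), k1 = k → ℓ1 = ℓ →
        ISA k1 ℓ1 (fun j => F ↑j) = ISA k ℓ (fun j => F ↑j) := by
      intro k1 ℓ1 F h1 h2
      subst h1; subst h2; rfl
    unfold ISAn
    rw [if_neg hn5]
    refine Eq.trans (hgen (Nat.findGreatest (fun k => 1 ≤ k ∧ hISA k ≤ n) n)
      (Nat.findGreatest (fun k => 1 ≤ k ∧ hISA k ≤ n) n
        + Nat.clog 2 (Nat.findGreatest (fun k => 1 ≤ k ∧ hISA k ≤ n) n))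
      (fun t => if h : t < n then A₀ ⟨t, h⟩ else false)
      hkfind (by rw [hkfind, hℓeq])) ?_
    apply ISA_eval k ℓ _ b _ (↑i) _ _ i.isLt rfl hβlt
    · intro j hj
      have hjn : j < n := by omega
      simp only
      rw [dif_pos hjn]
      exact hb j hjn
    · rw [Finset.sum_congr rfl (fun s hs => by
        simp only [Finset.mem_range] at hs
        rw [haddr s hs])]
      exact sum_reflect_testBit k ↑i i.isLt
  have hsurj : Function.Surjective (subfun (ISAn n) V) := by
    intro g
    refine ⟨fun x => if (x.1 : ℕ) < k then (↑i : ℕ).testBit (k-1-(x.1:ℕ))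
      else if k + ℓ*2^k ≤ (x.1:ℕ) then
        g (fun z => Nat.testBit ((x.1:ℕ) - (k+ℓ*2^k)) (ℓ-1-((z.1:ℕ)-(k+ℓ*↑i))))
      else false, ?_⟩
    funext y
    set ρ : {x : Fin n // x ∉ V} → Bool := fun x =>
      if (x.1 : ℕ) < k then (↑i : ℕ).testBit (k-1-(x.1:ℕ))
      else if k + ℓ*2^k ≤ (x.1:ℕ) then
        g (fun z => Nat.testBit ((x.1:ℕ) - (k+ℓ*2^k)) (ℓ-1-((z.1:ℕ)-(k+ℓ*↑i))))
      else false with hρ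
    set A₀ : Fin n → Bool := (fun x => if h : x ∈ V then y ⟨x,h⟩ else ρ ⟨x,h⟩) with hA₀
    set b : ℕ → Bool := (fun t => if h : t < n then A₀ ⟨t,h⟩ else false) with hb
    have hρval : ∀ (x : Fin n) (hx : x ∉ V), ρ ⟨x, hx⟩ =
        (if (x : ℕ) < k then (↑i : ℕ).testBit (k-1-(x:ℕ))
         else if k + ℓ*2^k ≤ (x:ℕ) then
           g (fun z => Nat.testBit ((x:ℕ) - (k+ℓ*2^k)) (ℓ-1-((z.1:ℕ)-(k+ℓ*↑i))))
         else false) := fun x hx => rfl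
    have hA₀val : ∀ (x : Fin n), A₀ x = (if h : x ∈ V then y ⟨x,h⟩ else ρ ⟨x,h⟩) :=
      fun x => rfl
    have hbval : ∀ (t : ℕ), b t = (if h : t < n then A₀ ⟨t,h⟩ else false) := fun t => rfl
    have hbv : ∀ s (hs : s < n), A₀ ⟨s, hs⟩ = b s := by
      intro s hs; rw [hbval, dif_pos hs]
    have hbV : ∀ (t : ℕ) (ht : t < ℓ) (htn : k + ℓ*↑i + t < n)
        (hmem : (⟨k + ℓ*↑i + t, htn⟩ : Fin n) ∈ V),
        b (k + ℓ*↑i + t) = y ⟨⟨k + ℓ*↑i + t, htn⟩, hmem⟩ := by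
      intro t ht htn hmem
      rw [hbval, dif_pos htn, hA₀val, dif_pos hmem]
    have haddr : ∀ s, s < k → b s = (↑i:ℕ).testBit (k-1-s) := by
      intro s hs
      have hsn : s < n := by omega
      have hnm : (⟨s, hsn⟩ : Fin n) ∉ V := by rw [hmemV]; omega
      rw [hbval, dif_pos hsn, hA₀val, dif_neg hnm, hρval]
      rw [if_pos hs]
    show ISAn n A₀ = g y
    rw [main A₀ b hbv haddr]
    set β : ℕ := ∑ t ∈ Finset.range ℓ, if b (k + ℓ*↑i + t) then 2^(ℓ-1-t) else 0 with hβ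
    have hβlt : β < 2^ℓ := sum_pow_reflect_lt ℓ _
    have hposn : k + ℓ*2^k + β < n := by omega
    have hnotmem : (⟨k + ℓ*2^k + β, hposn⟩ : Fin n) ∉ V := by rw [hmemV]; omega
    rw [hbval, dif_pos hposn, hA₀val, dif_neg hnotmem, hρval]
    rw [if_neg (by simp only; omega), if_pos (by simp only; omega)]
    congr 1
    funext z
    obtain ⟨⟨zv, hzn⟩, hzmem⟩ := z
    have hz : k + ℓ*↑i ≤ zv ∧ zv < k + ℓ*↑i + ℓ := (hmemV zv hzn).mp hzmem
    have hjlt : zv - (k + ℓ*↑i) < ℓ := by omega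
    have harg : (⟨k + ℓ*2^k + β, hposn⟩ : Fin n).val - (k + ℓ*2^k) = β := by
      simp only
      omega
    rw [harg]
    have htb := testBit_sum' ℓ (fun t => b (k + ℓ*↑i + t)) (zv - (k + ℓ*↑i)) hjlt
    rw [← hβ] at htb
    have hidx : k + ℓ*↑i + (zv - (k + ℓ*↑i)) = zv := by omega
    simp only
    rw [htb]
    rw [hidx, hbval, dif_pos hzn, hA₀val, dif_pos hzmem]
  unfold numSubfuns
  rw [Set.range_eq_univ.mpr hsurj, Set.ncard_univ, Nat.card_eq_fintype_card,
    Fintype.card_fun, Fintype.card_fun, Fintype.card_bool, Fintype.card_coe, hcard]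

theorem stmt4 (n : ℕ) (hn : 5 ≤ n) :
    ∃ p q : ℕ,
      (1/32 : ℝ) * n / Real.logb 2 n ≤ (p : ℝ) ∧
      (n : ℝ) / 16 ≤ (q : ℝ) ∧
      ∃ (V : Fin p → Finset (Fin n)) (U : Finset (Fin n)),
        (∀ i, (V i).Nonempty) ∧ U.Nonempty ∧
        (∀ i j, i ≠ j → Disjoint (V i) (V j)) ∧
        (∀ i, Disjoint (V i) U) ∧
        (∀ x, (∃ i, x ∈ V i) ∨ x ∈ U) ∧
        (∀ i, numSubfuns (ISAn n) (V i) = 2^q) := by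
  classical
  have h5 : hISA 1 = 5 := by
    have h0 : Nat.clog 2 1 = 0 := Nat.clog_one_right 2
    simp [hISA, h0]
  have hP1 : (fun k => 1 ≤ k ∧ hISA k ≤ n) 1 := ⟨le_refl 1, by omega⟩
  set k := Nat.findGreatest (fun k => 1 ≤ k ∧ hISA k ≤ n) n with hk
  have hkspec := Nat.findGreatest_spec (P := fun k => 1 ≤ k ∧ hISA k ≤ n)
    (n := n) (m := 1) (by omega) hP1
  simp only [← hk] at hkspec
  obtain ⟨hk1, hkn⟩ := hkspec
  set c := Nat.clog 2 k with hc
  set ℓ := k + c with hℓdef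
  have hℓ1 : 1 ≤ ℓ := by omega
  have hmeq : hISA k = k + 2^k*ℓ + 2^ℓ := rfl
  have hmn : k + 2^k*ℓ + 2^ℓ ≤ n := by rw [← hmeq]; exact hkn
  have hq1 : 1 ≤ 2^ℓ := Nat.one_le_two_pow
  have hq2 : 1 ≤ 2^k := Nat.one_le_two_pow
  have hkpow : k < 2^k := (Nat.lt_two_pow_self (n := k))
  have hcpow : k ≤ 2^c := Nat.le_pow_clog (by norm_num) k
  have hccpow : c < 2^c := (Nat.lt_two_pow_self (n := c))
  have hmul1 : 2^k*1 ≤ 2^k*ℓ := Nat.mul_le_mul_left _ hℓ1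
  have h2kn : 2^k ≤ n := by omega
  have hkn' : k + 1 ≤ n := by omega
  have hnotP : ¬ (1 ≤ k+1 ∧ hISA (k+1) ≤ n) :=
    Nat.findGreatest_is_greatest (by rw [← hk]; omega) hkn'
  have hub : n < hISA (k+1) := by
    by_contra h
    push_neg at h
    exact hnotP ⟨by omega, h⟩
  have hc2k : 2^c < 2*k := by
    rcases Nat.lt_or_ge k 2 with h2 | h2
    · have hk1' : k = 1 := by omega
      have hc0 : c = 0 := by rw [hc, hk1', Nat.clog_one_right]
      rw [hc0, hk1']
      norm_num
    · have h1 := Nat.pow_pred_clog_lt_self (b := 2) (by norm_num) h2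
      rw [← hc] at h1
      have hcpos : 1 ≤ c := by
        by_contra hc0
        push_neg at hc0
        have : c = 0 := by omega
        rw [this] at hcpow
        simp at hcpow
        omega
      have h3 : 2^c = 2*2^(c-1) := by
        rw [← pow_succ']
        congr 1
        omega
      have h4 : c.pred = c - 1 := rfl
      rw [h4] at h1
      omega
  have hclog1 : Nat.clog 2 (k+1) ≤ c + 1 := by
    have h1 : k + 1 ≤ 2^(c+1) := by rw [pow_succ]; omega
    calc Nat.clog 2 (k+1) ≤ Nat.clog 2 (2^(c+1)) := Nat.clog_mono_right 2 h1
      _ = c+1 := Nat.clog_pow 2 (c+1) (by norm_num)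
  have hub13 : n < 13 * 2^ℓ := by
    have e : hISA (k+1)
        = (k+1) + 2^(k+1)*((k+1) + Nat.clog 2 (k+1)) + 2^((k+1)+Nat.clog 2 (k+1)) := rfl
    have t3 : 2^((k+1)+Nat.clog 2 (k+1)) ≤ 4 * 2^ℓ := by
      have h1 : (k+1)+Nat.clog 2 (k+1) ≤ ℓ + 2 := by omega
      calc 2^((k+1)+Nat.clog 2 (k+1)) ≤ 2^(ℓ+2) := Nat.pow_le_pow_right (by norm_num) h1
        _ = 4*2^ℓ := by ring
    have t2 : 2^(k+1)*((k+1) + Nat.clog 2 (k+1)) ≤ 8 * 2^ℓ := by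
      have h1 : (k+1) + Nat.clog 2 (k+1) ≤ 4*2^c := by omega
      calc 2^(k+1)*((k+1) + Nat.clog 2 (k+1)) ≤ 2^(k+1)*(4*2^c) :=
          Nat.mul_le_mul_left _ h1
        _ = 8 * 2^ℓ := by rw [hℓdef, pow_add, pow_succ]; ring
    have t1 : k+1 ≤ 2^ℓ := by
      have : 2^k ≤ 2^ℓ := Nat.pow_le_pow_right (by norm_num) (by omega)
      omega
    omega
  have hn26 : n ≤ 26*k*2^k := by
    have h1 : 2^ℓ = 2^k*2^c := pow_add 2 k c
    have h2 : 13*(2^k*2^c) ≤ 13*(2^k*(2*k)) :=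
      Nat.mul_le_mul_left _ (Nat.mul_le_mul_left _ (by omega))
    calc n ≤ 13*2^ℓ := by omega
      _ = 13*(2^k*2^c) := by rw [h1]
      _ ≤ 13*(2^k*(2*k)) := h2
      _ = 26*k*2^k := by ring
  refine ⟨2^k, 2^ℓ, ?_, ?_, ?_⟩
  · -- p bound
    have hlog : (k:ℝ) ≤ Real.logb 2 n := by
      have h2kr : (2:ℝ)^k ≤ (n:ℝ) := by exact_mod_cast h2kn
      have e1 : Real.logb 2 ((2:ℝ)^k) = (k:ℝ) := by
        rw [Real.logb_pow, Real.logb_self_eq_one (by norm_num)]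
        ring
      rw [← e1]
      exact Real.logb_le_logb_of_le (by norm_num) (by positivity) h2kr
    have hlogpos : 0 < Real.logb 2 n := by
      have : (1:ℝ) ≤ (k:ℝ) := by exact_mod_cast hk1
      linarith
    rw [div_le_iff₀ hlogpos]
    have hn26' : (n:ℝ) ≤ 26*(k:ℝ)*(2:ℝ)^k := by exact_mod_cast hn26
    push_cast
    have hppos : (0:ℝ) < (2:ℝ)^k := by positivity
    nlinarith [mul_le_mul_of_nonneg_right hlog (le_of_lt hppos),
      mul_nonneg (le_of_lt hlogpos) (le_of_lt hppos)]
  · -- q bound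
    rw [div_le_iff₀ (by norm_num : (0:ℝ) < 16)]
    have h13 : (n:ℝ) ≤ 13*(2:ℝ)^ℓ := by exact_mod_cast le_of_lt hub13
    push_cast
    nlinarith [pow_nonneg (by norm_num : (0:ℝ) ≤ 2) ℓ]
  · -- structure
    have hblockall : ∀ i : Fin (2^k), ℓ*↑i + ℓ ≤ ℓ*2^k := by
      intro i
      have h1 : ℓ * (↑i + 1) ≤ ℓ * 2^k := Nat.mul_le_mul_left ℓ i.isLt
      rw [Nat.mul_add] at h1
      omega
    have hcomm : ℓ * 2^k = 2^k * ℓ := Nat.mul_comm _ _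
    refine ⟨fun i => Finset.univ.filter (fun x : Fin n => k + ℓ*↑i ≤ ↑x ∧ ↑x < k + ℓ*↑i + ℓ),
      Finset.univ.filter (fun x : Fin n => ↑x < k ∨ k + ℓ*2^k ≤ ↑x), ?_, ?_, ?_, ?_, ?_, ?_⟩
    · intro i
      have hlt : k + ℓ*↑i < n := by have := hblockall i; omega
      refine ⟨⟨k + ℓ*↑i, hlt⟩, ?_⟩
      simp only [Finset.mem_filter, Finset.mem_univ, true_and, Fin.val_mk]
      omega
    · refine ⟨⟨0, by omega⟩, ?_⟩
      simp only [Finset.mem_filter, Finset.mem_univ, true_and, Fin.val_mk]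
      left
      exact hk1
    · intro i j hij
      rw [Finset.disjoint_left]
      intro x hxi hxj
      simp only [Finset.mem_filter, Finset.mem_univ, true_and] at hxi hxj
      apply hij
      apply Fin.ext
      rcases Nat.lt_trichotomy (↑i : ℕ) (↑j : ℕ) with h | h | h
      · have h1 : ℓ * (↑i + 1) ≤ ℓ * ↑j := Nat.mul_le_mul_left ℓ (by omega)
        rw [Nat.mul_add] at h1
        omega
      · exact h
      · have h1 : ℓ * (↑j + 1) ≤ ℓ * ↑i := Nat.mul_le_mul_left ℓ (by omega)
        rw [Nat.mul_add] at h1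
        omega
    · intro i
      rw [Finset.disjoint_left]
      intro x hxi hxU
      simp only [Finset.mem_filter, Finset.mem_univ, true_and] at hxi hxU
      have := hblockall i
      omega
    · intro x
      by_cases hx : (↑x : ℕ) < k ∨ k + ℓ*2^k ≤ ↑x
      · right
        simp only [Finset.mem_filter, Finset.mem_univ, true_and]
        exact hx
      · left
        push_neg at hx
        obtain ⟨hx1, hx2⟩ := hx
        have hdlt : ((↑x : ℕ) - k)/ℓ < 2^k := by
          rw [Nat.div_lt_iff_lt_mul (by omega : 0 < ℓ)]
          omega
        refine ⟨⟨((↑x : ℕ) - k)/ℓ, hdlt⟩, ?_⟩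
        simp only [Finset.mem_filter, Finset.mem_univ, true_and, Fin.val_mk]
        have hdm := Nat.div_add_mod ((↑x : ℕ) - k) ℓ
        have hml := Nat.mod_lt ((↑x : ℕ) - k) (show 0 < ℓ by omega)
        omega
    · intro i
      exact block_count n k ℓ hk1 hℓ1 hmn hk.symm (by rw [hℓdef, hc]) (by omega) i
end

section
/- For every n ∈ ℕ and every Boolean function f : {0,1}^[n] → {0,1}, NBP(f) ≤ 3·2^(⌈n/2⌉) and ⊕BP(f) ≤ 3·2^(⌈n/2⌉). -/
structure BranchProg (n : ℕ) where
  size : ℕ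
  start : Fin size ⊕ Bool
  A0 : Fin size → (Fin size ⊕ Bool) → Prop
  A1 : Fin size → (Fin size ⊕ Bool) → Prop
  var : Fin size → Fin n
  A0_ne_start : ∀ u v, A0 u v → v ≠ start
  A1_ne_start : ∀ u v, A1 u v → v ≠ start

namespace BranchProg

def arc {n : ℕ} (P : BranchProg n) (a : Fin n → Bool) :
    (Fin P.size ⊕ Bool) → (Fin P.size ⊕ Bool) → Prop
  | Sum.inl u, v => (a (P.var u) = false ∧ P.A0 u v) ∨ (a (P.var u) = true ∧ P.A1 u v)
  | Sum.inr _, _ => False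

def ComputesNBP {n : ℕ} (P : BranchProg n) (f : (Fin n → Bool) → Bool) : Prop :=
  ∀ a, f a = true ↔ Relation.ReflTransGen (P.arc a) P.start (Sum.inr true)

def accPaths {n : ℕ} (P : BranchProg n) (a : Fin n → Bool) :
    Set (List (Fin P.size ⊕ Bool)) :=
  {l | l.Nodup ∧ l.Chain' (P.arc a) ∧ l.head? = some P.start ∧
       l.getLast? = some (Sum.inr true)}

def ComputesPBP {n : ℕ} (P : BranchProg n) (f : (Fin n → Bool) → Bool) : Prop :=
  ∀ a, f a = true ↔ Odd ((P.accPaths a).ncard)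

def rawArc {n : ℕ} (P : BranchProg n) :
    (Fin P.size ⊕ Bool) → (Fin P.size ⊕ Bool) → Prop
  | Sum.inl u, v => P.A0 u v ∨ P.A1 u v
  | Sum.inr _, _ => False

def Deterministic {n : ℕ} (P : BranchProg n) : Prop :=
  (∀ u, ∃! v, P.A0 u v) ∧ (∀ u, ∃! v, P.A1 u v) ∧
  ∀ x, ¬ Relation.TransGen P.rawArc x x

end BranchProg

noncomputable def NBPc {n : ℕ} (f : (Fin n → Bool) → Bool) : ℕ :=
  sInf {s | ∃ P : BranchProg n, P.size = s ∧ P.ComputesNBP f}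

noncomputable def PBPc {n : ℕ} (f : (Fin n → Bool) → Bool) : ℕ :=
  sInf {s | ∃ P : BranchProg n, P.size = s ∧ P.ComputesPBP f}

noncomputable def BPc {n : ℕ} (f : (Fin n → Bool) → Bool) : ℕ :=
  sInf {s | ∃ P : BranchProg n, P.Deterministic ∧ P.size = s ∧ P.ComputesNBP f}

noncomputable def Nsem (n s : ℕ) : ℕ :=
  {f : (Fin n → Bool) → Bool | ∃ P : BranchProg n, P.size ≤ s ∧ P.ComputesNBP f}.ncard

noncomputable def Psem (n s : ℕ) : ℕ :=
  {f : (Fin n → Bool) → Bool | ∃ P : BranchProg n, P.size ≤ s ∧ P.ComputesPBP f}.ncard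

namespace BP310

/-! ### Numeric helpers -/

theorem log2_eq {x j : ℕ} (h1 : 2^j ≤ x) (h2 : x < 2^(j+1)) : Nat.log2 x = j := by
  have hx : x ≠ 0 := by have := Nat.two_pow_pos j; omega
  have ha : Nat.log2 x < j + 1 := (Nat.log2_lt hx).2 h2
  have hb : j ≤ Nat.log2 x := (Nat.le_log2 hx).2 h1
  omega

theorem eq_of_bits {x y j : ℕ} (hx1 : 2^j ≤ x) (hx2 : x < 2^(j+1))
    (hy1 : 2^j ≤ y) (hy2 : y < 2^(j+1)) (h : ∀ i, i < j → x.testBit i = y.testBit i) :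
    x = y := by
  apply Nat.eq_of_testBit_eq
  intro i
  rcases lt_trichotomy i j with h' | rfl | h'
  · exact h i h'
  · have p2 : (0:ℕ) < 2^i := Nat.two_pow_pos i
    have hps : (2:ℕ)^(i+1) = 2^i * 2 := pow_succ 2 i
    have hxd : x / 2^i = 1 := by
      have := Nat.div_le_div_right (c := 2^i) hx2.le
      have h2 := Nat.div_le_div_right (c := 2^i) hx1
      rw [Nat.div_self p2] at h2
      have : x / 2^i ≤ 1 := by
        have := Nat.div_lt_iff_lt_mul (k := 2^i) (x := x) (y := 2) p2
        omega
      omega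
    have hyd : y / 2^i = 1 := by
      have h2 := Nat.div_le_div_right (c := 2^i) hy1
      rw [Nat.div_self p2] at h2
      have : y / 2^i ≤ 1 := by
        have := Nat.div_lt_iff_lt_mul (k := 2^i) (x := y) (y := 2) p2
        omega
      omega
    rw [Nat.testBit_eq_decide_div_mod_eq, Nat.testBit_eq_decide_div_mod_eq, hxd, hyd]
  · have hle : (2:ℕ)^(j+1) ≤ 2^i := Nat.pow_le_pow_right (by norm_num) h'
    rw [Nat.testBit_lt_two_pow (by omega), Nat.testBit_lt_two_pow (by omega)]

/-- heap numbering of the node at depth `j` along the branch `g`. -/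
def num (g : ℕ → Bool) : ℕ → ℕ
  | 0 => 1
  | j+1 => 2 * num g j + (g j).toNat

theorem num_ge (g : ℕ → Bool) : ∀ j, 2^j ≤ num g j
  | 0 => le_refl 1
  | j+1 => by
      have := num_ge g j
      have hps : (2:ℕ)^(j+1) = 2^j * 2 := pow_succ 2 j
      simp only [num]; omega

theorem num_lt (g : ℕ → Bool) : ∀ j, num g j < 2^(j+1)
  | 0 => by norm_num [num]
  | j+1 => by
      have := num_lt g j
      have hb : (g j).toNat ≤ 1 := Bool.toNat_le _
      have hps : (2:ℕ)^(j+1+1) = 2^(j+1) * 2 := pow_succ 2 (j+1)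
      simp only [num]; omega

theorem num_pos (g : ℕ → Bool) (j : ℕ) : 1 ≤ num g j := by
  have := num_ge g j
  have : (0:ℕ) < 2^j := Nat.two_pow_pos j
  omega

theorem log2_num (g : ℕ → Bool) (j : ℕ) : Nat.log2 (num g j) = j :=
  log2_eq (num_ge g j) (num_lt g j)

theorem testBit_num (g : ℕ → Bool) : ∀ j i, i < j → (num g j).testBit (j - 1 - i) = g i := by
  intro j
  induction j with
  | zero => omega
  | succ j ih =>
    intro i hi
    rcases Nat.lt_or_ge i j with h' | h'
    · have hpos : j + 1 - 1 - i = (j - 1 - i) + 1 := by omega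
      rw [hpos, Nat.testBit_add_one]
      have hdiv : num g (j+1) / 2 = num g j := by
        have hb : (g j).toNat ≤ 1 := Bool.toNat_le _
        simp only [num]; omega
      rw [hdiv]; exact ih i h'
    · have : i = j := by omega
      subst this
      have hpos : i + 1 - 1 - i = 0 := by omega
      rw [hpos]
      cases hg : g i <;>
          simp only [num, hg, Bool.toNat_false, Bool.toNat_true, Nat.testBit_zero]
      · rw [decide_eq_false_iff_not]; omega
      · rw [decide_eq_true_iff]; omega

end BP310
namespace BP310

variable (N : ℕ) (f : (Fin (N+1) → Bool) → Bool)

def K : ℕ := (N+2)/2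
def M : ℕ := (N+1)/2

theorem K_pos : 1 ≤ K N := by unfold K; omega
theorem KM : K N + M N = N + 1 := by unfold K M; omega
theorem M_le_K : M N ≤ K N := by unfold K M; omega
theorem K_le : K N ≤ N + 1 := by unfold K; omega

def sz : ℕ := 3 * 2 ^ K N

theorem sz_pos : 0 < sz N := by unfold sz; positivity

theorem pow_K_pos : (0:ℕ) < 2 ^ K N := Nat.two_pow_pos _

theorem pow_M1_le : 2 ^ (M N + 1) ≤ 2 * 2 ^ K N := by
  calc 2 ^ (M N + 1) ≤ 2 ^ (K N + 1) :=
        Nat.pow_le_pow_right (by norm_num) (by have := M_le_K N; omega)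
    _ = 2 * 2 ^ K N := by rw [pow_succ]; ring

def emb (x : ℕ) : Fin (sz N) := ⟨x % sz N, Nat.mod_lt _ (sz_pos N)⟩

theorem emb_val {x : ℕ} (h : x < sz N) : (emb N x).val = x := Nat.mod_eq_of_lt h

/-- the input assignment encoded by x-leaf `t`, branch bit `b` and y-claim `t'`. -/
def asg (t : ℕ) (b : Bool) (t' : ℕ) : Fin (N+1) → Bool := fun i =>
  if i.val + 1 < K N then t.testBit (K N - 2 - i.val)
  else if i.val + 1 = K N then b
  else t'.testBit (i.val - K N)

def varf (u : Fin (sz N)) : Fin (N+1) :=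
  ⟨if u.val + 1 < 2 ^ K N then Nat.log2 (u.val + 1)
    else (N + 1) - Nat.log2 (u.val + 3 - 2 ^ K N), by
    split_ifs with h
    · exact lt_of_lt_of_le ((Nat.log2_lt (Nat.succ_ne_zero _)).2 h) (K_le N)
    · have h2 : 2 ≤ u.val + 3 - 2 ^ K N := by omega
      have h3 : 1 ≤ Nat.log2 (u.val + 3 - 2 ^ K N) :=
        (Nat.le_log2 (by omega)).2 (by omega)
      omega⟩

def arcb (b : Bool) (u : Fin (sz N)) (v : Fin (sz N) ⊕ Bool) : Prop :=
  if u.val + 1 < 2 ^ K N then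
    (if 2 * (u.val + 1) + 1 < 2 ^ K N then
      ∃ w : Fin (sz N), v = Sum.inl w ∧ w.val + 1 = 2 * (u.val + 1) + b.toNat
    else
      ∃ t', 2 ^ M N ≤ t' ∧ t' < 2 ^ (M N + 1) ∧ f (asg N (u.val + 1) b t') = true ∧
        (if 2 ≤ t' then ∃ w : Fin (sz N), v = Sum.inl w ∧ w.val + 3 = 2 ^ K N + t'
         else v = Sum.inr true))
  else
    (u.val + 3 - 2 ^ K N) < 2 ^ (M N + 1) ∧ (u.val + 3 - 2 ^ K N).testBit 0 = b ∧
      (if (u.val + 3 - 2 ^ K N) < 4 then v = Sum.inr true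
       else ∃ w : Fin (sz N), v = Sum.inl w ∧
          w.val + 3 = 2 ^ K N + (u.val + 3 - 2 ^ K N) / 2)

theorem arcb_ne_start (b : Bool) (u : Fin (sz N)) (v : Fin (sz N) ⊕ Bool)
    (h : arcb N f b u v) : v ≠ Sum.inl (emb N 0) := by
  have h0 : (emb N 0).val = 0 := emb_val N (sz_pos N)
  have hK : (2:ℕ) ≤ 2 ^ K N := by
    calc (2:ℕ) = 2^1 := rfl
    _ ≤ 2 ^ K N := Nat.pow_le_pow_right (by norm_num) (K_pos N)
  intro hv
  subst hv
  unfold arcb at h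
  by_cases h1 : u.val + 1 < 2 ^ K N
  · rw [if_pos h1] at h
    by_cases h2 : 2 * (u.val + 1) + 1 < 2 ^ K N
    · rw [if_pos h2] at h
      obtain ⟨w, hw, hval⟩ := h
      simp only [Sum.inl.injEq] at hw
      rw [← hw, h0] at hval; omega
    · rw [if_neg h2] at h
      obtain ⟨t', ht1, ht2, _, ht⟩ := h
      by_cases h4 : 2 ≤ t'
      · rw [if_pos h4] at ht
        obtain ⟨w, hw, hval⟩ := ht
        simp only [Sum.inl.injEq] at hw
        rw [← hw, h0] at hval; omega
      · rw [if_neg h4] at ht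
        exact Sum.inl_ne_inr ht
  · rw [if_neg h1] at h
    obtain ⟨hlt, _, ht⟩ := h
    by_cases h4 : (u.val + 3 - 2 ^ K N) < 4
    · rw [if_pos h4] at ht; exact Sum.inl_ne_inr ht
    · rw [if_neg h4] at ht
      obtain ⟨w, hw, hval⟩ := ht
      simp only [Sum.inl.injEq] at hw
      rw [← hw, h0] at hval
      omega

def prog : BranchProg (N+1) where
  size := sz N
  start := Sum.inl (emb N 0)
  A0 := arcb N f false
  A1 := arcb N f true
  var := varf N
  A0_ne_start := arcb_ne_start N f false
  A1_ne_start := arcb_ne_start N f true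

theorem arc_iff (a : Fin (N+1) → Bool) (u : Fin (sz N)) (v : Fin (sz N) ⊕ Bool) :
    (prog N f).arc a (Sum.inl u) v ↔ arcb N f (a (varf N u)) u v := by
  cases hb : a (varf N u) <;>
    simp [BranchProg.arc, prog, hb]

theorem arc_sink (a : Fin (N+1) → Bool) (b : Bool) (v : Fin (sz N) ⊕ Bool) :
    ¬ (prog N f).arc a (Sum.inr b) v := fun h => h

end BP310
namespace BP310

variable (N : ℕ) (f : (Fin (N+1) → Bool) → Bool)

/-- extend an assignment to all of `ℕ` -/
def ext (a : Fin (N+1) → Bool) (i : ℕ) : Bool :=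
  if h : i < N + 1 then a ⟨i, h⟩ else false

/-- the y-part of `a`, read backwards (for the suffix-claim numbering) -/
def gy (a : Fin (N+1) → Bool) (i : ℕ) : Bool := ext N a (N - i)

theorem ext_apply (a : Fin (N+1) → Bool) (i : Fin (N+1)) : ext N a i.val = a i := by
  unfold ext
  rw [dif_pos i.isLt]

theorem varf_T (a : Fin (N+1) → Bool) {t : ℕ} (h1 : 1 ≤ t) (h2 : t < 2 ^ K N) :
    a (varf N (emb N (t-1))) = ext N a (Nat.log2 t) := by
  rw [← ext_apply N a (varf N (emb N (t-1)))]
  congr 1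
  show (if (emb N (t-1)).val + 1 < 2 ^ K N then _ else _) = _
  rw [emb_val N (by have := pow_K_pos N; unfold sz; omega)]
  have ht : t - 1 + 1 = t := by omega
  rw [ht, if_pos h2]

theorem varf_C (a : Fin (N+1) → Bool) {c : ℕ} (h2 : 2 ≤ c) (hc : c < 2 ^ (M N + 1)) :
    a (varf N (emb N (2 ^ K N + c - 3))) = ext N a (N + 1 - Nat.log2 c) := by
  rw [← ext_apply N a (varf N (emb N (2 ^ K N + c - 3)))]
  congr 1
  show (if (emb N (2 ^ K N + c - 3)).val + 1 < 2 ^ K N then _ else _) = _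
  have hb : 2 ^ K N + c - 3 < sz N := by
    have := pow_M1_le N; have := pow_K_pos N; unfold sz; omega
  rw [emb_val N hb, if_neg (by have := pow_K_pos N; omega)]
  have hcc : 2 ^ K N + c - 3 + 3 - 2 ^ K N = c := by have := pow_K_pos N; omega
  rw [hcc]

theorem arcT_int (a : Fin (N+1) → Bool) {t : ℕ} (h1 : 1 ≤ t) (h2 : 2*t+1 < 2 ^ K N)
    (v : Fin (sz N) ⊕ Bool) :
    (prog N f).arc a (Sum.inl (emb N (t-1))) v ↔
      ∃ w : Fin (sz N), v = Sum.inl w ∧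
        w.val + 1 = 2*t + (ext N a (Nat.log2 t)).toNat := by
  rw [arc_iff, varf_T N a h1 (by omega)]
  unfold arcb
  rw [emb_val N (by have := pow_K_pos N; unfold sz; omega)]
  have ht : t - 1 + 1 = t := by omega
  rw [ht, if_pos (by omega), if_pos h2]

theorem arcT_leaf (a : Fin (N+1) → Bool) {t : ℕ} (h1 : 1 ≤ t) (h2 : t < 2 ^ K N)
    (h3 : ¬(2*t+1 < 2 ^ K N)) (v : Fin (sz N) ⊕ Bool) :
    (prog N f).arc a (Sum.inl (emb N (t-1))) v ↔
      ∃ t', 2 ^ M N ≤ t' ∧ t' < 2 ^ (M N + 1) ∧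
        f (asg N t (ext N a (Nat.log2 t)) t') = true ∧
        (if 2 ≤ t' then ∃ w : Fin (sz N), v = Sum.inl w ∧ w.val + 3 = 2 ^ K N + t'
         else v = Sum.inr true) := by
  rw [arc_iff, varf_T N a h1 h2]
  unfold arcb
  rw [emb_val N (by have := pow_K_pos N; unfold sz; omega)]
  have ht : t - 1 + 1 = t := by omega
  rw [ht, if_pos h2, if_neg h3]

theorem arcC (a : Fin (N+1) → Bool) {c : ℕ} (h2 : 2 ≤ c) (hc : c < 2 ^ (M N + 1))
    (v : Fin (sz N) ⊕ Bool) :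
    (prog N f).arc a (Sum.inl (emb N (2 ^ K N + c - 3))) v ↔
      (c.testBit 0 = ext N a (N + 1 - Nat.log2 c) ∧
        (if c < 4 then v = Sum.inr true
         else ∃ w : Fin (sz N), v = Sum.inl w ∧ w.val + 3 = 2 ^ K N + c / 2)) := by
  rw [arc_iff, varf_C N a h2 hc]
  unfold arcb
  have hb : 2 ^ K N + c - 3 < sz N := by
    have := pow_M1_le N; have := pow_K_pos N; unfold sz; omega
  rw [emb_val N hb, if_neg (by have := pow_K_pos N; omega)]
  have hcc : 2 ^ K N + c - 3 + 3 - 2 ^ K N = c := by have := pow_K_pos N; omega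
  rw [hcc]
  exact and_iff_right hc

theorem asg_eq (a : Fin (N+1) → Bool) {t' : ℕ}
    (ht' : ∀ i, i < M N → t'.testBit i = ext N a (K N + i)) :
    asg N (num (ext N a) (K N - 1)) (ext N a (K N - 1)) t' = a := by
  have hKM := KM N
  have hK1 := K_pos N
  funext i
  unfold asg
  split_ifs with hi1 hi2
  · have hb := testBit_num (ext N a) (K N - 1) i.val (by omega)
    have hpos : K N - 1 - 1 - i.val = K N - 2 - i.val := by omega
    rw [hpos] at hb
    rw [hb]
    exact ext_apply N a i
  · have : i.val = K N - 1 := by omega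
    rw [← this]
    exact ext_apply N a i
  · have hlt : i.val - K N < M N := by have := i.isLt; omega
    rw [ht' _ hlt]
    have : K N + (i.val - K N) = i.val := by omega
    rw [this]
    exact ext_apply N a i

end BP310
namespace BP310

variable (N : ℕ) (f : (Fin (N+1) → Bool) → Bool)

/-- canonical continuation from the C-node `c` -/
def ctail (c : ℕ) : List (Fin (sz N) ⊕ Bool) :=
  if c < 4 then [Sum.inr true]
  else Sum.inl (emb N (2 ^ K N + c / 2 - 3)) :: ctail (c / 2)
termination_by c
decreasing_by omega

theorem ctail_eq (c : ℕ) : ctail N c =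
    if c < 4 then [Sum.inr true]
    else Sum.inl (emb N (2 ^ K N + c / 2 - 3)) :: ctail N (c / 2) := by
  rw [ctail]

def entryL (a : Fin (N+1) → Bool) : List (Fin (sz N) ⊕ Bool) :=
  if M N = 0 then [Sum.inr true]
  else Sum.inl (emb N (2 ^ K N + num (gy N a) (M N) - 3)) :: ctail N (num (gy N a) (M N))

def tcan (a : Fin (N+1) → Bool) (j : ℕ) : List (Fin (sz N) ⊕ Bool) :=
  if j < K N then Sum.inl (emb N (num (ext N a) j - 1)) :: tcan a (j+1)
  else entryL N a
termination_by K N - j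
decreasing_by omega

theorem tcan_eq (a : Fin (N+1) → Bool) (j : ℕ) : tcan N a j =
    if j < K N then Sum.inl (emb N (num (ext N a) j - 1)) :: tcan N a (j+1)
    else entryL N a := by
  rw [tcan]

def canon (a : Fin (N+1) → Bool) : List (Fin (sz N) ⊕ Bool) := tcan N a 0

theorem ctail_ne_nil (c : ℕ) : ctail N c ≠ [] := by
  rw [ctail_eq]; split_ifs <;> simp

theorem ctail_last (c : ℕ) : (ctail N c).getLast? = some (Sum.inr true) := by
  induction c using Nat.strong_induction_on with
  | _ c ih =>
  rw [ctail_eq]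
  split_ifs with h
  · rfl
  · rcases hl : ctail N (c/2) with _ | ⟨x, xs⟩
    · exact absurd hl (ctail_ne_nil N (c/2))
    · have := ih (c/2) (by omega)
      rw [hl] at this
      rw [List.getLast?_cons_cons]
      exact this

theorem entryL_last (a : Fin (N+1) → Bool) :
    (entryL N a).getLast? = some (Sum.inr true) := by
  unfold entryL
  split_ifs with h
  · rfl
  · rcases hl : ctail N (num (gy N a) (M N)) with _ | ⟨x, xs⟩
    · exact absurd hl (ctail_ne_nil N _)
    · have := ctail_last N (num (gy N a) (M N))
      rw [hl] at this
      rw [List.getLast?_cons_cons]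
      exact this

theorem entryL_ne_nil (a : Fin (N+1) → Bool) : entryL N a ≠ [] := by
  unfold entryL; split_ifs <;> simp

theorem tcan_last (a : Fin (N+1) → Bool) :
    ∀ d j, K N - j ≤ d → (tcan N a j).getLast? = some (Sum.inr true) := by
  intro d
  induction d with
  | zero =>
    intro j hj
    rw [tcan_eq, if_neg (by omega)]
    exact entryL_last N a
  | succ d ih =>
    intro j hj
    rw [tcan_eq]
    split_ifs with h
    · rcases hl : tcan N a (j+1) with _ | ⟨x, xs⟩
      · have := ih (j+1) (by omega)
        rw [hl] at this; simp at this
      · have := ih (j+1) (by omega)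
        rw [hl] at this
        rw [List.getLast?_cons_cons]
        exact this
    · exact entryL_last N a

end BP310
namespace BP310

variable (N : ℕ) (f : (Fin (N+1) → Bool) → Bool)

theorem soundC (a : Fin (N+1) → Bool) :
    ∀ c, 2 ≤ c → c < 2 ^ (M N + 1) →
    ∀ l : List (Fin (sz N) ⊕ Bool),
    List.Chain' ((prog N f).arc a) (Sum.inl (emb N (2 ^ K N + c - 3)) :: l) →
    (Sum.inl (emb N (2 ^ K N + c - 3)) :: l).getLast? = some (Sum.inr true) →
    (∀ i, i < Nat.log2 c → c.testBit i = ext N a (N + 1 - Nat.log2 c + i)) ∧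
      l = ctail N c := by
  intro c
  induction c using Nat.strong_induction_on with
  | _ c ih =>
  intro h2 hc l hch hlast
  cases l with
  | nil => simp at hlast
  | cons v l' =>
    have harc := (List.isChain_cons_cons.1 hch).1
    have hch' := (List.isChain_cons_cons.1 hch).2
    rw [List.getLast?_cons_cons] at hlast
    rw [arcC N f a h2 hc v] at harc
    obtain ⟨hbit, htgt⟩ := harc
    have hlog1 : 1 ≤ Nat.log2 c := (Nat.le_log2 (by omega)).2 (by omega)
    have hlogM : Nat.log2 c < M N + 1 := (Nat.log2_lt (by omega)).2 hc
    by_cases h4 : c < 4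
    · rw [if_pos h4] at htgt
      subst htgt
      have hl' : l' = [] := by
        cases l' with
        | nil => rfl
        | cons w l'' => exact absurd (List.isChain_cons_cons.1 hch').1 (arc_sink N f a true w)
      subst hl'
      have hlog : Nat.log2 c = 1 := log2_eq (by omega) (by norm_num; omega)
      constructor
      · intro i hi
        have hi0 : i = 0 := by omega
        subst hi0
        simpa using hbit
      · rw [ctail_eq, if_pos h4]
    · rw [if_neg h4] at htgt
      obtain ⟨w, hv, hw⟩ := htgt
      subst hv
      have hc2 : 2 ≤ c / 2 := by omega
      have hcc2 : c / 2 < 2 ^ (M N + 1) := by omega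
      have hwe : w = emb N (2 ^ K N + c / 2 - 3) := by
        apply Fin.ext
        rw [emb_val N (by have := pow_M1_le N; have := pow_K_pos N; unfold sz; omega)]
        omega
      subst hwe
      obtain ⟨hbits', hl'⟩ := ih (c/2) (by omega) hc2 hcc2 l' hch' hlast
      have hlogc : Nat.log2 c = Nat.log2 (c/2) + 1 := by
        conv_lhs => rw [Nat.log2_def]
        rw [if_pos (by omega : 2 ≤ c)]
      constructor
      · intro i hi
        cases i with
        | zero => simpa using hbit
        | succ i =>
          have hstep : c.testBit (i+1) = (c/2).testBit i := Nat.testBit_add_one c i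
          rw [hstep, hbits' i (by omega)]
          congr 1
          have := M_le_K N
          have := K_le N
          omega
      · rw [ctail_eq, if_neg h4, hl']

theorem soundT (a : Fin (N+1) → Bool) :
    ∀ l : List (Fin (sz N) ⊕ Bool), ∀ j, j < K N →
    List.Chain' ((prog N f).arc a)
      (Sum.inl (emb N (num (ext N a) j - 1)) :: l) →
    (Sum.inl (emb N (num (ext N a) j - 1)) :: l).getLast? = some (Sum.inr true) →
    f a = true ∧ l = tcan N a (j+1) := by
  intro l
  induction l with
  | nil =>
    intro j hj hch hlast
    simp at hlast
  | cons v l' ihl =>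
    intro j hj hch hlast
    have harc := (List.isChain_cons_cons.1 hch).1
    have hch' := (List.isChain_cons_cons.1 hch).2
    rw [List.getLast?_cons_cons] at hlast
    have ht1 : 1 ≤ num (ext N a) j := num_pos _ _
    have htlt : num (ext N a) j < 2 ^ (j+1) := num_lt _ _
    have htge : 2 ^ j ≤ num (ext N a) j := num_ge _ _
    have hjK : 2 ^ (j+1) ≤ 2 ^ K N := Nat.pow_le_pow_right (by norm_num) (by omega)
    by_cases h2 : 2 * (num (ext N a) j) + 1 < 2 ^ K N
    · -- internal tree node
      rw [arcT_int N f a ht1 h2 v] at harc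
      obtain ⟨w, hv, hw⟩ := harc
      subst hv
      rw [log2_num] at hw
      have hnum : num (ext N a) (j+1) = 2 * num (ext N a) j + (ext N a j).toNat := rfl
      have hb : (ext N a j).toNat ≤ 1 := Bool.toNat_le _
      have hj1 : j + 1 < K N := by
        have h5 := num_ge (ext N a) (j+1)
        have h6 : 2 ^ (j+1) < 2 ^ K N := by omega
        have := (Nat.pow_lt_pow_iff_right (a := 2) (by norm_num)).1 h6
        omega
      have hval : num (ext N a) (j+1) - 1 < sz N := by
        have := pow_K_pos N
        unfold sz; omega
      have hwe : w = emb N (num (ext N a) (j+1) - 1) := by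
        apply Fin.ext
        rw [emb_val N hval]
        omega
      subst hwe
      obtain ⟨hfa, hl⟩ := ihl (j+1) hj1 hch' hlast
      refine ⟨hfa, ?_⟩
      rw [tcan_eq, if_pos hj1, hl]
    · -- leaf of the tree
      have hjj : j = K N - 1 := by
        have hlt : 2 ^ K N < 2 ^ (j+2) := by
          have hp : (2:ℕ)^(j+2) = 2^(j+1) * 2 := pow_succ _ _
          omega
        have := (Nat.pow_lt_pow_iff_right (a := 2) (by norm_num)).1 hlt
        omega
      rw [arcT_leaf N f a ht1 (by omega) h2 v] at harc
      obtain ⟨t', htge', htlt', hf, htgt⟩ := harc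
      rw [log2_num] at hf
      by_cases h5 : 2 ≤ t'
      · rw [if_pos h5] at htgt
        obtain ⟨w, hv, hw⟩ := htgt
        subst hv
        have hwe : w = emb N (2 ^ K N + t' - 3) := by
          apply Fin.ext
          rw [emb_val N (by have := pow_M1_le N; have := pow_K_pos N; unfold sz; omega)]
          omega
        subst hwe
        obtain ⟨hbits, hl'⟩ := soundC N f a t' h5 htlt' l' hch' hlast
        have hM1 : 1 ≤ M N := by
          by_contra hM
          have hM0 : M N = 0 := by omega
          rw [hM0] at htlt'
          norm_num at htlt'
          omega
        have hlogt : Nat.log2 t' = M N := log2_eq htge' htlt'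
        rw [hlogt] at hbits
        have hKM := KM N
        have hbK : ∀ i, i < M N → t'.testBit i = ext N a (K N + i) := by
          intro i hi
          rw [hbits i hi]
          congr 1
          omega
        have hfa : f a = true := by
          rw [hjj] at hf
          rw [← asg_eq N a hbK]
          exact hf
        refine ⟨hfa, ?_⟩
        rw [tcan_eq, if_neg (by omega)]
        unfold entryL
        rw [if_neg (by omega)]
        have ht'e : t' = num (gy N a) (M N) := by
          apply eq_of_bits htge' htlt' (num_ge _ _) (num_lt _ _)
          intro i hi
          rw [hbK i hi]
          have h7 := testBit_num (gy N a) (M N) (M N - 1 - i) (by omega)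
          have h8 : M N - 1 - (M N - 1 - i) = i := by omega
          rw [h8] at h7
          rw [h7]
          unfold gy
          congr 1
          omega
        rw [← ht'e, hl']
      · rw [if_neg h5] at htgt
        subst htgt
        have hpM : (0:ℕ) < 2 ^ M N := Nat.two_pow_pos _
        have ht'1 : t' = 1 := by omega
        have hM0 : M N = 0 := by
          by_contra hM
          have h6 : (2:ℕ) ≤ 2 ^ M N := by
            calc (2:ℕ) = 2^1 := rfl
            _ ≤ 2 ^ M N := Nat.pow_le_pow_right (by norm_num) (by omega)
          omega
        have hl' : l' = [] := by
          cases l' with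
          | nil => rfl
          | cons w l'' => exact absurd (List.isChain_cons_cons.1 hch').1 (arc_sink N f a true w)
        subst hl'
        have hfa : f a = true := by
          rw [hjj, ht'1] at hf
          rw [← asg_eq N a (t' := 1) (by intro i hi; omega)]
          exact hf
        refine ⟨hfa, ?_⟩
        rw [tcan_eq, if_neg (by omega)]
        unfold entryL
        rw [if_pos hM0]

end BP310
namespace BP310

variable (N : ℕ) (f : (Fin (N+1) → Bool) → Bool)

theorem chainC (a : Fin (N+1) → Bool) :
    ∀ c, 2 ≤ c → c < 2 ^ (M N + 1) →
    (∀ i, i < Nat.log2 c → c.testBit i = ext N a (N + 1 - Nat.log2 c + i)) →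
    List.Chain' ((prog N f).arc a) (Sum.inl (emb N (2 ^ K N + c - 3)) :: ctail N c) := by
  intro c
  induction c using Nat.strong_induction_on with
  | _ c ih =>
  intro h2 hc hbits
  rw [ctail_eq]
  have hlog1 : 1 ≤ Nat.log2 c := (Nat.le_log2 (by omega)).2 (by omega)
  split_ifs with h4
  · unfold List.Chain'; erw [List.isChain_cons_cons]
    refine ⟨?_, List.isChain_singleton _⟩
    rw [arcC N f a h2 hc]
    exact ⟨by simpa using hbits 0 (by omega), by rw [if_pos h4]⟩
  · unfold List.Chain'; erw [List.isChain_cons_cons]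
    constructor
    · rw [arcC N f a h2 hc]
      refine ⟨by simpa using hbits 0 (by omega), ?_⟩
      rw [if_neg h4]
      refine ⟨emb N (2 ^ K N + c / 2 - 3), rfl, ?_⟩
      rw [emb_val N (by have := pow_M1_le N; have := pow_K_pos N; unfold sz; omega)]
      have := pow_K_pos N
      omega
    · apply ih (c/2) (by omega) (by omega) (by omega)
      intro i hi
      have hlogc : Nat.log2 c = Nat.log2 (c/2) + 1 := by
        conv_lhs => rw [Nat.log2_def]
        rw [if_pos (by omega : 2 ≤ c)]
      have h7 : (c/2).testBit i = c.testBit (i+1) := (Nat.testBit_add_one c i).symm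
      rw [h7, hbits (i+1) (by omega)]
      congr 1
      have hlM : Nat.log2 c < M N + 1 := (Nat.log2_lt (by omega)).2 hc
      have := M_le_K N
      have := K_le N
      omega

theorem gy_bits (a : Fin (N+1) → Bool) :
    ∀ i, i < M N → (num (gy N a) (M N)).testBit i = ext N a (K N + i) := by
  intro i hi
  have h7 := testBit_num (gy N a) (M N) (M N - 1 - i) (by omega)
  have h8 : M N - 1 - (M N - 1 - i) = i := by omega
  rw [h8] at h7
  rw [h7]
  unfold gy
  congr 1
  have := KM N
  omega

theorem chainT (a : Fin (N+1) → Bool) (hfa : f a = true) :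
    ∀ d j, j + d + 1 = K N →
    List.Chain' ((prog N f).arc a)
      (Sum.inl (emb N (num (ext N a) j - 1)) :: tcan N a (j+1)) := by
  intro d
  induction d with
  | zero =>
    intro j hjd
    have hj : j = K N - 1 := by omega
    rw [tcan_eq N a (j+1), if_neg (by omega)]
    unfold entryL
    have ht1 : 1 ≤ num (ext N a) j := num_pos _ _
    have htlt : num (ext N a) j < 2 ^ (j+1) := num_lt _ _
    have htge : 2 ^ j ≤ num (ext N a) j := num_ge _ _
    have h2K : 2 ^ K N = 2 ^ j * 2 := by rw [← pow_succ]; congr 1; omega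
    have hleaf : ¬ (2 * num (ext N a) j + 1 < 2 ^ K N) := by omega
    split_ifs with hM
    · unfold List.Chain'; erw [List.isChain_cons_cons]
      refine ⟨?_, List.isChain_singleton _⟩
      rw [arcT_leaf N f a ht1 (by omega) hleaf]
      refine ⟨1, by rw [hM]; norm_num, by rw [hM]; norm_num, ?_,
        by rw [if_neg (by omega)]⟩
      rw [log2_num, hj]
      rw [asg_eq N a (t' := 1) (by intro i hi; omega)]
      exact hfa
    · unfold List.Chain'; erw [List.isChain_cons_cons]
      have hM1 : 1 ≤ M N := by omega
      have hnum_ge := num_ge (gy N a) (M N)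
      have hnum_lt := num_lt (gy N a) (M N)
      have hnum2 : 2 ≤ num (gy N a) (M N) := by
        have h9 : (2:ℕ)^1 ≤ 2 ^ M N := Nat.pow_le_pow_right (by norm_num) hM1
        norm_num at h9
        omega
      constructor
      · rw [arcT_leaf N f a ht1 (by omega) hleaf]
        refine ⟨num (gy N a) (M N), hnum_ge, hnum_lt, ?_, ?_⟩
        · rw [log2_num, hj]
          rw [asg_eq N a (gy_bits N a)]
          exact hfa
        · rw [if_pos hnum2]
          refine ⟨emb N (2 ^ K N + num (gy N a) (M N) - 3), rfl, ?_⟩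
          rw [emb_val N (by have := pow_M1_le N; have := pow_K_pos N; unfold sz; omega)]
          have := pow_K_pos N
          omega
      · apply chainC N f a _ hnum2 hnum_lt
        intro i hi
        rw [log2_num] at hi ⊢
        rw [gy_bits N a i hi]
        congr 1
        have := KM N
        omega
  | succ d ihd =>
    intro j hjd
    rw [tcan_eq N a (j+1), if_pos (by omega)]
    unfold List.Chain'; erw [List.isChain_cons_cons]
    have hint : 2 * (num (ext N a) j) + 1 < 2 ^ K N := by
      have := num_lt (ext N a) j
      have h8 : (2:ℕ)^(j+2) ≤ 2 ^ K N := Nat.pow_le_pow_right (by norm_num) (by omega)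
      have hp : (2:ℕ)^(j+2) = 2^(j+1) * 2 := pow_succ _ _
      omega
    constructor
    · rw [arcT_int N f a (num_pos _ _) hint]
      refine ⟨emb N (num (ext N a) (j+1) - 1), rfl, ?_⟩
      rw [log2_num]
      have hnum : num (ext N a) (j+1) = 2 * num (ext N a) j + (ext N a j).toNat := rfl
      have hb : (ext N a j).toNat ≤ 1 := Bool.toNat_le _
      have hp1 := num_pos (ext N a) (j+1)
      rw [emb_val N (by have := pow_K_pos N; unfold sz; omega)]
      omega
    · exact ihd (j+1) (by omega)

def key : (Fin (sz N) ⊕ Bool) → ℕ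
  | Sum.inl u =>
      if u.val + 1 < 2 ^ K N then Nat.log2 (u.val + 1)
      else (N + 1) - Nat.log2 (u.val + 3 - 2 ^ K N)
  | Sum.inr _ => N + 1

theorem key_inl (u : Fin (sz N)) : key N (Sum.inl u) =
    (if u.val + 1 < 2 ^ K N then Nat.log2 (u.val + 1)
     else (N + 1) - Nat.log2 (u.val + 3 - 2 ^ K N)) := rfl

theorem key_inr (b : Bool) : key N (Sum.inr b) = N + 1 := rfl

theorem arc_key (a : Fin (N+1) → Bool) :
    ∀ x y, (prog N f).arc a x y → key N x < key N y := by
  intro x y h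
  cases x with
  | inr b => exact absurd h (arc_sink N f a b y)
  | inl u =>
    erw [arc_iff] at h
    unfold arcb at h
    by_cases h1 : u.val + 1 < 2 ^ K N
    · rw [if_pos h1] at h
      have hkx : key N (Sum.inl u) = Nat.log2 (u.val + 1) := by
        erw [key_inl, if_pos h1]
      by_cases h2 : 2 * (u.val+1) + 1 < 2 ^ K N
      · rw [if_pos h2] at h
        obtain ⟨w, hv, hw⟩ := h
        subst hv
        have hb := Bool.toNat_le (a (varf N u))
        have hky : key N (Sum.inl w) = Nat.log2 (w.val + 1) := by
          erw [key_inl, if_pos (by omega)]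
        erw [hkx, hky]
        have hl := Nat.log2_self_le (show u.val + 1 ≠ 0 by omega)
        have hl2 := Nat.lt_log2_self (n := u.val + 1)
        have heq : Nat.log2 (w.val+1) = Nat.log2 (u.val+1) + 1 := by
          apply log2_eq
          · have hp : (2:ℕ)^(Nat.log2 (u.val+1)+1) = 2^(Nat.log2 (u.val+1)) * 2 :=
              pow_succ _ _
            omega
          · have hp : (2:ℕ)^(Nat.log2 (u.val+1)+1+1) = 2^(Nat.log2 (u.val+1)+1) * 2 :=
              pow_succ _ _
            omega
        omega
      · rw [if_neg h2] at h
        obtain ⟨t', hge, hlt, _, htgt⟩ := h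
        have hkxle : Nat.log2 (u.val + 1) < K N := (Nat.log2_lt (by omega)).2 h1
        by_cases h5 : 2 ≤ t'
        · rw [if_pos h5] at htgt
          obtain ⟨w, hv, hw⟩ := htgt
          subst hv
          have hky : key N (Sum.inl w) = (N+1) - Nat.log2 (w.val + 3 - 2 ^ K N) := by
            erw [key_inl, if_neg (by have := pow_K_pos N; omega)]
          have hwt : w.val + 3 - 2 ^ K N = t' := by omega
          erw [hkx, hky, hwt]
          have hlgt : Nat.log2 t' < M N + 1 := (Nat.log2_lt (by omega)).2 hlt
          have := KM N
          omega
        · rw [if_neg h5] at htgt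
          subst htgt
          erw [hkx, key_inr]
          have := K_le N
          omega
    · rw [if_neg h1] at h
      obtain ⟨hlt, _, htgt⟩ := h
      have hc2 : 2 ≤ u.val + 3 - 2 ^ K N := by omega
      have hkx : key N (Sum.inl u) = (N+1) - Nat.log2 (u.val + 3 - 2 ^ K N) := by
        erw [key_inl, if_neg h1]
      have hlog1 : 1 ≤ Nat.log2 (u.val + 3 - 2 ^ K N) :=
        (Nat.le_log2 (by omega)).2 (by omega)
      by_cases h4 : u.val + 3 - 2 ^ K N < 4
      · rw [if_pos h4] at htgt
        subst htgt
        erw [hkx, key_inr]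
        omega
      · rw [if_neg h4] at htgt
        obtain ⟨w, hv, hw⟩ := htgt
        subst hv
        have hky : key N (Sum.inl w) = (N+1) - Nat.log2 (w.val + 3 - 2 ^ K N) := by
          erw [key_inl, if_neg (by have := pow_K_pos N; omega)]
        have hwt : w.val + 3 - 2 ^ K N = (u.val + 3 - 2 ^ K N)/2 := by omega
        erw [hkx, hky, hwt]
        have hstep : Nat.log2 (u.val + 3 - 2 ^ K N) =
            Nat.log2 ((u.val + 3 - 2 ^ K N)/2) + 1 := by
          conv_lhs => rw [Nat.log2_def]
          rw [if_pos (by omega)]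
        have hlgle : Nat.log2 (u.val + 3 - 2 ^ K N) < M N + 1 :=
          (Nat.log2_lt (by omega)).2 hlt
        have := KM N; have := M_le_K N; have := K_le N
        omega

theorem nodup_of_chain (a : Fin (N+1) → Bool) (l : List (Fin (sz N) ⊕ Bool))
    (h : List.Chain' ((prog N f).arc a) l) : l.Nodup := by
  have h2 : List.Chain' (fun x y => key N x < key N y) l :=
    List.IsChain.imp (fun x y hxy => arc_key N f a x y hxy) h
  haveI : IsTrans (Fin (sz N) ⊕ Bool) (fun x y => key N x < key N y) :=
    ⟨fun _ _ _ h1 h2 => lt_trans h1 h2⟩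
  have h3 := List.isChain_iff_pairwise.1 h2
  exact h3.imp fun {x y} hxy heq => by subst heq; exact absurd hxy (lt_irrefl _)

end BP310
namespace BP310

variable (N : ℕ) (f : (Fin (N+1) → Bool) → Bool)

theorem start_eq (a : Fin (N+1) → Bool) :
    (prog N f).start = Sum.inl (emb N (num (ext N a) 0 - 1)) := rfl

theorem canon_chain (a : Fin (N+1) → Bool) (hfa : f a = true) :
    List.Chain' ((prog N f).arc a) (canon N a) := by
  unfold canon
  rw [tcan_eq N a 0, if_pos (show 0 < K N by have := K_pos N; omega)]
  exact chainT N f a hfa (K N - 1) 0 (by have := K_pos N; omega)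

theorem canon_spec (a : Fin (N+1) → Bool) (hfa : f a = true) :
    canon N a ∈ (prog N f).accPaths a := by
  have hch := canon_chain N f a hfa
  refine ⟨nodup_of_chain N f a _ hch, hch, ?_, ?_⟩
  · unfold canon
    rw [tcan_eq N a 0, if_pos (show 0 < K N by have := K_pos N; omega)]
    rfl
  · unfold canon
    exact tcan_last N a (K N) 0 (by omega)

theorem accPaths_char (a : Fin (N+1) → Bool) :
    (prog N f).accPaths a = if f a = true then {canon N a} else ∅ := by
  ext l
  constructor
  · rintro ⟨hnd, hch, hhead, hlast⟩
    cases l with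
    | nil => simp at hhead
    | cons x l' =>
      have hx : x = (prog N f).start := by simpa using hhead
      subst hx
      rw [start_eq N f a] at hch hlast
      obtain ⟨hfa, hl⟩ := soundT N f a l' 0 (K_pos N) hch hlast
      rw [if_pos hfa]
      rw [hl]
      show _ ∈ ({canon N a} : Set _)
      erw [Set.mem_singleton_iff]
      unfold canon
      rw [tcan_eq N a 0, if_pos (show 0 < K N by have := K_pos N; omega)]
      rfl
  · intro hl
    split_ifs at hl with hfa
    · erw [Set.mem_singleton_iff] at hl
      subst hl
      exact canon_spec N f a hfa
    · exact absurd hl (Set.notMem_empty l)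

theorem computesPBP : (prog N f).ComputesPBP f := by
  intro a
  rw [accPaths_char]
  by_cases hfa : f a = true
  · rw [if_pos hfa]; erw [Set.ncard_singleton]
    simp [hfa]
  · rw [if_neg hfa, Set.ncard_empty]
    constructor
    · intro h; exact absurd h hfa
    · intro h; rw [Nat.odd_iff] at h; omega

theorem computesNBP : (prog N f).ComputesNBP f := by
  intro a
  constructor
  · intro hfa
    have hch := canon_chain N f a hfa
    have hlast : (canon N a).getLast? = some (Sum.inr true) :=
      tcan_last N a (K N) 0 (by omega)
    have hcanon : canon N a = (prog N f).start :: tcan N a 1 := by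
      unfold canon
      rw [tcan_eq N a 0, if_pos (show 0 < K N by have := K_pos N; omega)]
      rfl
    rw [hcanon] at hch hlast
    apply List.relationReflTransGen_of_exists_isChain_cons (tcan N a 1)
    · exact hch
    · have hne : (prog N f).start :: tcan N a 1 ≠ [] := by simp
      erw [List.getLast?_eq_getLast hne] at hlast
      exact Option.some.inj hlast
  · intro hreach
    obtain ⟨l, hchain, hlast⟩ := List.exists_isChain_cons_of_relationReflTransGen hreach
    have hch : List.Chain' ((prog N f).arc a) ((prog N f).start :: l) := hchain
    have hlast' : ((prog N f).start :: l).getLast? = some (Sum.inr true) := by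
      rw [List.getLast?_eq_getLast (l := (prog N f).start :: l) (by simp), hlast]
    rw [start_eq N f a] at hch hlast'
    exact (soundT N f a l 0 (K_pos N) hch hlast').1

end BP310
namespace BP310

def zeroProg (c : Bool) : BranchProg 0 where
  size := 0
  start := Sum.inr c
  A0 := fun _ _ => False
  A1 := fun _ _ => False
  var := fun u => u
  A0_ne_start := fun _ _ h => h.elim
  A1_ne_start := fun _ _ h => h.elim

theorem zero_arc (c : Bool) (a : Fin 0 → Bool) (x y) : ¬ (zeroProg c).arc a x y := by
  cases x with
  | inl u => exact fun h => by rcases h with ⟨_, h⟩ | ⟨_, h⟩ <;> exact h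
  | inr b => exact fun h => h

theorem zeroNBP (f0 : (Fin 0 → Bool) → Bool) :
    (zeroProg (f0 (fun i => i.elim0))).ComputesNBP f0 := by
  intro a
  have ha : a = (fun i => i.elim0) := funext fun i => i.elim0
  constructor
  · intro h
    rw [ha] at h
    show Relation.ReflTransGen _ (Sum.inr (f0 (fun i => i.elim0))) _
    rw [h]
  · intro h
    rcases Relation.ReflTransGen.cases_head h with heq | ⟨z, hz, _⟩
    · have hc := Sum.inr.inj heq
      rw [ha]
      exact hc
    · exact absurd hz (zero_arc _ a _ z)

theorem zero_acc (c : Bool) (a : Fin 0 → Bool) :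
    (zeroProg c).accPaths a = if c = true then {[Sum.inr true]} else ∅ := by
  ext l
  constructor
  · rintro ⟨hnd, hch, hhead, hlast⟩
    cases l with
    | nil => simp at hhead
    | cons x l' =>
      have hx : x = Sum.inr c := Option.some.inj hhead
      subst hx
      have hl' : l' = [] := by
        cases l' with
        | nil => rfl
        | cons y l'' => exact absurd (List.isChain_cons_cons.1 hch).1 (zero_arc c a _ y)
      subst hl'
      simp only [List.getLast?_singleton, Option.some.injEq] at hlast
      have hc : c = true := Sum.inr.inj hlast
      rw [if_pos hc, Set.mem_singleton_iff, hc]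
  · intro hl
    split_ifs at hl with hc
    · rw [Set.mem_singleton_iff] at hl
      subst hl
      refine ⟨List.nodup_singleton _, List.isChain_singleton _, ?_, rfl⟩
      show some (Sum.inr true) = some (zeroProg c).start
      rw [hc]
      rfl
    · exact absurd hl (Set.notMem_empty l)

theorem zeroPBP (f0 : (Fin 0 → Bool) → Bool) :
    (zeroProg (f0 (fun i => i.elim0))).ComputesPBP f0 := by
  intro a
  have ha : a = (fun i => i.elim0) := funext fun i => i.elim0
  rw [zero_acc]
  by_cases hc : f0 (fun i => i.elim0) = true
  · rw [if_pos hc, Set.ncard_singleton]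
    rw [ha]
    simp [hc]
  · rw [if_neg hc, Set.ncard_empty]
    constructor
    · intro h; rw [ha] at h; exact absurd h hc
    · intro h; rw [Nat.odd_iff] at h; omega

end BP310

theorem stmt10 (n : ℕ) (f : (Fin n → Bool) → Bool) :
    NBPc f ≤ 3 * 2^((n+1)/2) ∧ PBPc f ≤ 3 * 2^((n+1)/2) := by
  cases n with
  | zero =>
    constructor
    · exact le_trans (Nat.sInf_le ⟨BP310.zeroProg _, rfl, BP310.zeroNBP f⟩) (by show (0:ℕ) ≤ 3 * 2^((0+1)/2); norm_num)
    · exact le_trans (Nat.sInf_le ⟨BP310.zeroProg _, rfl, BP310.zeroPBP f⟩) (by show (0:ℕ) ≤ 3 * 2^((0+1)/2); norm_num)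
  | succ N =>
    constructor
    · exact Nat.sInf_le ⟨BP310.prog N f, rfl, BP310.computesNBP N f⟩
    · exact Nat.sInf_le ⟨BP310.prog N f, rfl, BP310.computesPBP N f⟩
end

section
/- For all n, s ∈ ℕ with s ≥ 3 and n ≥ 2·⌊log₂(s/3)⌋, we have N_sem(n, s) > 2^(s²/36) and ⊕_sem(n, s) > 2^(s²/36). -/
set_option maxHeartbeats 1000000

namespace S11

lemma chain_rtg {α : Type*} {r : α → α → Prop} :
    ∀ (l : List α), l.Chain' r → ∀ x y, l.head? = some x → l.getLast? = some y →
      Relation.ReflTransGen r x y := by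
  intro l
  induction l with
  | nil => intro _ x y h; simp at h
  | cons u t ih =>
    intro hc x y hh hl
    simp only [List.head?_cons, Option.some.injEq] at hh
    subst hh
    match t with
    | [] =>
      simp only [List.getLast?_singleton, Option.some.injEq] at hl
      subst hl; exact Relation.ReflTransGen.refl
    | z :: t' =>
      rw [List.getLast?_cons_cons] at hl
      unfold List.Chain' at hc; rw [List.isChain_cons_cons] at hc
      exact Relation.ReflTransGen.head hc.1 (ih hc.2 z y rfl hl)

lemma rtg_chain {α : Type*} {r : α → α → Prop} {x y : α}
    (h : Relation.ReflTransGen r x y) :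
    ∃ l : List α, l.Chain' r ∧ l.head? = some x ∧ l.getLast? = some y := by
  induction h with
  | refl => exact ⟨[x], List.isChain_singleton _, rfl, rfl⟩
  | tail _ hbc ih =>
    obtain ⟨l, hc, hh, hl⟩ := ih
    refine ⟨l ++ [_], ?_, ?_, List.getLast?_concat⟩
    · unfold List.Chain'; rw [List.isChain_append]
      refine ⟨hc, List.isChain_singleton _, ?_⟩
      intro u hu z hz
      simp only [List.head?_cons, Option.some.injEq] at hz
      rw [hu, Option.some.injEq] at hl
      subst hl
      simp only [Option.mem_def, Option.some.injEq] at hz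
      subst hz; exact hbc
    · cases l with
      | nil => simp at hh
      | cons a t => simpa using hh

lemma chain_sink {α : Type*} {r : α → α → Prop} {x : α} (hx : ∀ z, ¬ r x z) :
    ∀ (l : List α), l.Chain' r → l.head? = some x → l = [x] := by
  intro l hc hh
  match l with
  | [] => simp at hh
  | [u] => simp_all
  | u :: z :: t =>
    simp only [List.head?_cons, Option.some.injEq] at hh
    subst hh
    unfold List.Chain' at hc; rw [List.isChain_cons_cons] at hc
    exact absurd hc.1 (hx z)

end S11

section Const
open S11

def constBP (n : ℕ) (c : Bool) : BranchProg n where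
  size := 0
  start := Sum.inr c
  A0 := fun _ _ => False
  A1 := fun _ _ => False
  var := Fin.elim0
  A0_ne_start := fun _ _ h => absurd h not_false
  A1_ne_start := fun _ _ h => absurd h not_false

lemma constBP_arc (n : ℕ) (c : Bool) (a : Fin n → Bool) (u v : Fin 0 ⊕ Bool) :
    ¬ (constBP n c).arc a u v := by
  cases u with
  | inl u => exact u.elim0
  | inr b => exact not_false

lemma constBP_computesNBP (n : ℕ) (c : Bool) :
    (constBP n c).ComputesNBP (fun _ => c) := by
  intro a
  cases c with
  | true => exact iff_of_true rfl Relation.ReflTransGen.refl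
  | false =>
    simp only [Bool.false_eq_true, false_iff]
    intro h
    rcases Relation.ReflTransGen.cases_head h with h | ⟨z, hz, _⟩
    · exact Bool.false_ne_true (Sum.inr.inj h)
    · exact constBP_arc n false a _ z hz

lemma constBP_computesPBP (n : ℕ) (c : Bool) :
    (constBP n c).ComputesPBP (fun _ => c) := by
  intro a
  have hsink : ∀ (x : Fin 0 ⊕ Bool) z, ¬ (constBP n c).arc a x z := fun x z => constBP_arc n c a x z
  cases c with
  | true =>
    have : (constBP n true).accPaths a = {[Sum.inr true]} := by
      ext l
      constructor
      · rintro ⟨hnd, hc, hh, hl⟩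
        exact chain_sink (hsink _) l hc hh
      · rintro rfl
        exact ⟨by simp, List.isChain_singleton _, rfl, rfl⟩
    rw [this]
    simp [Set.ncard_singleton]
  | false =>
    have : (constBP n false).accPaths a = ∅ := by
      ext l
      simp only [Set.mem_empty_iff_false, iff_false]
      rintro ⟨hnd, hc, hh, hl⟩
      have := chain_sink (hsink _) l hc hh
      subst this
      simp only [List.getLast?_singleton, Option.some.injEq] at hl
      exact Bool.false_ne_true (Sum.inr.inj hl)
    rw [this]
    simp
end Const

namespace S11

abbrev VX (M : ℕ) := Σ j : Fin (M+1), (Fin (j:ℕ) → Bool)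
abbrev VY (M : ℕ) := Σ j : Fin (M+1), (Fin ((j:ℕ)+1) → Bool)
abbrev Vtx (M : ℕ) := VX M ⊕ VY M

def startV (M : ℕ) : Vtx M := Sum.inl ⟨⟨0, Nat.succ_pos M⟩, fun i => i.elim0⟩

def theVar {M n : ℕ} (hn : 2*(M+1) ≤ n) : Vtx M → Fin n
  | Sum.inl ⟨j, _⟩ => ⟨(j:ℕ), by have := j.isLt; omega⟩
  | Sum.inr ⟨j, _⟩ => ⟨(M+1) + (M - (j:ℕ)), by have := j.isLt; omega⟩

def theA {M : ℕ} (g : (Fin (M+1) → Bool) → (Fin (M+1) → Bool) → Bool) (b : Bool) :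
    Vtx M → (Vtx M ⊕ Bool) → Prop
  | Sum.inl ⟨j, w⟩, z =>
      (∃ h : (j:ℕ)+1 < M+1, z = Sum.inl (Sum.inl ⟨⟨(j:ℕ)+1, h⟩, Fin.snoc w b⟩))
      ∨ ((j:ℕ) = M ∧ ∃ v : Fin (M+1) → Bool,
          g (fun i => if h : (i:ℕ) < (j:ℕ) then w ⟨(i:ℕ), h⟩ else b) v = true ∧
          z = Sum.inl (Sum.inr ⟨⟨M, Nat.lt_succ_self M⟩, v⟩))
  | Sum.inr ⟨j, t⟩, z =>
      t ⟨0, Nat.succ_pos _⟩ = b ∧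
      ((∃ h : 0 < (j:ℕ), z = Sum.inl (Sum.inr ⟨⟨(j:ℕ)-1, by have := j.isLt; omega⟩,
           fun i => t ⟨(i:ℕ)+1, by have h2 : (i:ℕ) < ((j:ℕ)-1)+1 := i.isLt; omega⟩⟩))
       ∨ ((j:ℕ) = 0 ∧ z = Sum.inr true))

def preArc {M n : ℕ} (g : (Fin (M+1) → Bool) → (Fin (M+1) → Bool) → Bool)
    (hn : 2*(M+1) ≤ n) (a : Fin n → Bool) :
    (Vtx M ⊕ Bool) → (Vtx M ⊕ Bool) → Prop
  | Sum.inl u, z => (a (theVar hn u) = false ∧ theA g false u z)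
      ∨ (a (theVar hn u) = true ∧ theA g true u z)
  | Sum.inr _, _ => False

def Xa {M n : ℕ} (hn : 2*(M+1) ≤ n) (a : Fin n → Bool) : Fin (M+1) → Bool :=
  fun i => a ⟨(i:ℕ), by have := i.isLt; omega⟩

def Ya {M n : ℕ} (hn : 2*(M+1) ≤ n) (a : Fin n → Bool) : Fin (M+1) → Bool :=
  fun i => a ⟨(M+1)+(i:ℕ), by have := i.isLt; omega⟩

section Lemmas
variable {M n : ℕ} {g : (Fin (M+1) → Bool) → (Fin (M+1) → Bool) → Bool}
  {hn : 2*(M+1) ≤ n} {a : Fin n → Bool}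

lemma preArc_inl_iff {u : Vtx M} {z : Vtx M ⊕ Bool} :
    preArc g hn a (Sum.inl u) z ↔ theA g (a (theVar hn u)) u z := by
  cases h : a (theVar hn u) <;> simp [preArc, h]

lemma var_x (j : Fin (M+1)) (w : Fin (j:ℕ) → Bool) :
    a (theVar hn (Sum.inl ⟨j, w⟩)) = Xa hn a j := rfl

lemma var_y (j : Fin (M+1)) (t : Fin ((j:ℕ)+1) → Bool) :
    a (theVar hn (Sum.inr ⟨j, t⟩)) = Ya hn a ⟨M - (j:ℕ), by have := j.isLt; omega⟩ := rfl

lemma preArc_inr (b : Bool) (z : Vtx M ⊕ Bool) : ¬ preArc g hn a (Sum.inr b) z :=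
  not_false

lemma vy_eq {j1 j2 : Fin (M+1)} (hj : j1 = j2)
    (t1 : Fin ((j1:ℕ)+1) → Bool) (t2 : Fin ((j2:ℕ)+1) → Bool)
    (ht : ∀ (k : ℕ) (hk1 : k < (j1:ℕ)+1) (hk2 : k < (j2:ℕ)+1), t1 ⟨k,hk1⟩ = t2 ⟨k,hk2⟩) :
    (Sum.inl (Sum.inr ⟨j1, t1⟩) : Vtx M ⊕ Bool) = Sum.inl (Sum.inr ⟨j2, t2⟩) := by
  subst hj
  have h : t1 = t2 := funext fun i => ht i.val i.isLt i.isLt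
  rw [h]

lemma vx_eq {j1 j2 : Fin (M+1)} (hj : j1 = j2)
    (t1 : Fin (j1:ℕ) → Bool) (t2 : Fin (j2:ℕ) → Bool)
    (ht : ∀ (k : ℕ) (hk1 : k < (j1:ℕ)) (hk2 : k < (j2:ℕ)), t1 ⟨k,hk1⟩ = t2 ⟨k,hk2⟩) :
    (Sum.inl (Sum.inl ⟨j1, t1⟩) : Vtx M ⊕ Bool) = Sum.inl (Sum.inl ⟨j2, t2⟩) := by
  subst hj
  have h : t1 = t2 := funext fun i => ht i.val i.isLt i.isLt
  rw [h]

lemma lemYval : ∀ (l : List (Vtx M ⊕ Bool)), l.Chain' (preArc g hn a) →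
    l.getLast? = some (Sum.inr true) →
    ∀ (q : VY M), l.head? = some (Sum.inl (Sum.inr q)) →
    ∀ i : Fin ((q.1:ℕ)+1), q.2 i =
      Ya hn a ⟨M - (q.1:ℕ) + (i:ℕ), by have := q.1.isLt; have := i.isLt; omega⟩ := by
  intro l
  induction l with
  | nil => intro _ _ q hq; simp at hq
  | cons u r ih =>
    intro hc hl q hh
    simp only [List.head?_cons, Option.some.injEq] at hh
    subst hh
    obtain ⟨j, t⟩ := q
    dsimp only
    intro i
    cases r with
    | nil => simp at hl
    | cons z r' =>
      rw [List.getLast?_cons_cons] at hl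
      unfold List.Chain' at hc; rw [List.isChain_cons_cons] at hc
      obtain ⟨h1, h2⟩ := hc
      rw [preArc_inl_iff] at h1
      simp only [theA] at h1
      obtain ⟨ht0, hbr⟩ := h1
      rcases hbr with ⟨hj, hz⟩ | ⟨hj, hz⟩
      · -- j > 0, step down
        subst hz
        have ht' := ih h2 hl _ rfl
        dsimp only at ht'
        by_cases hi : (i:ℕ) = 0
        · have h3 : t i = t ⟨0, Nat.succ_pos _⟩ := congrArg t (Fin.ext hi)
          rw [h3, ht0]
          have hv : M - (j:ℕ) = M - (j:ℕ) + (i:ℕ) := by omega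
          exact (var_y j t).trans (congrArg (Ya hn a) (Fin.ext hv))
        · have hik := i.isLt
          have hk : (i:ℕ) - 1 < ((j:ℕ)-1)+1 := by omega
          have hkk : ((i:ℕ)-1)+1 < (j:ℕ)+1 := by omega
          have e1 : t ⟨((i:ℕ)-1)+1, hkk⟩ =
              Ya hn a ⟨M - ((j:ℕ)-1) + ((i:ℕ)-1), by have := j.isLt; omega⟩ :=
            ht' ⟨(i:ℕ)-1, hk⟩
          have hv2 : (i:ℕ) = ((i:ℕ)-1)+1 := by omega
          have e2 : t i = t ⟨((i:ℕ)-1)+1, hkk⟩ := congrArg t (Fin.ext hv2)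
          rw [e2, e1]
          have hv3 : M - ((j:ℕ)-1) + ((i:ℕ)-1) = M - (j:ℕ) + (i:ℕ) := by omega
          exact congrArg (Ya hn a) (Fin.ext hv3)
      · -- j = 0
        have hi : (i:ℕ) = 0 := by have := i.isLt; omega
        have h3 : t i = t ⟨0, Nat.succ_pos _⟩ := congrArg t (Fin.ext hi)
        rw [h3, ht0]
        have hv : M - (j:ℕ) = M - (j:ℕ) + (i:ℕ) := by omega
        exact (var_y j t).trans (congrArg (Ya hn a) (Fin.ext hv))

lemma lemU : ∀ (l1 : List (Vtx M ⊕ Bool)), l1.Chain' (preArc g hn a) →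
    l1.getLast? = some (Sum.inr true) →
    ∀ (z : Vtx M ⊕ Bool) (l2 : List (Vtx M ⊕ Bool)), l2.Chain' (preArc g hn a) →
    l2.getLast? = some (Sum.inr true) →
    l1.head? = some z → l2.head? = some z → l1 = l2 := by
  intro l1
  induction l1 with
  | nil => intro _ _ z l2 _ _ h; simp at h
  | cons u r1 ih =>
    intro hc1 hl1 z l2 hc2 hl2 hh1 hh2
    simp only [List.head?_cons, Option.some.injEq] at hh1
    subst hh1
    cases l2 with
    | nil => simp at hh2
    | cons u2 r2 =>
      simp only [List.head?_cons, Option.some.injEq] at hh2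
      subst hh2
      cases hu : u2 with
      | inr b =>
        subst hu
        have e1 := chain_sink (fun z => preArc_inr (g := g) (hn := hn) (a := a) b z) _ hc1 rfl
        have e2 := chain_sink (fun z => preArc_inr (g := g) (hn := hn) (a := a) b z) _ hc2 rfl
        rw [e1, e2]
      | inl node =>
        subst hu
        cases r1 with
        | nil => simp at hl1
        | cons w1 r1' =>
        cases r2 with
        | nil => simp at hl2
        | cons w2 r2' =>
        rw [List.getLast?_cons_cons] at hl1 hl2
        unfold List.Chain' at hc1 hc2; rw [List.isChain_cons_cons] at hc1 hc2
        obtain ⟨ha1, hc1⟩ := hc1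
        obtain ⟨ha2, hc2⟩ := hc2
        rw [preArc_inl_iff] at ha1 ha2
        have hw : w1 = w2 := by
          cases node with
          | inl q =>
            obtain ⟨j, w⟩ := q
            simp only [theA] at ha1 ha2
            rcases ha1 with ⟨h1, rfl⟩ | ⟨hj1, v1, hg1, rfl⟩ <;>
              rcases ha2 with ⟨h2, rfl⟩ | ⟨hj2, v2, hg2, rfl⟩
            · rfl
            · omega
            · omega
            · have e1 := lemYval _ hc1 hl1 ⟨⟨M, Nat.lt_succ_self M⟩, v1⟩ rfl
              have e2 := lemYval _ hc2 hl2 ⟨⟨M, Nat.lt_succ_self M⟩, v2⟩ rfl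
              dsimp only at e1 e2
              have : v1 = v2 := funext fun i => (e1 i).trans (e2 i).symm
              rw [this]
          | inr q =>
            obtain ⟨j, t⟩ := q
            simp only [theA] at ha1 ha2
            obtain ⟨_, hbr1⟩ := ha1
            obtain ⟨_, hbr2⟩ := ha2
            rcases hbr1 with ⟨h1, rfl⟩ | ⟨hj1, rfl⟩ <;>
              rcases hbr2 with ⟨h2, rfl⟩ | ⟨hj2, rfl⟩
            · rfl
            · omega
            · omega
            · rfl
        subst hw
        have := ih hc1 hl1 w1 (w1 :: r2') hc2 hl2 rfl rfl
        rw [this]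

lemma lemS : ∀ (l : List (Vtx M ⊕ Bool)), l.Chain' (preArc g hn a) →
    l.getLast? = some (Sum.inr true) →
    ∀ (q : VX M), l.head? = some (Sum.inl (Sum.inl q)) →
    (∀ i : Fin (q.1:ℕ), q.2 i = Xa hn a ⟨(i:ℕ), by have := i.isLt; have := q.1.isLt; omega⟩) →
    g (Xa hn a) (Ya hn a) = true := by
  intro l
  induction l with
  | nil => intro _ _ q hq; simp at hq
  | cons u r ih =>
    intro hc hl q hh hpre
    simp only [List.head?_cons, Option.some.injEq] at hh
    subst hh
    obtain ⟨j, w⟩ := q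
    dsimp only at hpre
    cases r with
    | nil => simp at hl
    | cons z r' =>
      rw [List.getLast?_cons_cons] at hl
      unfold List.Chain' at hc; rw [List.isChain_cons_cons] at hc
      obtain ⟨h1, h2⟩ := hc
      rw [preArc_inl_iff] at h1
      simp only [theA] at h1
      rcases h1 with ⟨h, rfl⟩ | ⟨hjM, v, hgv, rfl⟩
      · -- internal step
        refine ih h2 hl ⟨⟨(j:ℕ)+1, h⟩, Fin.snoc w (a (theVar hn (Sum.inl ⟨j, w⟩)))⟩ rfl ?_
        dsimp only
        intro i
        refine Fin.lastCases ?_ ?_ i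
        · rw [Fin.snoc_last]
          have hv : (j:ℕ) = ((Fin.last (j:ℕ)):ℕ) := by simp
          exact (var_x j w).trans (congrArg (Xa hn a) (Fin.ext hv))
        · intro i'
          rw [Fin.snoc_castSucc]
          have hv : (i':ℕ) = ((i'.castSucc :Fin ((j:ℕ)+1)):ℕ) := by simp
          exact (hpre i').trans (congrArg (Xa hn a) (Fin.ext hv))
      · -- junction step
        have hXeq : (fun i : Fin (M+1) =>
            if h : (i:ℕ) < (j:ℕ) then w ⟨(i:ℕ), h⟩ else a (theVar hn (Sum.inl ⟨j, w⟩)))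
            = Xa hn a := by
          funext i
          by_cases h : (i:ℕ) < (j:ℕ)
          · rw [dif_pos h]
            exact (hpre ⟨(i:ℕ), h⟩).trans (congrArg (Xa hn a) (Fin.ext rfl))
          · rw [dif_neg h]
            have hv : (j:ℕ) = (i:ℕ) := by have := i.isLt; have := j.isLt; omega
            exact (var_x j w).trans (congrArg (Xa hn a) (Fin.ext hv))
        have e1 := lemYval _ h2 hl ⟨⟨M, Nat.lt_succ_self M⟩, v⟩ rfl
        dsimp only at e1
        have hYeq : v = Ya hn a := by
          funext i
          rw [e1 i]
          have hv : M - M + (i:ℕ) = (i:ℕ) := by omega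
          exact congrArg (Ya hn a) (Fin.ext hv)
        rw [← hXeq, ← hYeq]
        exact hgv

lemma exY : ∀ (j : ℕ) (hj : j < M+1),
    ∃ l : List (Vtx M ⊕ Bool), l.Chain' (preArc g hn a) ∧
      l.head? = some (Sum.inl (Sum.inr ⟨⟨j, hj⟩,
        fun i => Ya hn a ⟨M - j + (i:ℕ), by have h2 : (i:ℕ) < j+1 := i.isLt; omega⟩⟩)) ∧
      l.getLast? = some (Sum.inr true) ∧ l.Nodup ∧
      ∀ z ∈ l, z = Sum.inr true ∨ ∃ q : VY M, z = Sum.inl (Sum.inr q) ∧ (q.1:ℕ) ≤ j := by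
  intro j
  induction j with
  | zero =>
    intro hj
    refine ⟨[Sum.inl (Sum.inr ⟨⟨0, hj⟩,
        fun i => Ya hn a ⟨M - 0 + (i:ℕ), by have h2 : (i:ℕ) < 0+1 := i.isLt; omega⟩⟩),
        Sum.inr true], ?_, rfl, by simp, by simp, ?_⟩
    · refine List.isChain_cons_cons.mpr ⟨?_, List.isChain_singleton _⟩
      refine preArc_inl_iff.mpr ⟨?_, Or.inr ⟨rfl, rfl⟩⟩
      exact (congrArg (Ya hn a) (Fin.ext (show M - 0 + 0 = M - (0:ℕ) by omega))).trans
        (var_y _ _).symm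
    · intro z hz
      simp only [List.mem_cons, List.mem_singleton, List.not_mem_nil, or_false] at hz
      rcases hz with rfl | rfl
      · exact Or.inr ⟨_, rfl, Nat.le_refl 0⟩
      · exact Or.inl rfl
  | succ j ih =>
    intro hj
    obtain ⟨l', hc', hh', hl', hnd', hb'⟩ := ih (by omega)
    refine ⟨Sum.inl (Sum.inr ⟨⟨j+1, hj⟩,
        fun i => Ya hn a ⟨M - (j+1) + (i:ℕ), by have h2 : (i:ℕ) < (j+1)+1 := i.isLt; omega⟩⟩)
        :: l', ?_, rfl, ?_, ?_, ?_⟩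
    · refine List.isChain_cons.mpr ⟨?_, hc'⟩
      intro y hy
      rw [hh'] at hy
      simp only [Option.mem_def, Option.some.injEq] at hy
      subst hy
      refine preArc_inl_iff.mpr ⟨?_, Or.inl ⟨Nat.succ_pos j, ?_⟩⟩
      · exact (congrArg (Ya hn a) (Fin.ext (show M - (j+1) + 0 = M - (j+1) by omega))).trans
          (var_y _ _).symm
      · exact vy_eq (Fin.ext (show (j:ℕ) = j+1-1 by omega)) _ _
          (fun k hk1 hk2 => congrArg (Ya hn a)
            (Fin.ext (show M - j + k = M - (j+1) + (k+1) by omega)))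
    · cases l' with
      | nil => simp at hh'
      | cons b l'' => rw [List.getLast?_cons_cons]; exact hl'
    · refine List.nodup_cons.mpr ⟨?_, hnd'⟩
      intro hz
      rcases hb' _ hz with h | ⟨q, hq, hle⟩
      · simp at h
      · simp only [Sum.inl.injEq, Sum.inr.injEq] at hq
        rw [← hq] at hle
        have h5 : j + 1 ≤ j := hle
        omega
    · intro z hz
      simp only [List.mem_cons] at hz
      rcases hz with rfl | hz
      · exact Or.inr ⟨_, rfl, Nat.le_refl (j+1)⟩
      · rcases hb' _ hz with h | ⟨q, hq, hle⟩
        · exact Or.inl h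
        · exact Or.inr ⟨q, hq, by omega⟩

lemma exX (hg : g (Xa hn a) (Ya hn a) = true) : ∀ (r j : ℕ) (hjr : j + r = M),
    ∃ l : List (Vtx M ⊕ Bool), l.Chain' (preArc g hn a) ∧
      l.head? = some (Sum.inl (Sum.inl ⟨⟨j, by omega⟩,
        fun i => Xa hn a ⟨(i:ℕ), by have h2 : (i:ℕ) < j := i.isLt; omega⟩⟩)) ∧
      l.getLast? = some (Sum.inr true) ∧ l.Nodup ∧
      ∀ z ∈ l, z = Sum.inr true ∨ (∃ q : VY M, z = Sum.inl (Sum.inr q)) ∨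
        (∃ q : VX M, z = Sum.inl (Sum.inl q) ∧ j ≤ (q.1:ℕ)) := by
  intro r
  induction r with
  | zero =>
    intro j hjr
    obtain ⟨l', hc', hh', hl', hnd', hb'⟩ := exY (g := g) (hn := hn) (a := a) j (by omega)
    refine ⟨_ :: l', ?_, rfl, ?_, ?_, ?_⟩
    · refine List.isChain_cons.mpr ⟨?_, hc'⟩
      intro y hy
      rw [hh'] at hy
      simp only [Option.mem_def, Option.some.injEq] at hy
      subst hy
      refine preArc_inl_iff.mpr (Or.inr ⟨show (j:ℕ) = M by omega, Ya hn a, ?_, ?_⟩)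
      · convert hg using 2
        funext i
        dsimp only
        by_cases h : (i:ℕ) < j
        · rw [dif_pos h]
        · rw [dif_neg h]
          have hi := i.isLt
          exact (var_x _ _).trans (congrArg (Xa hn a) (Fin.ext (show (j:ℕ) = (i:ℕ) by omega)))
      · refine vy_eq (Fin.ext (show (j:ℕ) = M by omega)) _ _ ?_
        intro k hk1 hk2
        have hk1' : k < j + 1 := hk1
        have hk2' : k < M + 1 := hk2
        exact congrArg (Ya hn a) (Fin.ext (show M - j + k = k by omega))
    · cases l' with
      | nil => simp at hh'
      | cons b l'' => rw [List.getLast?_cons_cons]; exact hl'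
    · refine List.nodup_cons.mpr ⟨?_, hnd'⟩
      intro hz
      rcases hb' _ hz with h | ⟨q, hq, _⟩
      · simp at h
      · simp at hq
    · intro z hz
      simp only [List.mem_cons] at hz
      rcases hz with rfl | hz
      · exact Or.inr (Or.inr ⟨_, rfl, Nat.le_refl j⟩)
      · rcases hb' _ hz with h | ⟨q, hq, _⟩
        · exact Or.inl h
        · exact Or.inr (Or.inl ⟨q, hq⟩)
  | succ r ih =>
    intro j hjr
    obtain ⟨l', hc', hh', hl', hnd', hb'⟩ := ih (j+1) (by omega)
    refine ⟨_ :: l', ?_, rfl, ?_, ?_, ?_⟩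
    · refine List.isChain_cons.mpr ⟨?_, hc'⟩
      intro y hy
      rw [hh'] at hy
      simp only [Option.mem_def, Option.some.injEq] at hy
      subst hy
      refine preArc_inl_iff.mpr (Or.inl ⟨show j+1 < M+1 by omega, ?_⟩)
      refine (vx_eq (Fin.ext (show (j:ℕ)+1 = j+1 by omega)) _ _ ?_).symm
      intro k hk1 hk2
      have hk1' : k < j + 1 := hk1
      by_cases hkj : k < j
      · have e1 : (⟨k, hk1⟩ : Fin ((j:ℕ)+1)) = Fin.castSucc ⟨k, hkj⟩ := Fin.ext rfl
        rw [e1, Fin.snoc_castSucc]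
        exact congrArg (Xa hn a) (Fin.ext rfl)
      · have e2 : (⟨k, hk1⟩ : Fin ((j:ℕ)+1)) = Fin.last j := Fin.ext (show k = j by omega)
        rw [e2, Fin.snoc_last]
        exact (var_x _ _).trans (congrArg (Xa hn a) (Fin.ext (by exact rfl)))
    · cases l' with
      | nil => simp at hh'
      | cons b l'' => rw [List.getLast?_cons_cons]; exact hl'
    · refine List.nodup_cons.mpr ⟨?_, hnd'⟩
      intro hz
      rcases hb' _ hz with h | ⟨q, hq⟩ | ⟨q, hq, hle⟩
      · simp at h
      · simp at hq
      · simp only [Sum.inl.injEq] at hq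
        rw [← hq] at hle
        have h5 : j + 1 ≤ j := hle
        omega
    · intro z hz
      simp only [List.mem_cons] at hz
      rcases hz with rfl | hz
      · exact Or.inr (Or.inr ⟨_, rfl, Nat.le_refl j⟩)
      · rcases hb' _ hz with h | ⟨q, hq⟩ | ⟨q, hq, hle⟩
        · exact Or.inl h
        · exact Or.inr (Or.inl ⟨q, hq⟩)
        · exact Or.inr (Or.inr ⟨q, hq, by omega⟩)

def preAcc (g : (Fin (M+1) → Bool) → (Fin (M+1) → Bool) → Bool) (hn : 2*(M+1) ≤ n)
    (a : Fin n → Bool) : Set (List (Vtx M ⊕ Bool)) :=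
  {l | l.Nodup ∧ l.Chain' (preArc g hn a) ∧ l.head? = some (Sum.inl (startV M)) ∧
    l.getLast? = some (Sum.inr true)}

lemma pre_sound
    (h : Relation.ReflTransGen (preArc g hn a) (Sum.inl (startV M)) (Sum.inr true)) :
    g (Xa hn a) (Ya hn a) = true := by
  obtain ⟨l, hc, hh, hl⟩ := rtg_chain h
  exact lemS l hc hl ⟨⟨0, Nat.succ_pos M⟩, fun i => i.elim0⟩ hh (fun i => i.elim0)

lemma pre_exists (hg : g (Xa hn a) (Ya hn a) = true) :
    ∃ l, l ∈ preAcc g hn a := by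
  obtain ⟨l, hc, hh, hl, hnd, _⟩ := exX hg M 0 (by omega)
  refine ⟨l, hnd, hc, ?_, hl⟩
  rw [hh]
  refine congrArg some (vx_eq (Fin.ext rfl) _ _ ?_)
  intro k hk1 hk2
  exact absurd (show k < 0 from hk1) (Nat.not_lt_zero k)

lemma theA_ne_start (b : Bool) (u : Vtx M) (z : Vtx M ⊕ Bool) (h : theA g b u z) :
    z ≠ Sum.inl (startV M) := by
  intro hz
  subst hz
  cases u with
  | inl q =>
    obtain ⟨j, w⟩ := q
    simp only [theA] at h
    rcases h with ⟨h1, heq⟩ | ⟨_, v, _, heq⟩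
    · rw [show (Sum.inl (startV M) : Vtx M ⊕ Bool) = Sum.inl (Sum.inl ⟨⟨0, Nat.succ_pos M⟩,
        fun i => i.elim0⟩) from rfl, Sum.inl.injEq, Sum.inl.injEq, Sigma.ext_iff] at heq
      obtain ⟨h2, -⟩ := heq
      have h3 : (0:ℕ) = (j:ℕ)+1 := congrArg Fin.val h2
      omega
    · simp [startV] at heq
  | inr q =>
    obtain ⟨j, t⟩ := q
    simp only [theA] at h
    obtain ⟨-, hbr⟩ := h
    rcases hbr with ⟨h1, heq⟩ | ⟨h1, heq⟩ <;> simp [startV] at heq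

end Lemmas

section Transport
variable {M n : ℕ} (g : (Fin (M+1) → Bool) → (Fin (M+1) → Bool) → Bool)
  (hn : 2*(M+1) ≤ n)

noncomputable def eV (M : ℕ) : Vtx M ≃ Fin (Fintype.card (Vtx M)) := Fintype.equivFin _

noncomputable def Fmap (M : ℕ) : (Vtx M ⊕ Bool) → (Fin (Fintype.card (Vtx M)) ⊕ Bool) :=
  Sum.map (eV M) id

noncomputable def Gmap (M : ℕ) : (Fin (Fintype.card (Vtx M)) ⊕ Bool) → (Vtx M ⊕ Bool) :=
  Sum.map (eV M).symm id

lemma GF (z : Vtx M ⊕ Bool) : Gmap M (Fmap M z) = z := by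
  cases z <;> simp [Fmap, Gmap]

lemma FG (z : Fin (Fintype.card (Vtx M)) ⊕ Bool) : Fmap M (Gmap M z) = z := by
  cases z <;> simp [Fmap, Gmap]

lemma Finj : Function.Injective (Fmap M) := Function.LeftInverse.injective GF

lemma Ginj : Function.Injective (Gmap M) := Function.LeftInverse.injective FG

noncomputable def theBP : BranchProg n where
  size := Fintype.card (Vtx M)
  start := Fmap M (Sum.inl (startV M))
  A0 := fun u z => theA g false ((eV M).symm u) (Gmap M z)
  A1 := fun u z => theA g true ((eV M).symm u) (Gmap M z)
  var := fun u => theVar hn ((eV M).symm u)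
  A0_ne_start := fun u z h hz =>
    theA_ne_start _ _ _ h (by rw [hz]; exact GF _)
  A1_ne_start := fun u z h hz =>
    theA_ne_start _ _ _ h (by rw [hz]; exact GF _)

variable (a : Fin n → Bool)

lemma theBP_arc (z1 z2 : Fin ((theBP g hn).size) ⊕ Bool) :
    (theBP g hn).arc a z1 z2 ↔ preArc g hn a (Gmap M z1) (Gmap M z2) := by
  cases z1 with
  | inl u => exact Iff.rfl
  | inr b => exact Iff.rfl

lemma theBP_computesNBP : (theBP g hn).ComputesNBP (fun a => g (Xa hn a) (Ya hn a)) := by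
  intro a
  constructor
  · intro hg
    have hrtg : Relation.ReflTransGen (preArc g hn a) (Sum.inl (startV M)) (Sum.inr true) := by
      obtain ⟨l, hnd, hc, hh, hl⟩ := pre_exists hg
      exact chain_rtg l hc _ _ hh hl
    exact Relation.ReflTransGen.lift (Fmap M)
      (fun x y h => (theBP_arc g hn a _ _).mpr (by rw [GF, GF]; exact h)) _ _ hrtg
  · intro hr
    have h2 := Relation.ReflTransGen.lift (Gmap M)
      (fun x y h => (theBP_arc g hn a _ _).mp h) _ _ hr
    have e1 : Gmap M ((theBP g hn).start) = Sum.inl (startV M) := GF (Sum.inl (startV M))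
    have e2 : Gmap M (Sum.inr true) = Sum.inr true := rfl
    dsimp only [Function.onFun] at h2; erw [e1, e2] at h2
    exact pre_sound h2

lemma theBP_acc : (theBP g hn).accPaths a = (List.map (Fmap M)) '' (preAcc g hn a) := by
  ext l'
  constructor
  · rintro ⟨hnd, hc, hh, hl⟩
    refine ⟨List.map (Gmap M) l', ⟨List.Nodup.map Ginj hnd, ?_, ?_, ?_⟩, ?_⟩
    · refine (List.isChain_map _).mpr ?_
      exact hc.imp (fun x y h => (theBP_arc g hn a _ _).mp h)
    · erw [List.head?_map, hh]
      exact congrArg some (GF (Sum.inl (startV M)))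
    · erw [List.getLast?_map, hl]
      rfl
    · erw [List.map_map, show (Fmap M) ∘ (Gmap M) = id from funext FG, List.map_id]
  · rintro ⟨l, ⟨hnd, hc, hh, hl⟩, rfl⟩
    refine ⟨List.Nodup.map Finj hnd, ?_, ?_, ?_⟩
    · refine (List.isChain_map _).mpr ?_
      exact hc.imp (fun x y h => (theBP_arc g hn a _ _).mpr (by rw [GF, GF]; exact h))
    · erw [List.head?_map, hh]
      rfl
    · erw [List.getLast?_map, hl]
      rfl

lemma theBP_computesPBP : (theBP g hn).ComputesPBP (fun a => g (Xa hn a) (Ya hn a)) := by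
  intro a
  have hcard : ((theBP g hn).accPaths a).ncard = (preAcc g hn a).ncard := by
    rw [theBP_acc]; exact Set.ncard_image_of_injective _ (List.map_injective_iff.mpr Finj)
  rw [hcard]
  by_cases hg : g (Xa hn a) (Ya hn a) = true
  · obtain ⟨l0, hmem⟩ := pre_exists hg
    have hsing : preAcc g hn a = {l0} := by
      refine Set.eq_singleton_iff_unique_mem.mpr ⟨hmem, fun l hl => ?_⟩
      exact lemU l hl.2.1 hl.2.2.2 _ l0 hmem.2.1 hmem.2.2.2 hl.2.2.1 hmem.2.2.1
    rw [hsing, Set.ncard_singleton]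
    exact iff_of_true hg (by decide)
  · have hemp : preAcc g hn a = ∅ := by
      ext l
      simp only [Set.mem_empty_iff_false, iff_false]
      rintro ⟨hnd, hc, hh, hl⟩
      exact hg (lemS l hc hl ⟨⟨0, Nat.succ_pos M⟩, fun i => i.elim0⟩ hh (fun i => i.elim0))
    rw [hemp, Set.ncard_empty]
    exact iff_of_false hg (by simp [Nat.odd_iff])

end Transport


end S11

namespace S11

lemma sum_two_pow (k : ℕ) : ∑ i ∈ Finset.range k, 2^i = 2^k - 1 := by
  induction k with
  | zero => simp
  | succ k ih =>
    rw [Finset.sum_range_succ, ih]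
    have := Nat.one_le_two_pow (n := k)
    have h2 : (2:ℕ)^(k+1) = 2 * 2^k := by ring
    omega

lemma card_vtx (M : ℕ) : Fintype.card (Vtx M) = 3 * 2^(M+1) - 3 := by
  rw [show Fintype.card (Vtx M) = Fintype.card (VX M) + Fintype.card (VY M) from
    Fintype.card_sum]
  rw [show Fintype.card (VX M) = ∑ j : Fin (M+1), Fintype.card (Fin (j:ℕ) → Bool) from
    Fintype.card_sigma]
  rw [show Fintype.card (VY M) = ∑ j : Fin (M+1), Fintype.card (Fin ((j:ℕ)+1) → Bool) from
    Fintype.card_sigma]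
  simp only [Fintype.card_fun, Fintype.card_bool, Fintype.card_fin]
  rw [Fin.sum_univ_eq_sum_range (fun j => 2^j) (M+1),
      Fin.sum_univ_eq_sum_range (fun j => 2^(j+1)) (M+1)]
  have h1 : ∑ i ∈ Finset.range (M+1), 2^(i+1) = 2 * ∑ i ∈ Finset.range (M+1), 2^i := by
    rw [Finset.mul_sum]
    exact Finset.sum_congr rfl (fun i _ => by ring)
  rw [h1, sum_two_pow]
  have := Nat.one_le_two_pow (n := M+1)
  have h2 : (2:ℕ)^(M+2) = 2 * 2^(M+1) := by ring
  omega

lemma fg_inj {M n : ℕ} (hn : 2*(M+1) ≤ n) :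
    Function.Injective (fun (g : (Fin (M+1) → Bool) → (Fin (M+1) → Bool) → Bool)
      (a : Fin n → Bool) => g (Xa hn a) (Ya hn a)) := by
  intro g1 g2 h
  funext X Y
  classical
  let a : Fin n → Bool := fun k => if h1 : (k:ℕ) < M+1 then X ⟨(k:ℕ), h1⟩ else
    (if h2 : (k:ℕ) - (M+1) < M+1 then Y ⟨(k:ℕ)-(M+1), h2⟩ else false)
  have hX : Xa hn a = X := by
    funext i
    have h1 : (i:ℕ) < M+1 := i.isLt
    show (if hh : (i:ℕ) < M+1 then X ⟨(i:ℕ), hh⟩ else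
      (if h2 : (i:ℕ) - (M+1) < M+1 then Y ⟨(i:ℕ)-(M+1), h2⟩ else false)) = X i
    rw [dif_pos h1]
  have hY : Ya hn a = Y := by
    funext i
    have h0 := i.isLt
    have h1 : ¬ (M+1+(i:ℕ) < M+1) := by omega
    have h2 : M+1+(i:ℕ) - (M+1) < M+1 := by omega
    show (if hh : M+1+(i:ℕ) < M+1 then X ⟨M+1+(i:ℕ), hh⟩ else
      (if hh2 : M+1+(i:ℕ) - (M+1) < M+1 then Y ⟨M+1+(i:ℕ)-(M+1), hh2⟩ else false)) = Y i
    rw [dif_neg h1, dif_pos h2]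
    exact congrArg Y (Fin.ext (show M+1+(i:ℕ)-(M+1) = (i:ℕ) by omega))
  have h3 := congrFun h a
  dsimp only at h3
  rw [hX, hY] at h3
  exact h3

lemma count_ge {n s : ℕ} (M : ℕ) (hn : 2*(M+1) ≤ n) (hs : 3 * 2^(M+1) ≤ s)
    (Sset : Set ((Fin n → Bool) → Bool))
    (hmem : ∀ g : (Fin (M+1) → Bool) → (Fin (M+1) → Bool) → Bool,
      (fun a => g (Xa hn a) (Ya hn a)) ∈ Sset) :
    2^(2^(M+1) * 2^(M+1)) ≤ Sset.ncard := by
  have hsub : Set.range (fun (g : (Fin (M+1) → Bool) → (Fin (M+1) → Bool) → Bool)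
      (a : Fin n → Bool) => g (Xa hn a) (Ya hn a)) ⊆ Sset := by
    rintro f ⟨g, rfl⟩
    exact hmem g
  have hr : (Set.range (fun (g : (Fin (M+1) → Bool) → (Fin (M+1) → Bool) → Bool)
      (a : Fin n → Bool) => g (Xa hn a) (Ya hn a))).ncard = 2^(2^(M+1) * 2^(M+1)) := by
    rw [← Nat.card_coe_set_eq, Nat.card_range_of_injective (fg_inj hn),
      Nat.card_eq_fintype_card]
    rw [Fintype.card_fun, Fintype.card_fun, Fintype.card_fun]
    simp only [Fintype.card_bool, Fintype.card_fin]
    rw [← pow_mul]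
  rw [← hr]
  exact Set.ncard_le_ncard hsub (Set.toFinite _)

end S11

open S11

theorem stmt11 (n s : ℕ) (hs : 3 ≤ s)
    (hn : 2 * ⌊Real.logb 2 ((s : ℝ)/3)⌋₊ ≤ n) :
    (2:ℝ)^((s:ℝ)^2/36) < (Nsem n s : ℝ) ∧ (2:ℝ)^((s:ℝ)^2/36) < (Psem n s : ℝ) := by
  set m := ⌊Real.logb 2 ((s : ℝ)/3)⌋₊ with hm
  have hs3 : (3:ℝ) ≤ (s:ℝ) := by exact_mod_cast hs
  have hq1 : (1:ℝ) ≤ (s:ℝ)/3 := by linarith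
  have hqpos : (0:ℝ) < (s:ℝ)/3 := by linarith
  have hL0 : 0 ≤ Real.logb 2 ((s:ℝ)/3) := Real.logb_nonneg one_lt_two hq1
  -- upper bound : s < 6 * 2^m
  have hup : (s:ℝ) < 6 * (2:ℝ)^(m:ℕ) := by
    have h1 : Real.logb 2 ((s:ℝ)/3) < (m:ℝ) + 1 := by
      rw [hm]; exact Nat.lt_floor_add_one _
    have h2 : (s:ℝ)/3 < (2:ℝ)^((m:ℝ)+1) := by
      rw [← Real.rpow_logb two_pos (by norm_num) hqpos]
      exact Real.rpow_lt_rpow_of_exponent_lt one_lt_two h1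
    have h3 : (2:ℝ)^((m:ℝ)+1) = 2 * (2:ℝ)^(m:ℕ) := by
      rw [show ((m:ℝ)+1) = ((m+1 : ℕ) : ℝ) by push_cast; ring, Real.rpow_natCast]
      ring
    rw [h3] at h2
    linarith
  -- lower bound : 3 * 2^m ≤ s
  have hlow : 3 * 2^m ≤ s := by
    have h1 : (m:ℝ) ≤ Real.logb 2 ((s:ℝ)/3) := Nat.floor_le hL0
    have h2 : (2:ℝ)^(m:ℕ) ≤ (s:ℝ)/3 := by
      rw [← Real.rpow_natCast 2 m, ← Real.rpow_logb two_pos (by norm_num) hqpos]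
      exact Real.rpow_le_rpow_of_exponent_le one_le_two h1
    have h3 : ((3 * 2^m : ℕ) : ℝ) ≤ (s:ℝ) := by push_cast; linarith
    exact_mod_cast h3
  rcases Nat.eq_zero_or_pos m with hm0 | hmpos
  · -- small case : s < 6, use constant programs
    have hs6 : (s:ℝ) < 6 := by
      rw [hm0] at hup; simpa using hup
    have hlt2 : (2:ℝ)^((s:ℝ)^2/36) < 2 := by
      nth_rewrite 2 [show (2:ℝ) = (2:ℝ)^(1:ℝ) from (Real.rpow_one 2).symm]
      apply (Real.rpow_lt_rpow_left_iff one_lt_two).mpr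
      rw [div_lt_one (by norm_num : (0:ℝ) < 36)]
      nlinarith
    have hpair : ((fun _ => true) : (Fin n → Bool) → Bool) ≠ (fun _ => false) := by
      intro h
      exact Bool.true_eq_false_eq_False (congrFun h (fun _ => false))
    constructor
    · have h2N : 2 ≤ Nsem n s := by
        rw [show (2:ℕ) = ({(fun _ => true), (fun _ => false)} :
            Set ((Fin n → Bool) → Bool)).ncard from (Set.ncard_pair hpair).symm]
        apply Set.ncard_le_ncard _ (Set.toFinite _)
        rintro f (rfl | rfl)
        · exact ⟨constBP n true, by simp [constBP], constBP_computesNBP n true⟩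
        · exact ⟨constBP n false, by simp [constBP], constBP_computesNBP n false⟩
      have : (2:ℝ) ≤ (Nsem n s : ℝ) := by exact_mod_cast h2N
      linarith
    · have h2P : 2 ≤ Psem n s := by
        rw [show (2:ℕ) = ({(fun _ => true), (fun _ => false)} :
            Set ((Fin n → Bool) → Bool)).ncard from (Set.ncard_pair hpair).symm]
        apply Set.ncard_le_ncard _ (Set.toFinite _)
        rintro f (rfl | rfl)
        · exact ⟨constBP n true, by simp [constBP], constBP_computesPBP n true⟩
        · exact ⟨constBP n false, by simp [constBP], constBP_computesPBP n false⟩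
      have : (2:ℝ) ≤ (Psem n s : ℝ) := by exact_mod_cast h2P
      linarith
  · -- main case
    obtain ⟨M, hM⟩ : ∃ M, m = M + 1 := ⟨m - 1, by omega⟩
    rw [hM] at hup hlow
    have hn2 : 2*(M+1) ≤ n := by rw [hM] at hn; exact hn
    have hsize : ∀ g : (Fin (M+1) → Bool) → (Fin (M+1) → Bool) → Bool,
        (theBP (n := n) g hn2).size ≤ s := by
      intro g
      have h1 : (theBP (n := n) g hn2).size = Fintype.card (Vtx M) := rfl
      rw [h1, card_vtx]
      omega
    have hcN : 2^(2^(M+1) * 2^(M+1)) ≤ Nsem n s :=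
      count_ge M hn2 hlow _ (fun g => ⟨theBP g hn2, hsize g, theBP_computesNBP g hn2⟩)
    have hcP : 2^(2^(M+1) * 2^(M+1)) ≤ Psem n s :=
      count_ge M hn2 hlow _ (fun g => ⟨theBP g hn2, hsize g, theBP_computesPBP g hn2⟩)
    have key : (2:ℝ)^((s:ℝ)^2/36) < ((2^(2^(M+1) * 2^(M+1)) : ℕ) : ℝ) := by
      have hx : (0:ℝ) < ((2^(M+1) : ℕ) : ℝ) := by positivity
      have hexp : (s:ℝ)^2/36 < ((2^(M+1) * 2^(M+1) : ℕ) : ℝ) := by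
        rw [div_lt_iff₀ (by norm_num : (0:ℝ) < 36)]
        push_cast
        push_cast at hup
        nlinarith [hup, hs3]
      calc (2:ℝ)^((s:ℝ)^2/36) < (2:ℝ)^(((2^(M+1) * 2^(M+1) : ℕ) : ℝ)) :=
            (Real.rpow_lt_rpow_left_iff one_lt_two).mpr hexp
        _ = ((2^(2^(M+1) * 2^(M+1)) : ℕ) : ℝ) := by
            rw [Real.rpow_natCast]; push_cast; ring
    constructor
    · exact lt_of_lt_of_le key (by exact_mod_cast hcN)
    · exact lt_of_lt_of_le key (by exact_mod_cast hcP)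
end

section
/- Let F = {f_n}_{n∈ℕ} be a family of Boolean functions (f_n of arity n), and for each n let D_n ⊆ [n] be the set of indices of variables on which f_n depends. Define L(n) = max{ Σ_{i=1}^p max{|V_i|, min{s ∈ ℕ : N_sem(|V_i|, s) ≥ r_{V_i}(f_n)}} : V_1,…,V_p a partition of D_n }. Then there is a constant c > 0 such that L(n) ≤ c·n^(3/2)/log₂ n for all n ≥ 4 (in particular L(n) ∈ O(n^(3/2)/log₂ n)). -/
def BoolDependsOn {n : ℕ} (f : (Fin n → Bool) → Bool) (i : Fin n) : Prop :=
  ∃ a a' : Fin n → Bool, (∀ j, j ≠ i → a j = a' j) ∧ f a ≠ f a'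
section Constr

variable {m a b : ℕ}

/-- Vertices of one "tree" layer: a node at level `i` remembering bits `w`. -/
abbrev Tr (c : ℕ) := Σ i : Fin (c+1), (Fin (i : ℕ) → Bool)

/-- Vertex type of the universal branching program. -/
abbrev VT (a b : ℕ) := Tr a ⊕ Tr b

def root (a b : ℕ) : VT a b := Sum.inl ⟨⟨0, Nat.succ_pos a⟩, fun t => t.elim0⟩

def varOf (ha : a + b ≤ m) (hm : 1 ≤ m) : VT a b → Fin m
  | Sum.inl ⟨i, _⟩ =>
      if h : (i : ℕ) < a then ⟨i, by omega⟩ else ⟨0, hm⟩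
  | Sum.inr ⟨j, _⟩ =>
      if h : 1 ≤ (j : ℕ) then ⟨a + (b - (j : ℕ)), by have := j.isLt; omega⟩ else ⟨0, hm⟩

/-- The arcs (label `c`) of the universal program for the function table `g`. -/
def step (g : (Fin a → Bool) → (Fin b → Bool) → Bool) (c : Bool) :
    VT a b → (VT a b ⊕ Bool) → Prop
  | Sum.inl ⟨i, w⟩ => fun t =>
      (∃ h : (i : ℕ) < a,
        t = Sum.inl (Sum.inl ⟨⟨(i : ℕ) + 1, by omega⟩,
          (fun s : Fin ((i : ℕ) + 1) => if hs : (s : ℕ) < (i : ℕ) then w ⟨s, hs⟩ else c)⟩)) ∨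
      (∃ hi : (i : ℕ) = a, ∃ u : Fin a → Bool,
        (∀ s : Fin a, u s = w ⟨(s : ℕ), by omega⟩) ∧
        ((b = 0 ∧ g u (fun _ => false) = true ∧ t = Sum.inr true) ∨
         (∃ _ : 1 ≤ b, ∃ v : Fin b → Bool, g u v = true ∧
            t = Sum.inl (Sum.inr ⟨⟨b, Nat.lt_succ_self b⟩, v⟩))))
  | Sum.inr ⟨j, v⟩ => fun t =>
      ∃ hj : 1 ≤ (j : ℕ), c = v ⟨0, hj⟩ ∧
        (((j : ℕ) = 1 ∧ t = Sum.inr true) ∨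
         (∃ h2 : 2 ≤ (j : ℕ),
            t = Sum.inl (Sum.inr ⟨⟨(j : ℕ) - 1, by have := j.isLt; omega⟩,
              (fun s : Fin ((j : ℕ) - 1) =>
                v ⟨(s : ℕ) + 1, by have := s.isLt; omega⟩)⟩)))

/-- One-step relation on `VT ⊕ Bool` under input `x`. -/
def stepx (g : (Fin a → Bool) → (Fin b → Bool) → Bool) (ha : a + b ≤ m) (hm : 1 ≤ m)
    (x : Fin m → Bool) : (VT a b ⊕ Bool) → (VT a b ⊕ Bool) → Prop
  | Sum.inl vt, t => step g (x (varOf ha hm vt)) vt t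
  | Sum.inr _, _ => False

def px (ha : a + b ≤ m) (x : Fin m → Bool) : Fin a → Bool :=
  fun i => x ⟨(i : ℕ), by have := i.isLt; omega⟩

def sx (ha : a + b ≤ m) (x : Fin m → Bool) : Fin b → Bool :=
  fun j => x ⟨a + (j : ℕ), by have := j.isLt; omega⟩

/-- The function computed. -/
def fg (ha : a + b ≤ m) (g : (Fin a → Bool) → (Fin b → Bool) → Bool) :
    (Fin m → Bool) → Bool :=
  fun x => g (px ha x) (sx ha x)

lemma fg_injective (ha : a + b ≤ m) : Function.Injective (fg (m := m) ha) := by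
  intro g g' h
  funext u v
  set x : Fin m → Bool := fun t =>
    if h1 : (t : ℕ) < a then u ⟨t, h1⟩ else
      if h2 : (t : ℕ) < a + b then v ⟨(t : ℕ) - a, by omega⟩ else false with hxdef
  have hx := congrFun h x
  have hpu : px ha x = u := by
    funext i
    simp only [px, hxdef]
    rw [dif_pos i.isLt]
  have hsv : sx ha x = v := by
    funext j
    have h1 : ¬ ((a + (j:ℕ)) < a) := by omega
    have h2 : a + (j:ℕ) < a + b := by have := j.isLt; omega
    simp only [sx, hxdef]
    rw [dif_neg h1, dif_pos h2]
    congr 1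
    apply Fin.ext
    simp only [Fin.val_mk]
    omega
  simpa [fg, hpu, hsv] using hx

section Core

variable {m a b : ℕ} (g : (Fin a → Bool) → (Fin b → Bool) → Bool)
  (ha : a + b ≤ m) (hm : 1 ≤ m) (x : Fin m → Bool)

/-- tree node at level `i` along input `x`. -/
def tnode (i : ℕ) (hi : i ≤ a) : VT a b :=
  Sum.inl ⟨⟨i, by omega⟩, fun t : Fin i => x ⟨(t : ℕ), by have := t.isLt; omega⟩⟩

/-- suffix node expecting the last `j` suffix bits of `x`. -/
def snode (j : ℕ) (hj : j ≤ b) : VT a b :=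
  Sum.inr ⟨⟨j, by omega⟩,
    fun t : Fin j => x ⟨a + (b - j) + (t : ℕ), by have := t.isLt; omega⟩⟩

lemma xcast {A B : ℕ} {pA : A < m} {pB : B < m} (h : A = B) : x ⟨A, pA⟩ = x ⟨B, pB⟩ := by
  subst h; rfl

lemma sigma_mk_eq {c i : ℕ} {h1 h2 : i < c + 1} {f f' : Fin i → Bool} (hf : f = f') :
    (⟨⟨i, h1⟩, f⟩ : Tr c) = ⟨⟨i, h2⟩, f'⟩ := by subst hf; rfl

lemma tnode_root : tnode (b := b) ha x 0 (Nat.zero_le a) = root a b := by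
  simp only [tnode, root]
  exact congrArg Sum.inl (sigma_mk_eq (funext fun t => t.elim0))

@[simp] lemma stepx_inl (vt : VT a b) (t : VT a b ⊕ Bool) :
    stepx g ha hm x (Sum.inl vt) t = step g (x (varOf ha hm vt)) vt t := rfl

lemma chain_pre : ∀ k i (hik : i + k = a),
    Relation.ReflTransGen (stepx g ha hm x)
      (Sum.inl (tnode ha x i (by omega))) (Sum.inl (tnode ha x a le_rfl)) := by
  intro k
  induction k with
  | zero =>
    intro i hik
    obtain rfl : i = a := by omega
    exact Relation.ReflTransGen.refl
  | succ k IH =>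
    intro i hik
    have hia : i < a := by omega
    refine Relation.ReflTransGen.head ?_ (IH (i+1) (by omega))
    rw [stepx_inl]
    show step g _ (Sum.inl ⟨⟨i, by omega⟩, _⟩) _
    simp only [step]
    refine Or.inl ⟨hia, ?_⟩
    simp only [tnode]
    refine congrArg (fun z => Sum.inl (Sum.inl z)) (sigma_mk_eq ?_).symm
    funext s
    by_cases hs : (s : ℕ) < i
    · rw [dif_pos hs]
    · rw [dif_neg hs]
      have hsi : (s : ℕ) = i := by have := s.isLt; omega
      have hv : varOf (b := b) ha hm (tnode ha x i (by omega)) = ⟨i, by omega⟩ := by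
        simp only [tnode, varOf]
        rw [dif_pos hia]
      simp only [tnode] at hv
      rw [hv]
      exact xcast x hsi.symm

lemma chain_suf : ∀ j (hj1 : 1 ≤ j) (hjb : j ≤ b),
    Relation.ReflTransGen (stepx g ha hm x)
      (Sum.inl (snode ha x j hjb)) (Sum.inr true) := by
  intro j
  induction j with
  | zero => omega
  | succ j IH =>
    intro hj1 hjb
    have hvar : varOf (b := b) ha hm (snode ha x (j+1) hjb)
        = ⟨a + (b - (j+1)), by omega⟩ := by
      simp only [snode, varOf]
      rw [dif_pos (by omega : 1 ≤ j + 1)]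
    have hc : x (varOf ha hm (snode ha x (j+1) hjb))
        = x ⟨a + (b - (j+1)) + 0, by omega⟩ := by
      rw [hvar]; exact xcast x (by omega)
    rcases Nat.eq_zero_or_pos j with hj0 | hj0
    · subst hj0
      refine Relation.ReflTransGen.single ?_
      rw [stepx_inl]
      show step g _ (Sum.inr ⟨⟨1, by omega⟩, _⟩) _
      simp only [step]
      exact ⟨by omega, hc, Or.inl ⟨by trivial, by trivial⟩⟩
    · refine Relation.ReflTransGen.head ?_ (IH hj0 (by omega))
      rw [stepx_inl]
      show step g _ (Sum.inr ⟨⟨j+1, by omega⟩, _⟩) _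
      simp only [step]
      refine ⟨by omega, hc, Or.inr ⟨by omega, ?_⟩⟩
      simp only [snode]
      refine congrArg (fun z => Sum.inl (Sum.inr z)) (sigma_mk_eq ?_)
      funext s
      exact xcast x (by have := s.isLt; omega)

lemma fwd (hgx : g (px ha x) (sx ha x) = true) :
    Relation.ReflTransGen (stepx g ha hm x) (Sum.inl (root a b)) (Sum.inr true) := by
  rw [← tnode_root ha x]
  refine (chain_pre g ha hm x a 0 (by omega)).trans ?_
  rcases Nat.eq_zero_or_pos b with hb | hb
  · subst hb
    refine Relation.ReflTransGen.single ?_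
    rw [stepx_inl]
    show step g _ (Sum.inl ⟨⟨a, by omega⟩, _⟩) _
    simp only [step]
    refine Or.inr ⟨by trivial, px ha x, fun s => rfl, Or.inl ⟨by trivial, ?_, by trivial⟩⟩
    have hsx : (fun _ => false : Fin 0 → Bool) = sx ha x := funext fun t => t.elim0
    rw [hsx]; exact hgx
  · refine Relation.ReflTransGen.head ?_ (chain_suf g ha hm x b hb le_rfl)
    rw [stepx_inl]
    show step g _ (Sum.inl ⟨⟨a, by omega⟩, _⟩) _
    simp only [step]
    refine Or.inr ⟨by trivial, px ha x, fun s => rfl, Or.inr ⟨hb, sx ha x, hgx, ?_⟩⟩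
    simp only [snode]
    refine congrArg (fun z => Sum.inl (Sum.inr z)) (sigma_mk_eq ?_)
    funext s
    exact xcast x (by have := s.isLt; omega)

/-- Invariant for the backward direction. -/
def back : (VT a b ⊕ Bool) → Prop
  | Sum.inr _ => True
  | Sum.inl (Sum.inl ⟨i, w⟩) =>
      (∀ t : Fin (i : ℕ), w t = x ⟨(t : ℕ), by have := t.isLt; have := i.isLt; omega⟩) →
      g (px ha x) (sx ha x) = true
  | Sum.inl (Sum.inr ⟨j, v⟩) =>
      ∀ t : Fin (j : ℕ), v t = x ⟨a + (b - (j : ℕ)) + (t : ℕ),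
        by have := t.isLt; have := j.isLt; omega⟩

lemma backward
    (hpath : Relation.ReflTransGen (stepx g ha hm x) (Sum.inl (root a b)) (Sum.inr true)) :
    g (px ha x) (sx ha x) = true := by
  have key : back g ha x (Sum.inl (root a b)) := by
    refine Relation.ReflTransGen.head_induction_on
      (motive := fun z _ => back g ha x z) hpath trivial ?_
    intro z z' hstep _hpath IH
    match z with
    | Sum.inr _ => exact hstep.elim
    | Sum.inl (Sum.inl ⟨i, w⟩) =>
      rw [stepx_inl] at hstep
      simp only [step] at hstep
      simp only [back] at IH ⊢
      rcases hstep with ⟨hia, rfl⟩ | ⟨hi, u, hu, hcase⟩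
      · simp only [back] at IH
        intro hw
        refine IH ?_
        intro t
        by_cases ht : (t : ℕ) < (i : ℕ)
        · rw [dif_pos ht]
          exact (hw ⟨(t : ℕ), ht⟩).trans (xcast x rfl)
        · rw [dif_neg ht]
          have hti : (t : ℕ) = (i : ℕ) := by have := t.isLt; omega
          have hvar : varOf (b := b) ha hm (Sum.inl ⟨i, w⟩) = ⟨(i : ℕ), by omega⟩ := by
            simp only [varOf]
            rw [dif_pos hia]
          rw [hvar]
          exact xcast x hti.symm
      · intro hw
        have hupx : u = px ha x := by
          funext s
          rw [hu s, hw ⟨(s : ℕ), by omega⟩]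
          exact xcast x rfl
        rcases hcase with ⟨hb, hgu, rfl⟩ | ⟨hb, v, hgv, rfl⟩
        · have hsx : (fun _ => false : Fin b → Bool) = sx ha x := by
            subst hb
            exact funext fun t => t.elim0
          rw [← hupx, ← hsx]
          exact hgu
        · simp only [Fin.val_mk] at IH
          have hvs : v = sx ha x := by
            funext t
            rw [IH t]
            exact xcast x (by omega)
          rw [← hupx, ← hvs]
          exact hgv
    | Sum.inl (Sum.inr ⟨j, v⟩) =>
      rw [stepx_inl] at hstep
      simp only [step] at hstep
      simp only [back] at IH ⊢
      obtain ⟨hj, hcv, hcase⟩ := hstep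
      have hvar : varOf (b := b) ha hm (Sum.inr ⟨j, v⟩)
          = ⟨a + (b - (j : ℕ)), by have := j.isLt; omega⟩ := by
        simp only [varOf]
        rw [dif_pos hj]
      rw [hvar] at hcv
      intro t
      by_cases ht0 : (t : ℕ) = 0
      · have : t = ⟨0, hj⟩ := Fin.ext ht0
        rw [this, ← hcv]
        exact (xcast x (by omega)).symm
      · rcases hcase with ⟨hj1, rfl⟩ | ⟨hj2, rfl⟩
        · exact absurd (by have := t.isLt; omega : (t:ℕ) = 0) ht0
        · have ht1 : 1 ≤ (t : ℕ) := by omega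
          have hsub : (t : ℕ) - 1 < (j : ℕ) - 1 := by have := t.isLt; omega
          have := IH ⟨(t : ℕ) - 1, hsub⟩
          simp only at this
          have hvt : v ⟨(t : ℕ) - 1 + 1, by have := t.isLt; omega⟩ = v t := by
            congr 1
            exact Fin.ext (by simp only [Fin.val_mk]; omega)
          rw [hvt] at this
          rw [this]
          exact xcast x (by have := j.isLt; have := t.isLt; omega)
  exact key (fun t => t.elim0)

theorem core_iff :
    g (px ha x) (sx ha x) = true ↔
      Relation.ReflTransGen (stepx g ha hm x) (Sum.inl (root a b)) (Sum.inr true) :=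
  ⟨fwd g ha hm x, backward g ha hm x⟩

lemma step_not_root (c : Bool) (vt : VT a b) (t : VT a b ⊕ Bool)
    (h : step g c vt t) : t ≠ Sum.inl (root a b) := by
  rintro rfl
  cases vt with
  | inl p =>
    obtain ⟨i, w⟩ := p
    simp only [step] at h
    rcases h with ⟨_, h⟩ | ⟨_, _, _, h⟩
    · have h2 := congrArg
        (fun t : VT a b ⊕ Bool =>
          match t with | Sum.inl (Sum.inl p) => (p.1 : ℕ) | _ => 37) h
      simp only [root] at h2
      omega
    · rcases h with ⟨_, _, h⟩ | ⟨_, _, _, h⟩ <;> simp [root] at h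
  | inr p =>
    obtain ⟨j, v⟩ := p
    simp only [step] at h
    obtain ⟨_, _, h⟩ := h
    rcases h with ⟨_, h⟩ | ⟨_, h⟩ <;> simp [root] at h

end Core

section Prog

variable {m a b : ℕ} (g : (Fin a → Bool) → (Fin b → Bool) → Bool)
  (ha : a + b ≤ m) (hm : 1 ≤ m)

/-- Enumeration of the vertex type. -/
noncomputable def eqv (a b : ℕ) : VT a b ≃ Fin (Fintype.card (VT a b)) :=
  Fintype.equivFin _

/-- The universal branching program for `g`. -/
noncomputable def prog : BranchProg m where
  size := Fintype.card (VT a b)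
  start := Sum.inl ((eqv a b) (root a b))
  A0 u t := step g false ((eqv a b).symm u) (Sum.map (eqv a b).symm id t)
  A1 u t := step g true ((eqv a b).symm u) (Sum.map (eqv a b).symm id t)
  var u := varOf ha hm ((eqv a b).symm u)
  A0_ne_start u t h := by
    rintro rfl
    exact step_not_root g false _ _ h (by simp)
  A1_ne_start u t h := by
    rintro rfl
    exact step_not_root g true _ _ h (by simp)

lemma rtg_iff {α β : Type*} (h : α ≃ β) {r : α → α → Prop} {r' : β → β → Prop}
    (hr : ∀ p q, r' p q ↔ r (h.symm p) (h.symm q)) (p q : β) :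
    Relation.ReflTransGen r' p q ↔ Relation.ReflTransGen r (h.symm p) (h.symm q) := by
  constructor
  · exact fun hh => Relation.ReflTransGen.lift h.symm (fun u v huv => (hr u v).mp huv) p q hh
  · intro hh
    have := Relation.ReflTransGen.lift h
      (fun u v huv => (hr (h u) (h v)).mpr (by simpa using huv)) _ _ hh
    simpa [Function.onFun] using this

lemma prog_arc_iff (x : Fin m → Bool) (p q : Fin (Fintype.card (VT a b)) ⊕ Bool) :
    (prog g ha hm).arc x p q ↔
      stepx g ha hm x (Sum.map (eqv a b).symm id p) (Sum.map (eqv a b).symm id q) := by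
  cases p with
  | inr v => simp [BranchProg.arc, stepx, Sum.map]
  | inl u =>
    show (x ((prog g ha hm).var u) = false ∧ _) ∨ (x ((prog g ha hm).var u) = true ∧ _) ↔ _
    have hv : (prog g ha hm).var u = varOf ha hm ((eqv a b).symm u) := rfl
    rw [hv]
    show _ ↔ step g (x (varOf ha hm ((eqv a b).symm u))) ((eqv a b).symm u) _
    cases hxv : x (varOf ha hm ((eqv a b).symm u)) <;>
      simp [prog, hxv]

theorem prog_computes : (prog g ha hm).ComputesNBP (fg ha g) := by
  intro x
  show g (px ha x) (sx ha x) = true ↔ _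
  rw [core_iff g ha hm x]
  have h := rtg_iff (Equiv.sumCongr (eqv a b) (Equiv.refl Bool))
    (r := stepx g ha hm x) (r' := (prog g ha hm).arc x)
    (fun p q => by
      rw [prog_arc_iff g ha hm x p q]
      simp [Equiv.sumCongr_symm, Equiv.sumCongr_apply, Sum.map])
    ((prog g ha hm).start) (Sum.inr true)
  refine Iff.trans ?_ h.symm
  have h1 : (Equiv.sumCongr (eqv a b) (Equiv.refl Bool)).symm ((prog g ha hm).start)
      = Sum.inl (root a b) := by
    show (Equiv.sumCongr (eqv a b) (Equiv.refl Bool)).symm (Sum.inl ((eqv a b) (root a b))) = _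
    simp
  have h2 : (Equiv.sumCongr (eqv a b) (Equiv.refl Bool)).symm (Sum.inr true)
      = (Sum.inr true : VT a b ⊕ Bool) := by simp
  rw [h1, h2]

lemma card_Tr_le (c : ℕ) : Fintype.card (Tr c) ≤ 2 ^ (c + 1) := by
  have h1 : Fintype.card (Tr c) = ∑ i : Fin (c+1), 2 ^ (i : ℕ) := by
    simp [Fintype.card_sigma]
  rw [h1, Fin.sum_univ_eq_sum_range]
  rw [Nat.geomSum_eq le_rfl]
  have h2 : 2 ^ (c + 1) ≥ 1 := Nat.one_le_two_pow
  omega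

lemma prog_size_le : (prog (m := m) g ha hm).size ≤ 2 ^ (a + 1) + 2 ^ (b + 1) := by
  show Fintype.card (VT a b) ≤ _
  have : Fintype.card (VT a b) = Fintype.card (Tr a) + Fintype.card (Tr b) :=
    Fintype.card_sum
  rw [this]
  exact Nat.add_le_add (card_Tr_le a) (card_Tr_le b)

theorem nsem_lower (hm : 1 ≤ m) (ha : a + b ≤ m) (s : ℕ)
    (hs : 2 ^ (a + 1) + 2 ^ (b + 1) ≤ s) :
    2 ^ 2 ^ (a + b) ≤ Nsem m s := by
  classical
  set S := {f : (Fin m → Bool) → Bool | ∃ P : BranchProg m, P.size ≤ s ∧ P.ComputesNBP f}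
    with hS
  have hmem : ∀ g : (Fin a → Bool) → (Fin b → Bool) → Bool, fg ha g ∈ S := by
    intro g
    exact ⟨prog g ha hm, le_trans (prog_size_le g ha hm) hs, prog_computes g ha hm⟩
  have hinj : Function.Injective
      (fun g : (Fin a → Bool) → (Fin b → Bool) → Bool => (⟨fg ha g, hmem g⟩ : S)) := by
    intro g g' h
    exact fg_injective ha (congrArg Subtype.val h)
  have hcard := Nat.card_le_card_of_injective _ hinj
  have hc1 : Nat.card ((Fin a → Bool) → (Fin b → Bool) → Bool) = 2 ^ 2 ^ (a + b) := by
    rw [Nat.card_eq_fintype_card]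
    rw [Fintype.card_fun, Fintype.card_fun, Fintype.card_fun]
    simp [← pow_mul, ← pow_add, Nat.add_comm b a]
  rw [hc1, Nat.card_coe_set_eq] at hcard
  exact hcard

end Prog

end Constr


section Counting

lemma numSubfuns_le_funcard {n : ℕ} (f : (Fin n → Bool) → Bool) (V : Finset (Fin n)) :
    numSubfuns f V ≤ 2 ^ 2 ^ V.card := by
  classical
  rw [numSubfuns, ← Nat.card_coe_set_eq]
  have h1 : Nat.card ↥(Set.range (subfun f V))
      ≤ Nat.card (({i : Fin n // i ∈ V} → Bool) → Bool) :=
    Nat.card_le_card_of_injective _ Subtype.val_injective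
  refine le_trans h1 (le_of_eq ?_)
  rw [Nat.card_eq_fintype_card, Fintype.card_fun, Fintype.card_fun]
  simp [Fintype.card_coe]

lemma numSubfuns_le_exp {n : ℕ} (f : (Fin n → Bool) → Bool) (V : Finset (Fin n)) :
    numSubfuns f V ≤ 2 ^ n := by
  classical
  rw [numSubfuns, ← Nat.card_coe_set_eq]
  have h1 : Nat.card ↥(Set.range (subfun f V))
      ≤ Nat.card ({i : Fin n // i ∉ V} → Bool) :=
    Nat.card_le_card_of_surjective _ Set.rangeFactorization_surjective
  refine le_trans h1 ?_
  rw [Nat.card_eq_fintype_card, Fintype.card_fun]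
  have h2 : Fintype.card {i : Fin n // i ∉ V} ≤ n := by
    have := Fintype.card_subtype_le (fun i : Fin n => i ∉ V)
    simpa using this
  have h3 : Fintype.card Bool = 2 := by simp
  rw [h3]
  exact Nat.pow_le_pow_right (by norm_num) h2

lemma two_mul_le_two_pow : ∀ t : ℕ, 1 ≤ t → 2 * t ≤ 2 ^ t := by
  intro t
  induction t with
  | zero => omega
  | succ t IH =>
    intro _
    rcases Nat.eq_zero_or_pos t with h | h
    · subst h; norm_num
    · have := IH h
      have h2 : (2:ℕ) ≤ 2 ^ t := Nat.one_lt_two_pow_iff.mpr (by omega)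
      rw [pow_succ]
      omega

end Counting

theorem stmt12 (F : ∀ n : ℕ, (Fin n → Bool) → Bool) :
    ∃ c : ℝ, 0 < c ∧ ∀ n : ℕ, 4 ≤ n →
      ∀ (p : ℕ) (V : Fin p → Finset (Fin n)),
        (∀ i, (V i).Nonempty) →
        (∀ i j, i ≠ j → Disjoint (V i) (V j)) →
        (∀ x : Fin n, (∃ i, x ∈ V i) ↔ BoolDependsOn (F n) x) →
        ((∑ i, max (V i).card
            (sInf {s : ℕ | numSubfuns (F n) (V i) ≤ Nsem (V i).card s}) : ℕ) : ℝ)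
          ≤ c * (n : ℝ)^((3:ℝ)/2) / Real.logb 2 (n : ℝ) := by
  classical
  refine ⟨100, by norm_num, ?_⟩
  intro n hn p V hne hdisj _hdep
  -- notation
  set K := Nat.clog 2 n with hK
  set k0 := (K + 1) / 2 with hk0
  set q := 2 ^ ((k0 + 1) / 2) with hq
  have hK1 : 1 ≤ K := Nat.clog_pos (by norm_num) (by omega)
  have hk01 : 1 ≤ k0 := by omega
  have hnK : n ≤ 2 ^ K := Nat.le_pow_clog (by norm_num) n
  have hKn : 2 ^ (K - 1) < n := by
    have := Nat.pow_pred_clog_lt_self (b := 2) (by norm_num) (x := n) (by omega)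
    simpa [hK] using this
  have hsqN : 2 ^ k0 * 2 ^ k0 ≤ 4 * n := by
    have h1 : 2 ^ k0 * 2 ^ k0 = 2 ^ (2 * k0) := by rw [← pow_add]; ring_nf
    have h2 : 2 ^ (2 * k0) ≤ 2 ^ (K + 1) := Nat.pow_le_pow_right (by norm_num) (by omega)
    have h3 : 2 ^ (K + 1) = 4 * 2 ^ (K - 1) := by
      have : K + 1 = (K - 1) + 2 := by omega
      rw [this, pow_add]; ring
    omega
  have hq4 : q * q * (q * q) ≤ 16 * n := by
    have h1 : q * q * (q * q) = 2 ^ (4 * ((k0 + 1) / 2)) := by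
      rw [hq, ← pow_add, ← pow_add]; congr 1; omega
    have h2 : 2 ^ (4 * ((k0 + 1) / 2)) ≤ 2 ^ (2 * k0 + 2) :=
      Nat.pow_le_pow_right (by norm_num) (by omega)
    have h3 : 2 ^ (2 * k0 + 2) = 4 * (2 ^ k0 * 2 ^ k0) := by
      rw [pow_add, two_mul, pow_add]; ring
    omega
  have hk0q : k0 ≤ q := by
    have h1 : 2 * ((k0 + 1) / 2) ≤ 2 ^ ((k0 + 1) / 2) :=
      two_mul_le_two_pow _ (by omega)
    rw [hq]
    omega
  have hk0pow : k0 ≤ 2 ^ k0 := le_of_lt (Nat.lt_two_pow_self (n := k0))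
  -- per-part data
  set m : Fin p → ℕ := fun i => (V i).card with hm
  have hm1 : ∀ i, 1 ≤ m i := fun i => Finset.card_pos.mpr (hne i)
  set A : Fin p → ℕ := fun i => min ((m i + 1) / 2) k0 with hA
  set B : Fin p → ℕ := fun i => min (m i - A i) k0 with hB
  have hab : ∀ i, A i + B i ≤ m i := by intro i; have := hm1 i; simp only [hA, hB]; omega
  have hba : ∀ i, B i ≤ A i := by intro i; have := hm1 i; simp only [hA, hB]; omega
  have hcov : ∀ i, numSubfuns (F n) (V i) ≤ 2 ^ 2 ^ (A i + B i) := by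
    intro i
    by_cases hcase : A i + B i = m i
    · rw [hcase, hm]
      exact numSubfuns_le_funcard _ _
    · have h2k : A i + B i = 2 * k0 := by
        have := hm1 i; simp only [hA, hB] at hcase ⊢; omega
      have hnle : n ≤ 2 ^ (A i + B i) := by
        rw [h2k]
        exact le_trans hnK (Nat.pow_le_pow_right (by norm_num) (by omega))
      exact le_trans (numSubfuns_le_exp _ _)
        (Nat.pow_le_pow_right (by norm_num) hnle)
  have hsinf : ∀ i, sInf {s : ℕ | numSubfuns (F n) (V i) ≤ Nsem (V i).card s}
      ≤ 2 ^ (A i + 1) + 2 ^ (B i + 1) := by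
    intro i
    refine Nat.sInf_le ?_
    have := nsem_lower (m := (V i).card) (a := A i) (b := B i)
      (hm1 i) (hab i) (2 ^ (A i + 1) + 2 ^ (B i + 1)) le_rfl
    exact le_trans (hcov i) this
  have hterm : ∀ i, max (m i) (sInf {s : ℕ | numSubfuns (F n) (V i) ≤ Nsem (V i).card s})
      ≤ m i + 2 ^ (A i + 2) := by
    intro i
    refine max_le (Nat.le_add_right _ _) ?_
    refine le_trans (hsinf i) ?_
    have h1 : 2 ^ (B i + 1) ≤ 2 ^ (A i + 1) :=
      Nat.pow_le_pow_right (by norm_num) (by have := hba i; omega)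
    have h2 : 2 ^ (A i + 2) = 2 ^ (A i + 1) + 2 ^ (A i + 1) := by
      rw [pow_succ]; ring
    omega
  -- summation
  set T : ℕ := ∑ i, max (V i).card
      (sInf {s : ℕ | numSubfuns (F n) (V i) ≤ Nsem (V i).card s}) with hT
  have hsum_m : ∑ i, m i ≤ n := by
    have h1 : (Finset.univ.biUnion V).card = ∑ i, (V i).card :=
      Finset.card_biUnion (fun i _ j _ hij => hdisj i j hij)
    have h2 : (Finset.univ.biUnion V).card ≤ n := by
      have := Finset.card_le_univ (Finset.univ.biUnion V)
      simpa using this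
    simp only [hm]
    omega
  have hperterm : ∀ i, k0 * 2 ^ (A i) ≤ m i * (k0 * q + 2 ^ k0) := by
    intro i
    by_cases hsm : m i ≤ k0
    · have hAi : A i ≤ (k0 + 1) / 2 := by simp only [hA]; omega
      have h1 : 2 ^ (A i) ≤ q := by
        rw [hq]; exact Nat.pow_le_pow_right (by norm_num) hAi
      calc k0 * 2 ^ (A i) ≤ k0 * q := Nat.mul_le_mul_left _ h1
        _ ≤ m i * (k0 * q) := Nat.le_mul_of_pos_left _ (hm1 i)
        _ ≤ m i * (k0 * q + 2 ^ k0) := Nat.mul_le_mul_left _ (by omega)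
    · have hAi : A i ≤ k0 := by simp only [hA]; omega
      have h1 : 2 ^ (A i) ≤ 2 ^ k0 := Nat.pow_le_pow_right (by norm_num) hAi
      calc k0 * 2 ^ (A i) ≤ k0 * 2 ^ k0 := Nat.mul_le_mul_left _ h1
        _ ≤ m i * 2 ^ k0 := Nat.mul_le_mul_right _ (by omega)
        _ ≤ m i * (k0 * q + 2 ^ k0) := Nat.mul_le_mul_left _ (by omega)
  -- master natural-number inequality
  have hmaster : k0 * T ≤ k0 * n + 4 * (n * (k0 * q + 2 ^ k0)) := by
    have h1 : T ≤ ∑ i, (m i + 2 ^ (A i + 2)) := by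
      rw [hT]
      exact Finset.sum_le_sum (fun i _ => hterm i)
    have h2 : ∑ i, (m i + 2 ^ (A i + 2)) = (∑ i, m i) + ∑ i, 2 ^ (A i + 2) :=
      Finset.sum_add_distrib
    have h3 : k0 * (∑ i, 2 ^ (A i + 2)) = 4 * ∑ i, k0 * 2 ^ (A i) := by
      rw [Finset.mul_sum, Finset.mul_sum]
      congr 1
      funext i
      rw [pow_add]
      ring
    have h4 : ∑ i, k0 * 2 ^ (A i) ≤ ∑ i, m i * (k0 * q + 2 ^ k0) :=
      Finset.sum_le_sum (fun i _ => hperterm i)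
    have h5 : ∑ i, m i * (k0 * q + 2 ^ k0) = (∑ i, m i) * (k0 * q + 2 ^ k0) :=
      (Finset.sum_mul _ _ _).symm
    have h6 : (∑ i, m i) * (k0 * q + 2 ^ k0) ≤ n * (k0 * q + 2 ^ k0) :=
      Nat.mul_le_mul_right _ hsum_m
    have h7 : k0 * T ≤ k0 * ((∑ i, m i) + ∑ i, 2 ^ (A i + 2)) :=
      Nat.mul_le_mul_left _ (le_trans h1 (le_of_eq h2))
    have h8 : k0 * ((∑ i, m i) + ∑ i, 2 ^ (A i + 2))
        = k0 * (∑ i, m i) + k0 * (∑ i, 2 ^ (A i + 2)) := by ring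
    have h9 : k0 * (∑ i, m i) ≤ k0 * n := Nat.mul_le_mul_left _ hsum_m
    omega
  -- pass to the reals
  have hn0 : (0:ℝ) < (n:ℝ) := by positivity
  have hn4 : (4:ℝ) ≤ (n:ℝ) := by exact_mod_cast hn
  have hL0 : 0 < Real.logb 2 (n:ℝ) := Real.logb_pos (by norm_num) (by linarith)
  rw [le_div_iff₀ hL0]
  have hrw : (n : ℝ) ^ ((3:ℝ)/2) = (n : ℝ) * Real.sqrt n := by
    rw [show (3:ℝ)/2 = 1 + 1/2 by norm_num, Real.rpow_add hn0, Real.rpow_one,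
      ← Real.sqrt_eq_rpow]
  rw [hrw]
  -- real versions of the estimates
  have hsqrt_nonneg : (0:ℝ) ≤ Real.sqrt n := Real.sqrt_nonneg _
  have hsqrt_sq : Real.sqrt n * Real.sqrt n = (n:ℝ) :=
    Real.mul_self_sqrt (le_of_lt hn0)
  have hsqrt4 : Real.sqrt (4 * n) = 2 * Real.sqrt n := by
    rw [show (4:ℝ) * n = 2^2 * n by norm_num, Real.sqrt_mul (by positivity),
      Real.sqrt_sq (by norm_num : (0:ℝ) ≤ 2)]
  have hsqrt16 : Real.sqrt (16 * n) = 4 * Real.sqrt n := by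
    rw [show (16:ℝ) * n = 4^2 * n by norm_num, Real.sqrt_mul (by positivity),
      Real.sqrt_sq (by norm_num : (0:ℝ) ≤ 4)]
  have hP : ((2 ^ k0 : ℕ) : ℝ) ≤ 2 * Real.sqrt n := by
    rw [← hsqrt4]
    rw [show ((2 ^ k0 : ℕ) : ℝ) = Real.sqrt (((2 ^ k0 : ℕ) : ℝ) * ((2 ^ k0 : ℕ) : ℝ)) by
      rw [Real.sqrt_mul_self (by positivity)]]
    apply Real.sqrt_le_sqrt
    exact_mod_cast hsqN
  have hQQ : ((q * q : ℕ) : ℝ) ≤ 4 * Real.sqrt n := by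
    rw [← hsqrt16]
    rw [show ((q * q : ℕ) : ℝ) = Real.sqrt (((q * q : ℕ) : ℝ) * ((q * q : ℕ) : ℝ)) by
      rw [Real.sqrt_mul_self (by positivity)]]
    apply Real.sqrt_le_sqrt
    exact_mod_cast hq4
  have hkQ : ((k0 * q : ℕ) : ℝ) ≤ 4 * Real.sqrt n := by
    refine le_trans ?_ hQQ
    exact_mod_cast Nat.mul_le_mul_right q hk0q
  have hkR : ((k0 : ℕ) : ℝ) ≤ 2 * Real.sqrt n := by
    refine le_trans ?_ hP
    exact_mod_cast hk0pow
  have hLK : Real.logb 2 (n : ℝ) ≤ (K : ℝ) := by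
    have h1 : (n:ℝ) ≤ (2:ℝ) ^ (K : ℕ) := by exact_mod_cast hnK
    have h2 : Real.logb 2 (n : ℝ) ≤ Real.logb 2 ((2:ℝ) ^ (K : ℕ)) :=
      Real.logb_le_logb_of_le (by norm_num) hn0 h1
    refine le_trans h2 ?_
    rw [Real.logb_pow]
    simp [Real.logb_self_eq_one]
  have hK2k0 : (K : ℝ) ≤ 2 * (k0 : ℝ) := by exact_mod_cast (by omega : K ≤ 2 * k0)
  have hmasterR : (k0 : ℝ) * (T : ℝ)
      ≤ (k0 : ℝ) * n + 4 * ((n : ℝ) * (((k0 * q : ℕ) : ℝ) + ((2 ^ k0 : ℕ) : ℝ))) := by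
    exact_mod_cast hmaster
  have hT0 : (0:ℝ) ≤ (T : ℝ) := Nat.cast_nonneg _
  calc (T : ℝ) * Real.logb 2 (n : ℝ)
      ≤ (T : ℝ) * (2 * (k0 : ℝ)) :=
        mul_le_mul_of_nonneg_left (le_trans hLK hK2k0) hT0
    _ = 2 * ((k0 : ℝ) * (T : ℝ)) := by ring
    _ ≤ 2 * ((k0 : ℝ) * n + 4 * ((n : ℝ) * (((k0 * q : ℕ) : ℝ) + ((2 ^ k0 : ℕ) : ℝ)))) := by
        linarith
    _ ≤ 2 * ((2 * Real.sqrt n) * n + 4 * ((n : ℝ) * (4 * Real.sqrt n + 2 * Real.sqrt n))) := by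
        have h1 : (k0 : ℝ) * n ≤ (2 * Real.sqrt n) * n :=
          mul_le_mul_of_nonneg_right hkR (le_of_lt hn0)
        have h2 : ((k0 * q : ℕ) : ℝ) + ((2 ^ k0 : ℕ) : ℝ)
            ≤ 4 * Real.sqrt n + 2 * Real.sqrt n := add_le_add hkQ hP
        have h3 : (n : ℝ) * (((k0 * q : ℕ) : ℝ) + ((2 ^ k0 : ℕ) : ℝ))
            ≤ (n : ℝ) * (4 * Real.sqrt n + 2 * Real.sqrt n) :=
          mul_le_mul_of_nonneg_left h2 (le_of_lt hn0)
        linarith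
    _ = 52 * ((n:ℝ) * Real.sqrt n) := by ring
    _ ≤ 100 * ((n:ℝ) * Real.sqrt n) := by nlinarith
end

section
/- Let M be a complexity measure on Boolean functions. Suppose there is a non-decreasing function g : [1,∞) → ℝ_{≥0} such that M(ISA_{k,k}) ≤ g(k) for all k ∈ ℕ with k ≥ 1, and a constant α > 0 such that g(k+1) ≤ α·g(k) for all k ≥ 1. Then every Ne\v{c}iporuk function b for M satisfies b(m) ≤ α·g(log₂ log₂ m)/log₂ m for all m ∈ ℕ with m ≥ 4. -/
def IsPartition {n p : ℕ} (V : Fin p → Finset (Fin n)) : Prop :=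
  (∀ i, (V i).Nonempty) ∧ (∀ i j, i ≠ j → Disjoint (V i) (V j)) ∧ ∀ x : Fin n, ∃ i, x ∈ V i
def IsNeciporuk (M : ∀ n : ℕ, ((Fin n → Bool) → Bool) → ℕ) (b : ℕ → ℕ) : Prop :=
  (∀ m m' : ℕ, 0 < m → m ≤ m' → b m ≤ b m') ∧
  ∀ (n p : ℕ) (f : (Fin n → Bool) → Bool) (V : Fin p → Finset (Fin n)),
    IsPartition V → (∑ i, b (numSubfuns f (V i))) ≤ M n f

lemma sum_testBit (k c : ℕ) :
    (∑ j ∈ Finset.range k, if Nat.testBit c j then 2^j else 0) = c % 2^k := by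
  induction k with
  | zero => simp [Nat.mod_one]
  | succ k ih =>
    rw [Finset.sum_range_succ, ih, Nat.mod_pow_succ]
    have : Nat.testBit c k = decide (c / 2^k % 2 = 1) := Nat.testBit_eq_decide_div_mod_eq
    have h2 : c / 2^k % 2 = 0 ∨ c / 2^k % 2 = 1 := Nat.mod_two_eq_zero_or_one _
    rcases h2 with h | h <;> simp [this, h]

lemma sum_testBit_rev (k c : ℕ) (hc : c < 2^k) :
    (∑ j ∈ Finset.range k, if Nat.testBit c (k-1-j) then 2^(k-1-j) else 0) = c := by
  have := Finset.sum_range_reflect (fun j => if Nat.testBit c j then 2^j else 0) k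
  rw [show (∑ j ∈ Finset.range k, if Nat.testBit c (k-1-j) then 2^(k-1-j) else 0)
      = ∑ j ∈ Finset.range k, (fun j => if Nat.testBit c j then 2^j else 0) (k-1-j) from rfl,
    this, sum_testBit, Nat.mod_eq_of_lt hc]

lemma idx_lt {k i r : ℕ} (hi : i < 2^k) (hr : r < k) : k + k*i + r < k + 2^k*k + 2^k := by
  have h1 : k*i + r < k*(i+1) := by rw [Nat.mul_succ]; omega
  have h2 : k*(i+1) ≤ k*2^k := Nat.mul_le_mul_left k hi
  have h3 : 2^k*k = k*2^k := Nat.mul_comm _ _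
  omega

lemma memidx_lt {k t : ℕ} (ht : t < 2^k) : k + k*2^k + t < k + 2^k*k + 2^k := by
  have h3 : 2^k*k = k*2^k := Nat.mul_comm _ _
  omega

lemma ISA_spec (k : ℕ) (a : Fin (k+2^k*k+2^k) → Bool)
    (i t : ℕ) (hi : i < 2^k) (ht : t < 2^k)
    (hA : ∀ j (h : j < k), a ⟨j, by omega⟩ = Nat.testBit i (k-1-j))
    (hB : ∀ r (h : r < k), a ⟨k+k*i+r, idx_lt hi h⟩ = Nat.testBit t (k-1-r)) :
    ISA k k a = a ⟨k + k*2^k + t, memidx_lt ht⟩ := by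
  let A : ℕ → Bool := fun j => if h : j < k + 2^k*k + 2^k then a ⟨j, h⟩ else false
  have h0 : ISA k k a = A (k + k*2^k +
      (∑ r ∈ Finset.range k, if A (k + k*(∑ j ∈ Finset.range k,
        if A j = true then 2^(k-1-j) else 0) + r) = true then 2^(k-1-r) else 0)) := rfl
  have hα : (∑ j ∈ Finset.range k, if A j = true then 2^(k-1-j) else 0) = i := by
    rw [Finset.sum_congr rfl (fun j hj => ?_)]
    · exact sum_testBit_rev k i hi
    · have hjk := Finset.mem_range.mp hj
      have : A j = Nat.testBit i (k-1-j) := by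
        show (if h : j < k + 2^k*k + 2^k then a ⟨j, h⟩ else false) = _
        rw [dif_pos (by omega)]
        exact hA j hjk
      rw [this]
  rw [hα] at h0
  have hβ : (∑ r ∈ Finset.range k, if A (k + k*i + r) = true then 2^(k-1-r) else 0) = t := by
    rw [Finset.sum_congr rfl (fun r hr => ?_)]
    · exact sum_testBit_rev k t ht
    · have hrk := Finset.mem_range.mp hr
      have : A (k + k*i + r) = Nat.testBit t (k-1-r) := by
        show (if h : k + k*i + r < k + 2^k*k + 2^k then a ⟨k+k*i+r, h⟩ else false) = _
        rw [dif_pos (idx_lt hi hrk)]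
        exact hB r hrk
      rw [this]
  rw [hβ] at h0
  rw [h0]
  show (if h : k + k*2^k + t < k + 2^k*k + 2^k then a ⟨k+k*2^k+t, h⟩ else false) = _
  rw [dif_pos (memidx_lt ht)]

def blockSet (k i : ℕ) : Finset (Fin (k + 2^k*k + 2^k)) :=
  Finset.univ.filter fun x => k + k*i ≤ x.val ∧ x.val < k + k*i + k

lemma mem_blockSet {k i : ℕ} {x : Fin (k + 2^k*k + 2^k)} :
    x ∈ blockSet k i ↔ k + k*i ≤ x.val ∧ x.val < k + k*i + k := by
  simp [blockSet]

def rho (k i : ℕ) (mem : Fin (2^k) → Bool)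
    (x : {j : Fin (k+2^k*k+2^k) // j ∉ blockSet k i}) : Bool :=
  if x.val.val < k then Nat.testBit i (k-1-x.val.val)
  else if h : x.val.val < k + 2^k*k then false
  else mem ⟨x.val.val - (k + 2^k*k), by have := x.val.isLt; omega⟩

def yfun (k i t : ℕ) (x : {j : Fin (k+2^k*k+2^k) // j ∈ blockSet k i}) : Bool :=
  Nat.testBit t (k-1-(x.val.val - (k + k*i)))

lemma ISA_eval_s13 (k i t : ℕ) (hi : i < 2^k) (ht : t < 2^k) (mem : Fin (2^k) → Bool) :
    subfun (ISA k k) (blockSet k i) (rho k i mem) (yfun k i t) = mem ⟨t, ht⟩ := by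
  unfold subfun
  set a : Fin (k+2^k*k+2^k) → Bool := fun j =>
    if h : j ∈ blockSet k i then yfun k i t ⟨j, h⟩ else rho k i mem ⟨j, h⟩ with ha
  have h3 : 2^k*k = k*2^k := Nat.mul_comm _ _
  have hA : ∀ j (h : j < k), a ⟨j, by omega⟩ = Nat.testBit i (k-1-j) := by
    intro j hj
    rw [ha]
    have hnb : (⟨j, by omega⟩ : Fin (k+2^k*k+2^k)) ∉ blockSet k i := by
      simp only [mem_blockSet]; omega
    simp only [dif_neg hnb]
    unfold rho
    simp only []
    rw [if_pos hj]
  have hB : ∀ r (h : r < k), a ⟨k+k*i+r, idx_lt hi h⟩ = Nat.testBit t (k-1-r) := by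
    intro r hr
    rw [ha]
    have hmb : (⟨k+k*i+r, idx_lt hi hr⟩ : Fin (k+2^k*k+2^k)) ∈ blockSet k i := by
      simp only [mem_blockSet]; omega
    simp only [dif_pos hmb]
    unfold yfun
    simp only []
    congr 2
    omega
  rw [ISA_spec k a i t hi ht hA hB, ha]
  have hnb : (⟨k + k*2^k + t, memidx_lt ht⟩ : Fin (k+2^k*k+2^k)) ∉ blockSet k i := by
    simp only [mem_blockSet]
    have h1 : k*(i+1) ≤ k*2^k := Nat.mul_le_mul_left k hi
    rw [Nat.mul_succ] at h1
    omega
  simp only [dif_neg hnb]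
  unfold rho
  simp only []
  rw [if_neg (by omega), dif_neg (by omega)]
  congr 1
  apply Fin.ext
  simp only []
  omega

lemma numSubfuns_ISA (k i : ℕ) (hi : i < 2^k) :
    2^(2^k) ≤ numSubfuns (ISA k k) (blockSet k i) := by
  have hinj : Function.Injective
      (fun mem : Fin (2^k) → Bool =>
        (⟨subfun (ISA k k) (blockSet k i) (rho k i mem), Set.mem_range_self _⟩ :
          Set.range (subfun (ISA k k) (blockSet k i)))) := by
    intro m1 m2 h
    funext t
    have h2 : subfun (ISA k k) (blockSet k i) (rho k i m1) (yfun k i t.val)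
        = subfun (ISA k k) (blockSet k i) (rho k i m2) (yfun k i t.val) :=
      congrFun (congrArg Subtype.val h) _
    rw [ISA_eval_s13 k i t.val hi t.isLt m1, ISA_eval_s13 k i t.val hi t.isLt m2] at h2
    simpa using h2
  have := Nat.card_le_card_of_injective _ hinj
  rw [Nat.card_eq_fintype_card (α := Fin (2^k) → Bool)] at this
  simp only [Fintype.card_fun, Fintype.card_fin, Fintype.card_bool] at this
  rw [numSubfuns, ← Nat.card_coe_set_eq]
  exact this

def Wset (k : ℕ) : Finset (Fin (k + 2^k*k + 2^k)) :=
  Finset.univ.filter fun x => x.val < k ∨ k + 2^k*k ≤ x.val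

def partV (k : ℕ) : Fin (2^k + 1) → Finset (Fin (k + 2^k*k + 2^k)) :=
  fun i => if i.val < 2^k then blockSet k i.val else Wset k

lemma partV_isPartition (k : ℕ) (hk : 1 ≤ k) : IsPartition (partV k) := by
  have h3 : 2^k*k = k*2^k := Nat.mul_comm _ _
  have hblk : ∀ i : ℕ, i < 2^k → k*(i+1) ≤ k*2^k := fun i hi => Nat.mul_le_mul_left k hi
  refine ⟨?_, ?_, ?_⟩
  · intro i
    unfold partV
    split_ifs with h
    · refine ⟨⟨k + k*i.val, ?_⟩, ?_⟩
      · have := hblk i.val h; rw [Nat.mul_succ] at this; omega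
      · simp only [mem_blockSet]; omega
    · refine ⟨⟨0, by omega⟩, ?_⟩
      simp only [Wset, Finset.mem_filter, Finset.mem_univ, true_and]
      left; omega
  · intro i j hij
    rw [Finset.disjoint_left]
    intro x hxi hxj
    unfold partV at hxi hxj
    by_cases h1 : i.val < 2^k <;> by_cases h2 : j.val < 2^k
    · rw [if_pos h1] at hxi; rw [if_pos h2] at hxj
      rw [mem_blockSet] at hxi hxj
      have hne : i.val ≠ j.val := fun h => hij (Fin.ext h)
      rcases Nat.lt_or_ge i.val j.val with h | h
      · have : k*(i.val+1) ≤ k*j.val := Nat.mul_le_mul_left k h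
        rw [Nat.mul_succ] at this; omega
      · have : i.val ≠ j.val := hne
        have h' : j.val < i.val := by omega
        have : k*(j.val+1) ≤ k*i.val := Nat.mul_le_mul_left k h'
        rw [Nat.mul_succ] at this; omega
    · rw [if_pos h1] at hxi; rw [if_neg h2] at hxj
      rw [mem_blockSet] at hxi
      simp only [Wset, Finset.mem_filter] at hxj
      have := hblk i.val h1; rw [Nat.mul_succ] at this; omega
    · rw [if_neg h1] at hxi; rw [if_pos h2] at hxj
      rw [mem_blockSet] at hxj
      simp only [Wset, Finset.mem_filter] at hxi
      have := hblk j.val h2; rw [Nat.mul_succ] at this; omega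
    · exact absurd (Fin.ext (by omega : i.val = j.val)) hij
  · intro x
    by_cases h : x.val < k ∨ k + 2^k*k ≤ x.val
    · refine ⟨⟨2^k, by omega⟩, ?_⟩
      unfold partV
      rw [if_neg (by simp)]
      simp [Wset, h]
    · push_neg at h
      have hdm := Nat.div_add_mod (x.val - k) k
      have hmlt := Nat.mod_lt (x.val - k) (show 0 < k by omega)
      have hqlt : (x.val - k) / k < 2^k := by
        rw [Nat.div_lt_iff_lt_mul (by omega : 0 < k)]
        omega
      refine ⟨⟨(x.val - k) / k, by omega⟩, ?_⟩
      unfold partV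
      rw [if_pos (by simpa using hqlt)]
      simp only [mem_blockSet]
      omega

lemma key_bound (M : ∀ n : ℕ, ((Fin n → Bool) → Bool) → ℕ) (b : ℕ → ℕ)
    (hb : IsNeciporuk M b) (k : ℕ) (hk : 1 ≤ k) (m : ℕ) (hm : 0 < m)
    (hm2 : m ≤ 2^(2^k)) :
    2^k * b m ≤ M (k + 2^k*k + 2^k) (ISA k k) := by
  have hpart := partV_isPartition k hk
  have hsum := hb.2 _ _ (ISA k k) (partV k) hpart
  refine le_trans ?_ hsum
  rw [Fin.sum_univ_castSucc]
  have hstep : ∀ i : Fin (2^k), b m ≤ b (numSubfuns (ISA k k) (partV k i.castSucc)) := by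
    intro i
    apply hb.1 m _ hm
    have : partV k i.castSucc = blockSet k i.val := by
      unfold partV
      rw [if_pos (by simpa using i.isLt)]
      rfl
    rw [this]
    exact le_trans hm2 (numSubfuns_ISA k i.val i.isLt)
  calc 2^k * b m = ∑ _i : Fin (2^k), b m := by simp [Finset.sum_const, Finset.card_univ, Nat.mul_comm]
    _ ≤ ∑ i : Fin (2^k), b (numSubfuns (ISA k k) (partV k i.castSucc)) := Finset.sum_le_sum (fun i _ => hstep i)
    _ ≤ _ := Nat.le_add_right _ _

theorem stmt13 (M : ∀ n : ℕ, ((Fin n → Bool) → Bool) → ℕ)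
    (g : ℝ → ℝ) (hg0 : ∀ x : ℝ, 1 ≤ x → 0 ≤ g x)
    (hgmono : MonotoneOn g (Set.Ici 1))
    (hgb : ∀ k : ℕ, 1 ≤ k → (M (k + 2^k*k + 2^k) (ISA k k) : ℝ) ≤ g k)
    (α : ℝ) (hα : 0 < α)
    (hratio : ∀ k : ℕ, 1 ≤ k → g (k+1) ≤ α * g k)
    (b : ℕ → ℕ) (hb : IsNeciporuk M b) :
    ∀ m : ℕ, 4 ≤ m →
      (b m : ℝ) ≤ α * g (Real.logb 2 (Real.logb 2 m)) / Real.logb 2 m := by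
  intro m hm
  have hm4 : (4:ℝ) ≤ (m:ℝ) := by exact_mod_cast hm
  have hmpos : (0:ℝ) < m := by linarith
  have hlog4 : Real.logb 2 (4:ℝ) = 2 := by
    rw [show (4:ℝ) = 2^(2:ℕ) by norm_num]
    simp [Real.logb, Real.log_pow]
    rw [mul_div_assoc, div_self (Real.log_ne_zero_of_pos_of_ne_one two_pos (by norm_num))]
    norm_num
  have hL2 : (2:ℝ) ≤ Real.logb 2 m := by
    calc (2:ℝ) = Real.logb 2 4 := hlog4.symm
      _ ≤ Real.logb 2 m := (Real.logb_le_logb (b:=2) (by norm_num) (by norm_num) hmpos).mpr hm4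
  have hL2pos : (0:ℝ) < Real.logb 2 m := by linarith
  set t := Real.logb 2 (Real.logb 2 m) with htdef
  have ht1 : (1:ℝ) ≤ t := by
    calc (1:ℝ) = Real.logb 2 2 := by simp
      _ ≤ t := (Real.logb_le_logb (b:=2) (by norm_num) (by norm_num) hL2pos).mpr hL2
  set k := ⌈t⌉₊ with hkdef
  have hk1 : 1 ≤ k := Nat.one_le_ceil_iff.mpr (by linarith)
  have hkt : t ≤ (k:ℝ) := Nat.le_ceil t
  have hfl1 : 1 ≤ ⌊t⌋₊ := Nat.le_floor (by exact_mod_cast ht1)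
  have hflt : ((⌊t⌋₊ : ℕ):ℝ) ≤ t := Nat.floor_le (by linarith)
  have hkfl : (k:ℝ) ≤ (⌊t⌋₊:ℝ) + 1 := by
    have := Nat.ceil_le_floor_add_one t
    push_cast
    exact_mod_cast this
  -- g k ≤ α * g t
  have hg1 : g k ≤ g ((⌊t⌋₊:ℝ) + 1) := by
    apply hgmono _ _ hkfl
    · exact Set.mem_Ici.mpr (by exact_mod_cast hk1)
    · have : (1:ℝ) ≤ (⌊t⌋₊:ℝ) := by exact_mod_cast hfl1
      exact Set.mem_Ici.mpr (by linarith)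
  have hg2 : g ((⌊t⌋₊:ℝ) + 1) ≤ α * g (⌊t⌋₊:ℝ) := hratio ⌊t⌋₊ hfl1
  have hg3 : g (⌊t⌋₊:ℝ) ≤ g t := by
    apply hgmono _ _ hflt
    · exact Set.mem_Ici.mpr (by exact_mod_cast hfl1)
    · exact Set.mem_Ici.mpr ht1
  have hgk : g k ≤ α * g t := by
    calc g k ≤ α * g (⌊t⌋₊:ℝ) := hg1.trans hg2
      _ ≤ α * g t := by nlinarith [hg3]
  -- logb 2 m ≤ 2^k
  have h2t : (2:ℝ) ^ t = Real.logb 2 m :=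
    Real.rpow_logb (by norm_num) (by norm_num) hL2pos
  have h2k : Real.logb 2 m ≤ ((2^k : ℕ):ℝ) := by
    rw [← h2t]
    push_cast
    rw [← Real.rpow_natCast 2 k]
    exact Real.rpow_le_rpow_of_exponent_le (by norm_num) hkt
  have h2kpos : (0:ℝ) < ((2^k : ℕ):ℝ) := by positivity
  -- m ≤ 2^(2^k)
  have hmle : m ≤ 2^(2^k) := by
    have h1 : (m:ℝ) = (2:ℝ) ^ Real.logb 2 m := (Real.rpow_logb (by norm_num) (by norm_num) hmpos).symm
    have h2 : (m:ℝ) ≤ (2:ℝ) ^ (((2^k : ℕ):ℝ)) := by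
      rw [h1]
      exact Real.rpow_le_rpow_of_exponent_le (by norm_num) h2k
    have h3 : (2:ℝ) ^ (((2^k : ℕ):ℝ)) = ((2^(2^k) : ℕ):ℝ) := by
      rw [Real.rpow_natCast]
      push_cast
      ring
    rw [h3] at h2
    exact_mod_cast h2
  -- combine
  have hkey := key_bound M b hb k hk1 m (by omega) hmle
  have hMg := hgb k hk1
  have hcast : ((2^k : ℕ):ℝ) * (b m : ℝ) ≤ g k := by
    calc ((2^k : ℕ):ℝ) * (b m : ℝ) = ((2^k * b m : ℕ):ℝ) := by push_cast; ring
      _ ≤ (M (k + 2^k*k + 2^k) (ISA k k) : ℝ) := by exact_mod_cast hkey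
      _ ≤ g k := hMg
  have hbm : (b m : ℝ) ≤ g k / ((2^k : ℕ):ℝ) := by
    rw [le_div_iff₀ h2kpos]
    linarith [hcast]
  refine hbm.trans ?_
  apply div_le_div₀ ?_ hgk hL2pos h2k
  have : 0 ≤ g t := hg0 t ht1
  positivity
end
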